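/- arXiv:2310.18886 — 4 statements merged into one kernel-verified Lean document; each statement's English description precedes it below -/
import Mathlib

section
/- For a path-connected topological space X with basepoint b and a group G, the map ρ sending a 1-cocycle u (with coefficients in G, relative to b) to the induced homomorphism π₁(X,b) → G given by restricting u to loops at b descends to a bijection between the first non-abelian cohomology set H¹(X,b;G) and the set Hom(π₁(X,b), G). -/
/-- A `G`-valued 1-cocycle of the pair `(A, Y)`: a function on paths of `X` lying in `A`,
trivial on paths lying in `Y`, invariant under homotopies (rel endpoints) lying in `A`,
and multiplicative under concatenation of paths. -/
structure NCocycle {X : Type} [TopologicalSpace X] (A Y : Set X) (G : Type) [Group G] where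
  toFun : ∀ {x y : X} (p : Path x y), Set.range p ⊆ A → G
  triv : ∀ {x y : X} (p : Path x y) (hp : Set.range p ⊆ A),
    Set.range p ⊆ Y → toFun p hp = 1
  homotopy_inv : ∀ {x y : X} (p q : Path x y) (F : p.Homotopy q),
    Set.range F ⊆ A → ∀ (hp : Set.range p ⊆ A) (hq : Set.range q ⊆ A),
      toFun p hp = toFun q hq
  mul : ∀ {x y z : X} (p : Path x y) (q : Path y z)
    (hpq : Set.range (p.trans q) ⊆ A) (hp : Set.range p ⊆ A) (hq : Set.range q ⊆ A),
      toFun (p.trans q) hpq = toFun p hp * toFun q hq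

namespace NCocycle

variable {X : Type} [TopologicalSpace X] {G : Type} [Group G]

/-- Two cocycles of `(A, Y)` are cohomologous if they differ by the action
`(c • u)(p) = c(p 0) * u(p) * c(p 1)⁻¹` of a 0-cochain `c` trivial on `Y`. -/
def Cohom {A Y : Set X} (u v : NCocycle A Y G) : Prop :=
  ∃ c : X → G, (∀ y ∈ Y, c y = 1) ∧
    ∀ {x y : X} (p : Path x y) (hp : Set.range p ⊆ A),
      v.toFun p hp = c x * u.toFun p hp * (c y)⁻¹

/-- The non-abelian cohomology set `H¹(A, Y; G)`. -/
def H1 {X : Type} [TopologicalSpace X] (A Y : Set X) (G : Type) [Group G] :=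
  Quot (Cohom (A := A) (Y := Y) (G := G))

/-- Restriction of cocycles to a smaller pair. -/
def res {A A' Y Y' : Set X} (hA : A' ⊆ A) (hY : Y' ⊆ Y) (u : NCocycle A Y G) :
    NCocycle A' Y' G where
  toFun p hp := u.toFun p (hp.trans hA)
  triv p hp h := u.triv p (hp.trans hA) (h.trans hY)
  homotopy_inv p q F hF hp hq := u.homotopy_inv p q F (hF.trans hA) _ _
  mul p q hpq hp hq := u.mul p q _ _ _

/-- Restriction map on cohomology sets. -/
def H1res {A A' Y Y' : Set X} (hA : A' ⊆ A) (hY : Y' ⊆ Y) :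
    H1 A Y G → H1 A' Y' G :=
  Quot.lift (fun u => Quot.mk _ (res hA hY u))
    (fun u v ⟨c, hc, hcv⟩ => Quot.sound
      ⟨c, fun y hy => hc y (hY hy), fun p hp => hcv p (hp.trans hA)⟩)

end NCocycle

/-- Maps on based loops that factor through homotopy and are multiplicative:
the paper's description of homomorphisms `π₁(X,b) → G`. -/
def LoopHom (X : Type) [TopologicalSpace X] (b : X) (G : Type) [Group G] :=
  {h : Path b b → G //
    (∀ p q : Path b b, Path.Homotopic p q → h p = h q) ∧
    (∀ p q : Path b b, h (p.trans q) = h p * h q)}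


section Aux

open CategoryTheory

attribute [local instance] Path.Homotopic.setoid

namespace StmtAux

variable {X : Type} [TopologicalSpace X] {G : Type} [Group G]

/-- The homotopy class of a path, as a morphism in the fundamental groupoid. -/
def hcls {x y : X} (p : Path x y) : (⟨x⟩ : FundamentalGroupoid X) ⟶ ⟨y⟩ := ⟦p⟧

lemma hcls_trans {x y z : X} (p : Path x y) (q : Path y z) :
    hcls (p.trans q) = hcls p ≫ hcls q := rfl

lemma hcls_symm {x y : X} (p : Path x y) :
    hcls p.symm = Groupoid.inv (hcls p) := rfl

lemma homotopic_of_hcls_eq {x y : X} {p q : Path x y} (h : hcls p = hcls q) :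
    p.Homotopic q := Quotient.exact h

lemma key_htp {b x y z : X} (a : Path b x) (p : Path x y) (c : Path b y) (q : Path y z)
    (d : Path b z) :
    ((a.trans (p.trans c.symm)).trans (c.trans (q.trans d.symm))).Homotopic
      (a.trans ((p.trans q).trans d.symm)) := by
  apply homotopic_of_hcls_eq
  simp only [hcls_trans, hcls_symm, Category.assoc, Groupoid.inv_eq_inv,
    IsIso.inv_hom_id_assoc]

variable {b : X}

lemma hom_inv (u : NCocycle (Set.univ : Set X) {b} G) {x y : X} {p q : Path x y}
    (h : p.Homotopic q) :
    u.toFun p (Set.subset_univ _) = u.toFun q (Set.subset_univ _) := by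
  obtain ⟨F⟩ := h
  exact u.homotopy_inv p q F (Set.subset_univ _) _ _

lemma refl_one (u : NCocycle (Set.univ : Set X) {b} G) (x : X) :
    u.toFun (Path.refl x) (Set.subset_univ _) = 1 := by
  have h1 := u.mul (Path.refl x) (Path.refl x) (Set.subset_univ _)
    (Set.subset_univ _) (Set.subset_univ _)
  have h2 := hom_inv u (p := (Path.refl x).trans (Path.refl x)) (q := Path.refl x)
    ⟨Path.Homotopy.reflTrans (Path.refl x)⟩
  rw [h1] at h2
  exact mul_eq_left.mp h2

lemma symm_inv (u : NCocycle (Set.univ : Set X) {b} G) {x y : X} (p : Path x y) :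
    u.toFun p.symm (Set.subset_univ _) = (u.toFun p (Set.subset_univ _))⁻¹ := by
  have h1 := u.mul p p.symm (Set.subset_univ _) (Set.subset_univ _) (Set.subset_univ _)
  have h2 := hom_inv u (p := p.trans p.symm) (q := Path.refl x)
    (Path.Homotopic.symm ⟨Path.Homotopy.reflTransSymm p⟩)
  rw [h1, refl_one] at h2
  exact (inv_eq_of_mul_eq_one_right h2).symm

lemma loopHom_refl_one (h : LoopHom X b G) : h.1 (Path.refl b) = 1 := by
  have h1 := h.2.2 (Path.refl b) (Path.refl b)
  have h2 := h.2.1 _ _ (⟨Path.Homotopy.reflTrans (Path.refl b)⟩ :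
    ((Path.refl b).trans (Path.refl b)).Homotopic (Path.refl b))
  rw [h1] at h2
  exact left_eq_mul.mp h2.symm

/-- A choice of path from `b` to each point, which is the constant path at `b` itself. -/
noncomputable def gam [PathConnectedSpace X] (b : X) : ∀ x : X, Path b x := fun x =>
  open Classical in
  if h : b = x then h ▸ Path.refl b else PathConnectedSpace.somePath b x

lemma gam_self [PathConnectedSpace X] (b : X) : gam b b = Path.refl b := by
  simp [gam]

/-- Restriction of a cocycle to loops at `b`. -/
def rho (u : NCocycle (Set.univ : Set X) {b} G) : LoopHom X b G :=
  ⟨fun p => u.toFun p (Set.subset_univ _),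
    fun _ _ h => hom_inv u h,
    fun p q => u.mul p q _ _ _⟩

/-- Extension of a loop homomorphism to a cocycle, using the chosen paths `gam`. -/
noncomputable def sig [PathConnectedSpace X] (b : X) (h : LoopHom X b G) :
    NCocycle (Set.univ : Set X) {b} G where
  toFun {x y} p _ := h.1 ((gam b x).trans (p.trans (gam b y).symm))
  triv {x y} p hp hY := by
    obtain rfl : b = x :=
      (Set.mem_singleton_iff.mp (hY (Set.mem_range_self 0))).symm.trans p.source
    obtain rfl : b = y :=
      (Set.mem_singleton_iff.mp (hY (Set.mem_range_self 1))).symm.trans p.target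
    obtain rfl : p = Path.refl b := by
      ext t
      exact hY (Set.mem_range_self t)
    show h.1 ((gam b b).trans ((Path.refl b).trans (gam b b).symm)) = 1
    rw [gam_self, Path.refl_symm, h.2.2, h.2.2, loopHom_refl_one]
    simp [loopHom_refl_one h]
  homotopy_inv {x y} p q F _ _ _ :=
    h.2.1 _ _ (Path.Homotopic.hcomp (Path.Homotopic.refl (gam b x))
      (Path.Homotopic.hcomp ⟨F⟩ (Path.Homotopic.refl (gam b y).symm)))
  mul {x y z} p q hpq _ _ := by
    rw [← h.2.2]
    exact h.2.1 _ _ (key_htp (gam b x) p (gam b y) q (gam b z)).symm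

lemma rho_cohom_eq {u v : NCocycle (Set.univ : Set X) {b} G}
    (huv : NCocycle.Cohom u v) : rho u = rho v := by
  obtain ⟨c, hc, hcv⟩ := huv
  apply Subtype.ext
  funext p
  show u.toFun p (Set.subset_univ _) = v.toFun p (Set.subset_univ _)
  rw [hcv p (Set.subset_univ _), hc b rfl]
  simp

/-- The bijection between `H¹(X,b;G)` and loop homomorphisms. -/
noncomputable def Phi (X : Type) [TopologicalSpace X] [PathConnectedSpace X] (b : X)
    (G : Type) [Group G] :
    NCocycle.H1 (Set.univ : Set X) ({b} : Set X) G ≃ LoopHom X b G where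
  toFun := Quot.lift rho (fun _ _ huv => rho_cohom_eq huv)
  invFun := fun h => Quot.mk _ (sig b h)
  left_inv := by
    refine Quot.ind (fun u => ?_)
    refine (Quot.sound ?_).symm
    refine ⟨fun x => u.toFun (gam b x) (Set.subset_univ _), ?_, ?_⟩
    · rintro y rfl
      show u.toFun (gam _ _) (Set.subset_univ _) = 1
      rw [gam_self]
      exact u.triv _ _ (by simp)
    · intro x y p hp
      show u.toFun ((gam b x).trans (p.trans (gam b y).symm)) _ = _
      rw [u.mul _ _ (Set.subset_univ _) (Set.subset_univ _) (Set.subset_univ _),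
        u.mul _ _ (Set.subset_univ _) (Set.subset_univ _) (Set.subset_univ _),
        symm_inv, mul_assoc]
  right_inv := by
    intro h
    apply Subtype.ext
    funext p
    show h.1 ((gam b b).trans (p.trans (gam b b).symm)) = h.1 p
    rw [gam_self, Path.refl_symm]
    exact h.2.1 _ _ (Path.Homotopic.trans
      (⟨Path.Homotopy.reflTrans (p.trans (Path.refl b))⟩ :
        ((Path.refl b).trans (p.trans (Path.refl b))).Homotopic (p.trans (Path.refl b)))
      ⟨Path.Homotopy.transRefl p⟩)

end StmtAux

end Aux

/-- Restriction of 1-cocycles to loops at `b` descends to a bijection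
between `H¹(X,b;G)` and `Hom(π₁(X,b), G)`. -/
theorem statement0 (X : Type) [TopologicalSpace X] [PathConnectedSpace X] (b : X)
    (G : Type) [Group G] :
    ∃ Φ : NCocycle.H1 (Set.univ : Set X) {b} G ≃ LoopHom X b G,
      ∀ (u : NCocycle (Set.univ : Set X) {b} G) (p : Path b b),
        (Φ (Quot.mk _ u)).1 p = u.toFun p (Set.subset_univ _) := by
  refine ⟨StmtAux.Phi X b G, fun u p => ?_⟩
  have h1 : (StmtAux.Phi X b G) (Quot.mk _ u) = StmtAux.rho u := by
    unfold StmtAux.Phi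
    rfl
  rw [h1]
  rfl
end

section
/- Let 𝒰 be an open covering of X and Y ⊆ X. Restriction of 1-cocycles to short paths gives a bijection from the set Z¹(X,Y;G) of G-valued 1-cocycles of (X,Y) to the set Z¹_𝒰(X,Y;G) of short 1-cocycles of (X,Y) relative to 𝒰. -/
/-- A `G`-valued 1-cocycle of the pair `(X, Y)`: a function on paths of `X`,
trivial on paths lying in `Y`, invariant under homotopies rel endpoints,
and multiplicative under concatenation of paths. -/
structure Cocycle1 (X : Type) [TopologicalSpace X] (Y : Set X) (G : Type) [Group G] where
  toFun : ∀ {x y : X}, Path x y → G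
  triv : ∀ {x y : X} (p : Path x y), Set.range p ⊆ Y → toFun p = 1
  homotopy_inv : ∀ {x y : X} (p q : Path x y), Path.Homotopic p q → toFun p = toFun q
  mul : ∀ {x y z : X} (p : Path x y) (q : Path y z), toFun (p.trans q) = toFun p * toFun q

/-- A short `G`-valued 1-cocycle of `(X, Y)` relative to the cover `𝒰`: a function on
short paths (paths whose image lies in some member of `𝒰`), trivial on short paths in `Y`,
invariant under short homotopies rel endpoints, and multiplicative whenever the
concatenation is short. -/
structure ShortCocycle1 {X : Type} [TopologicalSpace X] (𝒰 : Set (Set X)) (Y : Set X)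
    (G : Type) [Group G] where
  toFun : ∀ {x y : X} (p : Path x y), (∃ U ∈ 𝒰, Set.range p ⊆ U) → G
  triv : ∀ {x y : X} (p : Path x y) (hp : ∃ U ∈ 𝒰, Set.range p ⊆ U),
    Set.range p ⊆ Y → toFun p hp = 1
  homotopy_inv : ∀ {x y : X} (p q : Path x y) (F : p.Homotopy q),
    (∃ U ∈ 𝒰, Set.range F ⊆ U) →
      ∀ (hp : ∃ U ∈ 𝒰, Set.range p ⊆ U) (hq : ∃ U ∈ 𝒰, Set.range q ⊆ U),
        toFun p hp = toFun q hq
  mul : ∀ {x y z : X} (p : Path x y) (q : Path y z)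
    (hpq : ∃ U ∈ 𝒰, Set.range (p.trans q) ⊆ U)
    (hp : ∃ U ∈ 𝒰, Set.range p ⊆ U) (hq : ∃ U ∈ 𝒰, Set.range q ⊆ U),
      toFun (p.trans q) hpq = toFun p hp * toFun q hq

/-- Restriction of a 1-cocycle of `(X,Y)` to short paths. -/
def Cocycle1.restrictShort {X : Type} [TopologicalSpace X] {Y : Set X} {G : Type} [Group G]
    (𝒰 : Set (Set X)) (u : Cocycle1 X Y G) : ShortCocycle1 𝒰 Y G where
  toFun p _ := u.toFun p
  triv p _ h := u.triv p h
  homotopy_inv p q F _ _ _ := u.homotopy_inv p q ⟨F⟩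
  mul p q _ _ _ := u.mul p q


open unitInterval

namespace Stmt3

variable {X : Type} [TopologicalSpace X]

lemma affMem (a b t : I) : (1 - (t:ℝ)) * a + t * b ∈ Set.Icc (0:ℝ) 1 := by
  obtain ⟨⟨ha0, ha1⟩, ⟨hb0, hb1⟩, ⟨ht0, ht1⟩⟩ : ((a:ℝ) ∈ Set.Icc (0:ℝ) 1) ∧
    ((b:ℝ) ∈ Set.Icc (0:ℝ) 1) ∧ ((t:ℝ) ∈ Set.Icc (0:ℝ) 1) := ⟨a.2, b.2, t.2⟩
  constructor <;> nlinarith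

/-- The affine path in the unit interval from `a` to `b`. -/
def aff (a b : I) : Path a b where
  toFun t := ⟨(1 - (t:ℝ)) * a + t * b, affMem a b t⟩
  continuous_toFun := by
    apply Continuous.subtype_mk
    fun_prop
  source' := by ext; simp
  target' := by ext; simp

@[simp] lemma aff_apply (a b t : I) : ((aff a b t : I) : ℝ) = (1 - (t:ℝ)) * a + t * b := rfl

lemma aff_mem_Icc {a b : I} (h : a ≤ b) (t : I) : aff a b t ∈ Set.Icc a b := by
  have ht0 : (0:ℝ) ≤ t := t.2.1
  have ht1 : (t:ℝ) ≤ 1 := t.2.2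
  have hab : (a:ℝ) ≤ b := h
  constructor
  · show (a:ℝ) ≤ aff a b t
    rw [aff_apply]; nlinarith
  · show ((aff a b t : I) : ℝ) ≤ b
    rw [aff_apply]; nlinarith

/-- The subpath of `p` from parameter `a` to parameter `b`. -/
def subp {x y : X} (p : Path x y) (a b : I) : Path (p a) (p b) :=
  (aff a b).map p.continuous

lemma subp_apply {x y : X} (p : Path x y) (a b t : I) : subp p a b t = p (aff a b t) := rfl

lemma subp_range {x y : X} (p : Path x y) {a b : I} (h : a ≤ b) :
    Set.range (subp p a b) ⊆ p '' Set.Icc a b := by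
  rintro _ ⟨t, rfl⟩
  exact ⟨aff a b t, aff_mem_Icc h t, rfl⟩

lemma subp_const {x y : X} (p : Path x y) (a t : I) : subp p a a t = p a := by
  rw [subp_apply]
  congr 1
  ext
  rw [aff_apply]; ring

/-- Straight-line homotopy between two paths in the unit interval. -/
def strI {a b : I} (γ η : Path a b) : γ.Homotopy η where
  toFun q := ⟨(1 - (q.1:ℝ)) * γ q.2 + q.1 * η q.2, affMem _ _ _⟩
  continuous_toFun := by
    apply Continuous.subtype_mk
    fun_prop
  map_zero_left t := by ext; simp
  map_one_left t := by ext; simp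
  prop' s t ht := by
    rcases ht with h0 | h1
    · subst h0; ext; simp; ring
    · simp only [Set.mem_singleton_iff] at h1; subst h1; ext; simp; ring

lemma strI_apply {a b : I} (γ η : Path a b) (q : I × I) :
    ((strI γ η q : I) : ℝ) = (1 - (q.1:ℝ)) * γ q.2 + q.1 * η q.2 := rfl

lemma strI_mem {a b lo hi : I} (γ η : Path a b) (hγ : ∀ t, γ t ∈ Set.Icc lo hi)
    (hη : ∀ t, η t ∈ Set.Icc lo hi) (q : I × I) : strI γ η q ∈ Set.Icc lo hi := by
  obtain ⟨h1, h2⟩ := hγ q.2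
  obtain ⟨h3, h4⟩ := hη q.2
  have h1 : (lo:ℝ) ≤ γ q.2 := h1
  have h2 : ((γ q.2 : I):ℝ) ≤ hi := h2
  have h3 : (lo:ℝ) ≤ η q.2 := h3
  have h4 : ((η q.2 : I):ℝ) ≤ hi := h4
  have hs0 : (0:ℝ) ≤ q.1 := q.1.2.1
  have hs1 : (q.1:ℝ) ≤ 1 := q.1.2.2
  constructor
  · show (lo:ℝ) ≤ strI γ η q
    rw [strI_apply]; nlinarith
  · show ((strI γ η q : I):ℝ) ≤ hi
    rw [strI_apply]; nlinarith

/-- Mapping a path homotopy through a continuous map. -/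
def mapHtpy {K : Type} [TopologicalSpace K] {a b : K} {γ η : Path a b} (F : γ.Homotopy η)
    {f : K → X} (hf : Continuous f) : (γ.map hf).Homotopy (η.map hf) where
  toFun q := f (F q)
  continuous_toFun := hf.comp (map_continuous F.toContinuousMap)
  map_zero_left t := by simp
  map_one_left t := by simp
  prop' s t ht := by
    have := F.prop' s t ht
    simp only [ContinuousMap.coe_mk, Path.map_coe, Function.comp_apply]
    exact congrArg f this

lemma mapHtpy_apply {K : Type} [TopologicalSpace K] {a b : K} {γ η : Path a b}
    (F : γ.Homotopy η) {f : K → X} (hf : Continuous f) (q : I × I) :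
    mapHtpy F hf q = f (F q) := rfl

lemma mapHtpy_range {K : Type} [TopologicalSpace K] {a b : K} {γ η : Path a b}
    (F : γ.Homotopy η) {f : K → X} (hf : Continuous f) :
    Set.range (mapHtpy F hf) ⊆ f '' Set.range F := by
  rintro _ ⟨q, rfl⟩
  exact ⟨F q, Set.mem_range_self q, rfl⟩


section
variable {𝒰 : Set (Set X)} {Y : Set X} {G : Type} [Group G]

variable (u : ShortCocycle1 𝒰 Y G)

/-- Extension of a short cocycle to all paths by `1` off short paths. -/
noncomputable def uext {x y : X} (p : Path x y) : G :=
  letI := Classical.dec (∃ U ∈ 𝒰, Set.range p ⊆ U)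
  if h : ∃ U ∈ 𝒰, Set.range p ⊆ U then u.toFun p h else 1

lemma uext_of_short {x y : X} (p : Path x y) (h : ∃ U ∈ 𝒰, Set.range p ⊆ U) :
    uext u p = u.toFun p h := dif_pos h

lemma uext_congr {x y x' y' : X} (p : Path x y) (q : Path x' y') (hx : x = x') (hy : y = y')
    (h : ∀ t, p t = q t) : uext u p = uext u q := by
  subst hx; subst hy
  have : p = q := Path.ext (funext h)
  rw [this]

lemma uext_mul {x y z : X} (p : Path x y) (q : Path y z)
    (hpq : ∃ U ∈ 𝒰, Set.range (p.trans q) ⊆ U) (hp : ∃ U ∈ 𝒰, Set.range p ⊆ U)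
    (hq : ∃ U ∈ 𝒰, Set.range q ⊆ U) :
    uext u (p.trans q) = uext u p * uext u q := by
  rw [uext_of_short u _ hpq, uext_of_short u _ hp, uext_of_short u _ hq]
  exact u.mul p q hpq hp hq

lemma uext_homotopy {x y : X} {p q : Path x y} (F : p.Homotopy q)
    (hF : ∃ U ∈ 𝒰, Set.range F ⊆ U) : uext u p = uext u q := by
  obtain ⟨U, hU, hFU⟩ := hF
  have hp : Set.range p ⊆ U := by
    rintro _ ⟨t, rfl⟩
    have : p t = F (0, t) := (F.apply_zero t).symm
    rw [this]; exact hFU (Set.mem_range_self _)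
  have hq : Set.range q ⊆ U := by
    rintro _ ⟨t, rfl⟩
    have : q t = F (1, t) := (F.apply_one t).symm
    rw [this]; exact hFU (Set.mem_range_self _)
  rw [uext_of_short u p ⟨U, hU, hp⟩, uext_of_short u q ⟨U, hU, hq⟩]
  exact u.homotopy_inv p q F ⟨U, hU, hFU⟩ _ _

lemma uext_refl (hcover : ⋃₀ 𝒰 = Set.univ) (x : X) : uext u (Path.refl x) = 1 := by
  have hx : x ∈ ⋃₀ 𝒰 := by rw [hcover]; trivial
  obtain ⟨U, hU, hxU⟩ := hx
  have hr : Set.range (Path.refl x) ⊆ U := by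
    rintro _ ⟨t, rfl⟩; simpa using hxU
  have h : ∃ U ∈ 𝒰, Set.range (Path.refl x) ⊆ U := ⟨U, hU, hr⟩
  have := uext_mul u (Path.refl x) (Path.refl x) (by rw [Path.refl_trans_refl]; exact h) h h
  rw [Path.refl_trans_refl] at this
  have h2 : uext u (Path.refl x) * 1 = uext u (Path.refl x) * uext u (Path.refl x) := by
    rw [mul_one]; exact this
  exact (mul_left_cancel h2).symm

lemma uext_const (hcover : ⋃₀ 𝒰 = Set.univ) {x y : X} (p : Path x y) (h : ∀ t, p t = x) :
    uext u p = 1 := by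
  have hy : y = x := p.target.symm.trans (h 1)
  subst hy
  have : p = Path.refl y := Path.ext (funext h)
  rw [this]
  exact uext_refl u hcover y

/-- The binary chain rule for `uext` on a short region. -/
lemma uext_chain {x y : X} (p : Path x y) {U : Set X} (hU : U ∈ 𝒰) {a b c : I}
    (hab : a ≤ b) (hbc : b ≤ c) (h : p '' Set.Icc a c ⊆ U) :
    uext u (subp p a c) = uext u (subp p a b) * uext u (subp p b c) := by
  have hac : a ≤ c := hab.trans hbc
  have hIab : Set.Icc a b ⊆ Set.Icc a c := Set.Icc_subset_Icc le_rfl hbc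
  have hIbc : Set.Icc b c ⊆ Set.Icc a c := Set.Icc_subset_Icc hab le_rfl
  have hpab : Set.range (subp p a b) ⊆ U := fun z hz =>
    h (Set.image_mono hIab (subp_range p hab hz))
  have hpbc : Set.range (subp p b c) ⊆ U := fun z hz =>
    h (Set.image_mono hIbc (subp_range p hbc hz))
  have hpac : Set.range (subp p a c) ⊆ U := fun z hz => h (subp_range p hac hz)
  have htrans : Set.range ((subp p a b).trans (subp p b c)) ⊆ U := by
    rw [Path.trans_range]; exact Set.union_subset hpab hpbc
  -- homotopy between the concatenation and the direct subpath
  have hmt : ((aff a b).trans (aff b c)).map p.continuous = (subp p a b).trans (subp p b c) :=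
    Path.map_trans _ _ _
  have hγ : ∀ t, ((aff a b).trans (aff b c)) t ∈ Set.Icc a c := by
    intro t
    have : ((aff a b).trans (aff b c)) t ∈ Set.range ((aff a b).trans (aff b c)) :=
      Set.mem_range_self _
    rw [Path.trans_range] at this
    rcases this with ⟨s, hs⟩ | ⟨s, hs⟩
    · rw [← hs]; exact hIab (aff_mem_Icc hab s)
    · rw [← hs]; exact hIbc (aff_mem_Icc hbc s)
  have hη : ∀ t, (aff a c) t ∈ Set.Icc a c := fun t => aff_mem_Icc hac t
  set F := mapHtpy (strI ((aff a b).trans (aff b c)) (aff a c)) p.continuous with hFdef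
  have hFr : Set.range F ⊆ U := by
    rw [hFdef]
    intro z hz
    obtain ⟨w, hw, rfl⟩ := mapHtpy_range (strI ((aff a b).trans (aff b c)) (aff a c)) p.continuous hz
    obtain ⟨q, rfl⟩ := hw
    exact h ⟨_, strI_mem _ _ hγ hη q, rfl⟩
  have heq := uext_homotopy u F ⟨U, hU, hFr⟩
  rw [hmt] at heq
  rw [show uext u (subp p a c) = uext u ((aff a c).map p.continuous) from rfl, ← heq]
  exact uext_mul u _ _ ⟨U, hU, htrans⟩ ⟨U, hU, hpab⟩ ⟨U, hU, hpbc⟩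

/-- Subdivision points of the unit interval. -/
noncomputable def pt (n i : ℕ) : I :=
  ⟨min ((i:ℝ)/(n:ℝ)) 1, ⟨le_min (by positivity) zero_le_one, min_le_right _ _⟩⟩

lemma pt_coe {n i : ℕ} (hn : 0 < n) (h : i ≤ n) : ((pt n i : I) : ℝ) = (i:ℝ)/(n:ℝ) := by
  show min _ _ = _
  apply min_eq_left
  rw [div_le_one (by exact_mod_cast hn)]
  exact_mod_cast h

lemma pt_zero (n : ℕ) : pt n 0 = 0 := by
  ext
  show min (((0:ℕ):ℝ)/(n:ℝ)) 1 = ((0:I):ℝ)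
  simp

lemma pt_self {n : ℕ} (hn : 0 < n) : pt n n = 1 := by
  ext
  show ((pt n n : I) : ℝ) = 1
  rw [pt_coe hn le_rfl]
  exact div_self (by exact_mod_cast hn.ne')

lemma pt_mono {n : ℕ} : Monotone (pt n) := by
  intro i j hij
  show min ((i:ℝ)/(n:ℝ)) 1 ≤ min ((j:ℝ)/(n:ℝ)) 1
  apply min_le_min _ le_rfl
  rcases Nat.eq_zero_or_pos n with rfl | hn
  · simp
  · rw [div_le_div_iff_of_pos_right (by exact_mod_cast hn)]
    exact_mod_cast hij

/-- A subdivision into `n` pieces is fine for `p` if each piece lands in a member of `𝒰`. -/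
def Fine (𝒰 : Set (Set X)) {x y : X} (p : Path x y) (n : ℕ) : Prop :=
  ∀ i < n, ∃ U ∈ 𝒰, p '' Set.Icc (pt n i) (pt n (i+1)) ⊆ U

/-- The product of `uext` over the pieces of the uniform `n`-subdivision. -/
noncomputable def W {x y : X} (p : Path x y) (n : ℕ) : G :=
  ((List.range n).map (fun i => uext u (subp p (pt n i) (pt n (i+1))))).prod

lemma uext_chain_list (hcover : ⋃₀ 𝒰 = Set.univ) {x y : X} (p : Path x y) {U : Set X}
    (hU : U ∈ 𝒰) {a b : I} (h : p '' Set.Icc a b ⊆ U) (c : ℕ → I) (m : ℕ)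
    (hmono : Monotone c) (hmem : ∀ j ≤ m, c j ∈ Set.Icc a b) (hc0 : c 0 = a) :
    uext u (subp p a (c m)) =
      ((List.range m).map (fun j => uext u (subp p (c j) (c (j+1))))).prod := by
  induction m with
  | zero =>
    simp only [List.range_zero, List.map_nil, List.prod_nil]
    rw [← hc0]
    exact uext_const u hcover _ (fun t => by rw [hc0]; exact subp_const p a t)
  | succ m ih =>
    have hcm : c m ∈ Set.Icc a b := hmem m (Nat.le_succ m)
    have hcm1 : c (m+1) ∈ Set.Icc a b := hmem (m+1) le_rfl
    have hIcc : Set.Icc a (c (m+1)) ⊆ Set.Icc a b := Set.Icc_subset_Icc le_rfl hcm1.2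
    have h1 : uext u (subp p a (c (m+1))) =
        uext u (subp p a (c m)) * uext u (subp p (c m) (c (m+1))) := by
      apply uext_chain u p hU (hc0 ▸ hmono (Nat.zero_le m)) (hmono (Nat.le_succ m))
      exact fun z hz => h (Set.image_mono hIcc hz)
    rw [h1, ih (fun j hj => hmem j (hj.trans (Nat.le_succ m))), List.range_succ,
      List.map_append, List.prod_append, List.map_singleton, List.prod_singleton]

lemma prod_grid (f : ℕ → G) (n m : ℕ) :
    ((List.range (n*m)).map f).prod =
      ((List.range n).map (fun i => ((List.range m).map (fun j => f (i*m+j))).prod)).prod := by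
  induction n with
  | zero => simp
  | succ n ih =>
    rw [Nat.succ_mul, List.range_add, List.map_append, List.prod_append, ih,
      List.range_succ, List.map_append, List.prod_append, List.map_singleton,
      List.prod_singleton, List.map_map]
    rfl

lemma pt_refine_left {n m i : ℕ} (hn : 0 < n) (hm : 0 < m) (hi : i < n) :
    pt (n*m) (i*m) = pt n i := by
  ext
  have him : i*m ≤ n*m := Nat.mul_le_mul_right m hi.le
  rw [pt_coe (n := n*m) (by positivity) him, pt_coe hn hi.le]
  have hm' : (0:ℝ) < m := by exact_mod_cast hm
  have hn' : (0:ℝ) < n := by exact_mod_cast hn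
  push_cast
  field_simp

lemma pt_refine_right {n m i : ℕ} (hn : 0 < n) (hm : 0 < m) (hi : i < n) :
    pt (n*m) (i*m+m) = pt n (i+1) := by
  ext
  have him : i*m+m ≤ n*m := by
    calc i*m+m = (i+1)*m := by ring
      _ ≤ n*m := Nat.mul_le_mul_right m hi
  rw [pt_coe (n := n*m) (by positivity) him, pt_coe hn hi]
  have hm' : (0:ℝ) < m := by exact_mod_cast hm
  have hn' : (0:ℝ) < n := by exact_mod_cast hn
  push_cast
  field_simp

lemma pt_refine_mem {n m i j : ℕ} (hn : 0 < n) (hm : 0 < m) (hi : i < n) (hj : j ≤ m) :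
    pt (n*m) (i*m+j) ∈ Set.Icc (pt n i) (pt n (i+1)) := by
  have hm' : (0:ℝ) < m := by exact_mod_cast hm
  have hn' : (0:ℝ) < n := by exact_mod_cast hn
  have hj' : (j:ℝ) ≤ m := by exact_mod_cast hj
  have hidx : i*m+j ≤ n*m := by
    calc i*m+j ≤ i*m+m := Nat.add_le_add_left hj _
      _ = (i+1)*m := by ring
      _ ≤ n*m := Nat.mul_le_mul_right m hi
  constructor
  · show ((pt n i : I) : ℝ) ≤ pt (n*m) (i*m+j)
    rw [pt_coe (n := n*m) (by positivity) hidx, pt_coe hn hi.le]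
    rw [div_le_div_iff₀ hn' (by positivity)]
    push_cast
    nlinarith
  · show ((pt (n*m) (i*m+j) : I) : ℝ) ≤ pt n (i+1)
    rw [pt_coe (n := n*m) (by positivity) hidx, pt_coe hn hi]
    rw [div_le_div_iff₀ (by positivity) hn']
    push_cast
    nlinarith

lemma W_refine (hcover : ⋃₀ 𝒰 = Set.univ) {x y : X} (p : Path x y) {n m : ℕ}
    (hn : 0 < n) (hm : 0 < m) (hf : Fine 𝒰 p n) : W u p n = W u p (n*m) := by
  rw [W, W, prod_grid]
  congr 1
  apply List.map_congr_left
  intro i hi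
  rw [List.mem_range] at hi
  obtain ⟨U, hU, hPU⟩ := hf i hi
  have hb : pt (n*m) (i*m+m) = pt n (i+1) := pt_refine_right hn hm hi
  have hchain := uext_chain_list u hcover p hU hPU (fun j => pt (n*m) (i*m+j)) m
    (fun j k hjk => pt_mono (by omega))
    (fun j hj => pt_refine_mem hn hm hi hj)
    (pt_refine_left hn hm hi)
  rw [hb] at hchain
  exact hchain

lemma W_indep (hcover : ⋃₀ 𝒰 = Set.univ) {x y : X} (p : Path x y) {n m : ℕ}
    (hn : 0 < n) (hm : 0 < m) (hfn : Fine 𝒰 p n) (hfm : Fine 𝒰 p m) :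
    W u p n = W u p m := by
  rw [W_refine u hcover p hn hm hfn, W_refine u hcover p hm hn hfm, Nat.mul_comm]

/-- Existence of fine subdivisions, via the Lebesgue number lemma. -/
lemma fine_exists (hopen : ∀ U ∈ 𝒰, IsOpen U) (hcover : ⋃₀ 𝒰 = Set.univ)
    {x y : X} (p : Path x y) : ∃ n, 0 < n ∧ Fine 𝒰 p n := by
  obtain ⟨δ, hδ, hball⟩ := lebesgue_number_lemma_of_metric (s := (Set.univ : Set I))
    (c := fun U : {U // U ∈ 𝒰} => p ⁻¹' (U : Set X)) isCompact_univ
    (fun U => (hopen U U.2).preimage p.continuous)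
    (by
      intro t _
      have := hcover ▸ Set.mem_univ (p t)
      obtain ⟨U, hU, hpt⟩ := this
      exact Set.mem_iUnion.mpr ⟨⟨U, hU⟩, hpt⟩)
  obtain ⟨n, hn⟩ := exists_nat_one_div_lt hδ
  refine ⟨n+1, Nat.succ_pos n, ?_⟩
  intro i hi
  obtain ⟨⟨U, hU⟩, hsub⟩ := hball (pt (n+1) i) trivial
  refine ⟨U, hU, ?_⟩
  rintro _ ⟨t, ht, rfl⟩
  apply hsub
  show t ∈ Metric.ball _ δ
  rw [Metric.mem_ball, Subtype.dist_eq, Real.dist_eq]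
  have hn1 : (0:ℝ) < (n:ℝ)+1 := by positivity
  have h1 : ((pt (n+1) i : I) : ℝ) = (i:ℝ)/((n:ℝ)+1) := by
    rw [pt_coe (Nat.succ_pos n) hi.le]; push_cast; ring_nf
  have h2 : ((pt (n+1) (i+1) : I) : ℝ) = ((i:ℝ)+1)/((n:ℝ)+1) := by
    rw [pt_coe (Nat.succ_pos n) hi]; push_cast; ring_nf
  have hl : ((pt (n+1) i : I) : ℝ) ≤ t := ht.1
  have hr : (t:ℝ) ≤ ((pt (n+1) (i+1) : I) : ℝ) := ht.2
  rw [h1] at hl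
  rw [h2] at hr
  have habs : |(t:ℝ) - pt (n+1) i| ≤ 1/((n:ℝ)+1) := by
    rw [h1, abs_le]
    constructor
    · have : (0:ℝ) ≤ (t:ℝ) - (i:ℝ)/((n:ℝ)+1) := by linarith
      have h0 : (0:ℝ) < 1/((n:ℝ)+1) := by positivity
      linarith
    · have key : ((i:ℝ)+1)/((n:ℝ)+1) = (i:ℝ)/((n:ℝ)+1) + 1/((n:ℝ)+1) := by ring
      linarith
  calc |(t:ℝ) - pt (n+1) i| ≤ 1/((n:ℝ)+1) := habs
    _ < δ := hn

/-- Extension of a short cocycle to arbitrary paths via fine subdivisions. -/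
noncomputable def usharp {x y : X} (p : Path x y) : G :=
  letI := Classical.dec (∃ n, 0 < n ∧ Fine 𝒰 p n)
  if h : ∃ n, 0 < n ∧ Fine 𝒰 p n then W u p h.choose else 1

lemma usharp_eq (hcover : ⋃₀ 𝒰 = Set.univ) {x y : X} (p : Path x y) {n : ℕ}
    (hn : 0 < n) (hf : Fine 𝒰 p n) : usharp u p = W u p n := by
  have hex : ∃ k, 0 < k ∧ Fine 𝒰 p k := ⟨n, hn, hf⟩
  rw [usharp]
  rw [dif_pos hex]
  exact W_indep u hcover p hex.choose_spec.1 hn hex.choose_spec.2 hf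

lemma aff_zero (a b : I) : aff a b 0 = a := (aff a b).source

lemma aff_one (a b : I) : aff a b 1 = b := (aff a b).target

lemma uext_congr' {x y x' y' : X} (p : Path x y) (q : Path x' y') (h : ∀ t, p t = q t) :
    uext u p = uext u q := by
  have hx : x = x' := by rw [← p.source, ← q.source]; exact h 0
  have hy : y = y' := by rw [← p.target, ← q.target]; exact h 1
  exact uext_congr u p q hx hy h

lemma fine_refine {x y : X} {p : Path x y} {n m : ℕ} (hn : 0 < n) (hm : 0 < m)
    (hf : Fine 𝒰 p n) : Fine 𝒰 p (n*m) := by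
  intro k hk
  have hi : k / m < n := Nat.div_lt_of_lt_mul (by rwa [Nat.mul_comm] at hk)
  obtain ⟨U, hU, hPU⟩ := hf (k/m) hi
  refine ⟨U, hU, ?_⟩
  have hk1 : k = (k/m)*m + k%m := by
    conv_lhs => rw [← Nat.div_add_mod k m]
    ring
  have hj : k % m < m := Nat.mod_lt _ hm
  have hmem1 := pt_refine_mem (j := k % m) hn hm hi hj.le
  have hmem2 := pt_refine_mem (j := k % m + 1) hn hm hi hj
  refine (Set.image_mono ?_).trans hPU
  apply Set.Icc_subset_Icc
  · rw [show pt (n*m) k = pt (n*m) ((k/m)*m + k%m) from by rw [← hk1]]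
    exact hmem1.1
  · rw [show pt (n*m) (k+1) = pt (n*m) ((k/m)*m + (k%m+1)) from by rw [← Nat.add_assoc, ← hk1]]
    exact hmem2.2

section TransLemmas

variable {x y z : X} (p : Path x y) (q : Path y z)

lemma trans_first_piece {n : ℕ} (hn : 0 < n) {i : ℕ} (hi : i < n) (t : I) :
    subp (p.trans q) (pt (2*n) i) (pt (2*n) (i+1)) t = subp p (pt n i) (pt n (i+1)) t := by
  have hn' : (0:ℝ) < n := by exact_mod_cast hn
  have h2n : (0:ℕ) < 2*n := by omega
  have hc1 : ((pt (2*n) i : I) : ℝ) = (i:ℝ)/(2*n) := by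
    rw [pt_coe h2n (by omega)]; push_cast; ring
  have hc2 : ((pt (2*n) (i+1) : I) : ℝ) = ((i:ℝ)+1)/(2*n) := by
    rw [pt_coe h2n (by omega)]; push_cast; ring
  have hd1 : ((pt n i : I) : ℝ) = (i:ℝ)/n := pt_coe hn hi.le
  have hd2 : ((pt n (i+1) : I) : ℝ) = ((i:ℝ)+1)/n := by
    rw [pt_coe hn hi]; push_cast; ring
  rw [subp_apply, subp_apply, Path.trans_apply]
  have ht0 : (0:ℝ) ≤ t := t.2.1
  have ht1 : (t:ℝ) ≤ 1 := t.2.2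
  have harg : ((aff (pt (2*n) i) (pt (2*n) (i+1)) t : I) : ℝ) =
      (1-(t:ℝ)) * ((i:ℝ)/(2*n)) + t * (((i:ℝ)+1)/(2*n)) := by
    rw [aff_apply, hc1, hc2]
  have hle : ((aff (pt (2*n) i) (pt (2*n) (i+1)) t : I) : ℝ) ≤ 1/2 := by
    rw [harg]
    have hi1 : (i:ℝ)+1 ≤ n := by exact_mod_cast hi
    rw [show (1-(t:ℝ)) * ((i:ℝ)/(2*(n:ℝ))) + (t:ℝ) * (((i:ℝ)+1)/(2*(n:ℝ)))
        = ((1-(t:ℝ))*(i:ℝ) + (t:ℝ)*((i:ℝ)+1))/(2*(n:ℝ)) from by ring,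
      div_le_div_iff₀ (by positivity) (by norm_num : (0:ℝ) < 2)]
    nlinarith
  rw [dif_pos hle]
  congr 1
  ext
  show 2 * ((aff (pt (2*n) i) (pt (2*n) (i+1)) t : I) : ℝ) = _
  rw [harg, aff_apply, hd1, hd2]
  field_simp

lemma trans_second_piece {n : ℕ} (hn : 0 < n) {i : ℕ} (hi : i < n) (t : I) :
    subp (p.trans q) (pt (2*n) (n+i)) (pt (2*n) (n+i+1)) t = subp q (pt n i) (pt n (i+1)) t := by
  have hn' : (0:ℝ) < n := by exact_mod_cast hn
  have h2n : (0:ℕ) < 2*n := by omega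
  have hc1 : ((pt (2*n) (n+i) : I) : ℝ) = ((n:ℝ)+i)/(2*n) := by
    rw [pt_coe h2n (by omega)]; push_cast; ring
  have hc2 : ((pt (2*n) (n+i+1) : I) : ℝ) = ((n:ℝ)+i+1)/(2*n) := by
    rw [pt_coe h2n (by omega)]; push_cast; ring
  have hd1 : ((pt n i : I) : ℝ) = (i:ℝ)/n := pt_coe hn hi.le
  have hd2 : ((pt n (i+1) : I) : ℝ) = ((i:ℝ)+1)/n := by
    rw [pt_coe hn hi]; push_cast; ring
  rw [subp_apply, subp_apply, Path.trans_apply]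
  have ht0 : (0:ℝ) ≤ t := t.2.1
  have ht1 : (t:ℝ) ≤ 1 := t.2.2
  have hi0 : (0:ℝ) ≤ i := by positivity
  have harg : ((aff (pt (2*n) (n+i)) (pt (2*n) (n+i+1)) t : I) : ℝ) =
      (1-(t:ℝ)) * (((n:ℝ)+i)/(2*n)) + t * (((n:ℝ)+i+1)/(2*n)) := by
    rw [aff_apply, hc1, hc2]
  have hs : ((aff (pt (2*n) (n+i)) (pt (2*n) (n+i+1)) t : I) : ℝ)
      = ((n:ℝ)+(i:ℝ)+(t:ℝ))/(2*(n:ℝ)) := by rw [harg]; field_simp; ring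
  split_ifs with hle
  · -- boundary case: only possible if i = 0 and t = 0
    have hsum : (i:ℝ) + (t:ℝ) ≤ 0 := by
      rw [hs, div_le_div_iff₀ (by positivity) (by norm_num : (0:ℝ) < 2)] at hle
      linarith
    have hieq : (i:ℝ) = 0 := by linarith
    have hteq : (t:ℝ) = 0 := by linarith
    have h2arg : 2 * ((aff (pt (2*n) (n+i)) (pt (2*n) (n+i+1)) t : I) : ℝ) = 1 := by
      rw [hs, hieq, hteq]; field_simp; ring
    trans (p 1)
    · exact congrArg p (by ext; exact h2arg)
    rw [p.target]
    refine q.source.symm.trans (congrArg q ?_)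
    ext
    rw [aff_apply, hd1, hd2, hieq, hteq]
    norm_num
  · congr 1
    ext
    show 2 * ((aff (pt (2*n) (n+i)) (pt (2*n) (n+i+1)) t : I) : ℝ) - 1 = _
    rw [harg, aff_apply, hd1, hd2]
    field_simp
    ring

lemma trans_fine {n : ℕ} (hn : 0 < n) (hfp : Fine 𝒰 p n) (hfq : Fine 𝒰 q n) :
    Fine 𝒰 (p.trans q) (2*n) := by
  have hn' : (0:ℝ) < n := by exact_mod_cast hn
  have h2n : (0:ℕ) < 2*n := by omega
  intro k hk
  rcases Nat.lt_or_ge k n with hkn | hkn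
  · obtain ⟨U, hU, hPU⟩ := hfp k hkn
    refine ⟨U, hU, ?_⟩
    rintro _ ⟨s, hs, rfl⟩
    have hs1 : ((pt (2*n) k : I) : ℝ) ≤ s := hs.1
    have hs2 : (s:ℝ) ≤ pt (2*n) (k+1) := hs.2
    rw [pt_coe h2n (by omega)] at hs1
    rw [pt_coe h2n (by omega)] at hs2
    push_cast at hs1 hs2
    have hk1 : (k:ℝ)+1 ≤ n := by exact_mod_cast hkn
    have hle : (s:ℝ) ≤ 1/2 := by
      apply hs2.trans
      rw [div_le_div_iff₀ (by positivity) (by norm_num : (0:ℝ) < 2)]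
      nlinarith
    rw [Path.trans_apply, dif_pos hle]
    apply hPU
    refine ⟨⟨2*s, ⟨by linarith [s.2.1], by linarith⟩⟩, ⟨?_, ?_⟩, rfl⟩
    · show ((pt n k : I) : ℝ) ≤ 2*(s:ℝ)
      rw [pt_coe hn hkn.le, div_le_iff₀ hn']
      have h := (div_le_iff₀ (by positivity : (0:ℝ) < 2*(n:ℝ))).mp hs1
      nlinarith [h]
    · show 2*(s:ℝ) ≤ ((pt n (k+1) : I) : ℝ)
      rw [pt_coe hn hkn, le_div_iff₀ hn']
      have h := (le_div_iff₀ (by positivity : (0:ℝ) < 2*(n:ℝ))).mp hs2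
      push_cast at h ⊢
      nlinarith [h]
  · obtain ⟨i, rfl⟩ := Nat.exists_eq_add_of_le hkn
    have hi : i < n := by omega
    obtain ⟨U, hU, hPU⟩ := hfq i hi
    refine ⟨U, hU, ?_⟩
    rintro _ ⟨s, hs, rfl⟩
    have hs1 : ((pt (2*n) (n+i) : I) : ℝ) ≤ s := hs.1
    have hs2 : (s:ℝ) ≤ pt (2*n) (n+i+1) := hs.2
    rw [pt_coe h2n (by omega)] at hs1
    rw [pt_coe h2n (by omega)] at hs2
    push_cast at hs1 hs2
    have hi1 : (i:ℝ)+1 ≤ n := by exact_mod_cast hi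
    have hge : (1:ℝ)/2 ≤ s := by
      refine le_trans ?_ hs1
      rw [div_le_div_iff₀ (by norm_num : (0:ℝ) < 2) (by positivity)]
      nlinarith [Nat.cast_nonneg (α := ℝ) i]
    have h0mem : (0:I) ∈ Set.Icc (pt n i) (pt n (i+1)) → True := fun _ => trivial
    rw [Path.trans_apply]
    split_ifs with hle
    · -- s = 1/2, forced i = 0
      have hseq : (s:ℝ) = 1/2 := le_antisymm hle hge
      have hieq : (i:ℝ) ≤ 0 := by
        rw [hseq] at hs1
        rw [div_le_div_iff₀ (by positivity) (by norm_num : (0:ℝ) < 2)] at hs1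
        nlinarith
      have hi0 : i = 0 := by exact_mod_cast le_antisymm hieq (Nat.cast_nonneg i)
      subst hi0
      apply hPU
      refine ⟨0, ⟨?_, ?_⟩, ?_⟩
      · exact le_of_eq (pt_zero n)
      · exact le_trans (le_of_eq (pt_zero n).symm) (pt_mono (Nat.zero_le 1))
      · rw [q.source]
        refine p.target.symm.trans (congrArg p ?_)
        ext
        show (1:ℝ) = 2*(s:ℝ)
        rw [hseq]; norm_num
    · apply hPU
      refine ⟨⟨2*s-1, ⟨by linarith, by linarith [s.2.2]⟩⟩, ⟨?_, ?_⟩, rfl⟩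
      · show ((pt n i : I) : ℝ) ≤ 2*(s:ℝ)-1
        rw [pt_coe hn hi.le, div_le_iff₀ hn']
        have h := (div_le_iff₀ (by positivity : (0:ℝ) < 2*(n:ℝ))).mp hs1
        nlinarith [h]
      · show 2*(s:ℝ)-1 ≤ ((pt n (i+1) : I) : ℝ)
        rw [pt_coe hn hi, le_div_iff₀ hn']
        have h := (le_div_iff₀ (by positivity : (0:ℝ) < 2*(n:ℝ))).mp hs2
        push_cast at h ⊢
        nlinarith [h]

lemma W_trans (u : ShortCocycle1 𝒰 Y G) {n : ℕ} (hn : 0 < n) :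
    W u (p.trans q) (2*n) = W u p n * W u q n := by
  have hsplit : List.range (2*n) = List.range n ++ (List.range n).map (n + ·) := by
    rw [show 2*n = n+n from by ring, List.range_add]
  rw [W, W, W, hsplit, List.map_append, List.prod_append, List.map_map]
  congr 1
  · refine congrArg List.prod (List.map_congr_left ?_)
    intro i hi
    rw [List.mem_range] at hi
    exact uext_congr' u _ _ (trans_first_piece p q hn hi)
  · refine congrArg List.prod (List.map_congr_left ?_)
    intro i hi
    rw [List.mem_range] at hi
    show uext u (subp (p.trans q) (pt (2*n) (n+i)) (pt (2*n) (n+i+1))) = _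
    exact uext_congr' u _ _ (trans_second_piece p q hn hi)

end TransLemmas

lemma usharp_mul (hopen : ∀ U ∈ 𝒰, IsOpen U) (hcover : ⋃₀ 𝒰 = Set.univ)
    {x y z : X} (p : Path x y) (q : Path y z) :
    usharp u (p.trans q) = usharp u p * usharp u q := by
  obtain ⟨n, hn, hfp⟩ := fine_exists hopen hcover p
  obtain ⟨m, hm, hfq⟩ := fine_exists hopen hcover q
  have hfp' : Fine 𝒰 p (n*m) := fine_refine hn hm hfp
  have hfq' : Fine 𝒰 q (n*m) := by rw [Nat.mul_comm]; exact fine_refine hm hn hfq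
  have hN : 0 < n*m := Nat.mul_pos hn hm
  have hft : Fine 𝒰 (p.trans q) (2*(n*m)) := trans_fine p q hN hfp' hfq'
  rw [usharp_eq u hcover p hN hfp', usharp_eq u hcover q hN hfq',
    usharp_eq u hcover (p.trans q) (by omega) hft, W_trans p q u hN]

lemma usharp_triv (hopen : ∀ U ∈ 𝒰, IsOpen U) (hcover : ⋃₀ 𝒰 = Set.univ)
    {x y : X} (p : Path x y) (hY : Set.range p ⊆ Y) : usharp u p = 1 := by
  obtain ⟨n, hn, hf⟩ := fine_exists hopen hcover p
  rw [usharp_eq u hcover p hn hf, W]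
  apply List.prod_eq_one
  intro g hg
  obtain ⟨i, hi, rfl⟩ := List.mem_map.mp hg
  rw [List.mem_range] at hi
  obtain ⟨U, hU, hPU⟩ := hf i hi
  have hsub : Set.range (subp p (pt n i) (pt n (i+1))) ⊆ p '' Set.Icc (pt n i) (pt n (i+1)) :=
    subp_range p (pt_mono (Nat.le_succ i))
  rw [uext_of_short u _ ⟨U, hU, hsub.trans hPU⟩]
  apply u.triv
  exact hsub.trans ((Set.image_subset_range p _).trans hY)

lemma usharp_short (hcover : ⋃₀ 𝒰 = Set.univ) {x y : X} (p : Path x y)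
    (h : ∃ U ∈ 𝒰, Set.range p ⊆ U) : usharp u p = u.toFun p h := by
  obtain ⟨U, hU, hp⟩ := h
  have hf : Fine 𝒰 p 1 := by
    intro i hi
    exact ⟨U, hU, (Set.image_subset_range p _).trans hp⟩
  rw [usharp_eq u hcover p one_pos hf, W]
  rw [show List.range 1 = [0] from rfl]
  simp only [List.map_cons, List.map_nil, List.prod_cons, List.prod_nil, mul_one]
  have hpt : ∀ t, subp p (pt 1 0) (pt 1 1) t = p t := by
    intro t
    rw [subp_apply]
    congr 1
    ext
    rw [aff_apply, pt_zero]
    have h1 : ((pt 1 1 : I) : ℝ) = 1 := by rw [pt_self one_pos]; rfl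
    rw [h1]
    show (1 - (t:ℝ)) * ((0:I):ℝ) + t * 1 = t
    norm_num
  rw [uext_congr' u _ p hpt, uext_of_short u p ⟨U, hU, hp⟩]

lemma trans_congr_fun {x y z x' y' z' : X} (p1 : Path x y) (q1 : Path y z) (p2 : Path x' y')
    (q2 : Path y' z') (hp : ∀ t, p1 t = p2 t) (hq : ∀ t, q1 t = q2 t) :
    ∀ t, (p1.trans q1) t = (p2.trans q2) t := by
  intro t
  rw [Path.trans_apply, Path.trans_apply]
  split_ifs
  · apply hp
  · apply hq

/-- Straight-line homotopy between two paths in the unit square. -/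
def strII {a b : I × I} (γ η : Path a b) : γ.Homotopy η where
  toFun q := (⟨(1 - (q.1:ℝ)) * (γ q.2).1 + q.1 * (η q.2).1, affMem _ _ _⟩,
    ⟨(1 - (q.1:ℝ)) * (γ q.2).2 + q.1 * (η q.2).2, affMem _ _ _⟩)
  continuous_toFun := by
    apply Continuous.prodMk <;> apply Continuous.subtype_mk <;> fun_prop
  map_zero_left t := by
    refine Prod.ext ?_ ?_ <;> ext <;> simp
  map_one_left t := by
    refine Prod.ext ?_ ?_ <;> ext <;> simp
  prop' s t ht := by
    rcases ht with h0 | h1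
    · subst h0
      refine Prod.ext ?_ ?_ <;> ext <;> simp [Path.source] <;> ring
    · simp only [Set.mem_singleton_iff] at h1; subst h1
      refine Prod.ext ?_ ?_ <;> ext <;> simp [Path.target] <;> ring

/-- Vertical path of a homotopy at parameter `w`. -/
def vert {x y : X} {p q : Path x y} (F : p.Homotopy q) (s s' w : I) :
    Path (F (s, w)) (F (s', w)) :=
  ((aff s s').prod (Path.refl w)).map (map_continuous F.toContinuousMap)

lemma vert_apply {x y : X} {p q : Path x y} (F : p.Homotopy q) (s s' w t : I) :
    vert F s s' w t = F (aff s s' t, w) := rfl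

lemma eval_apply {x y : X} {p q : Path x y} (F : p.Homotopy q) (s t : I) :
    F.eval s t = F (s, t) := rfl

lemma aff01 (t : I) : aff 0 1 t = t := by
  ext; rw [aff_apply]; simp

section Square

variable {x y : X} {p q : Path x y}

/-- The square lemma at `uext` level: going along the bottom then the right side of a
subrectangle gives the same value as the left side then the top. -/
lemma uext_square (F : p.Homotopy q) (u : ShortCocycle1 𝒰 Y G) {U : Set X} (hU : U ∈ 𝒰)
    {s s' a b : I} (hss : s ≤ s') (hab : a ≤ b)
    (hsq : ∀ z w, z ∈ Set.Icc s s' → w ∈ Set.Icc a b → F (z, w) ∈ U) :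
    uext u (subp (F.eval s) a b) * uext u (vert F s s' b) =
      uext u (vert F s s' a) * uext u (subp (F.eval s') a b) := by
  have hcont : Continuous (fun z : I × I => F (aff s s' z.1, aff a b z.2)) := by
    apply (map_continuous F.toContinuousMap).comp
    exact ((aff s s').continuous.comp continuous_fst).prodMk
      ((aff a b).continuous.comp continuous_snd)
  have hsmem : s ∈ Set.Icc s s' := ⟨le_rfl, hss⟩
  have hs'mem : s' ∈ Set.Icc s s' := ⟨hss, le_rfl⟩
  have hamem : a ∈ Set.Icc a b := ⟨le_rfl, hab⟩
  have hbmem : b ∈ Set.Icc a b := ⟨hab, le_rfl⟩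
  -- edges of the unit square
  set eB : Path ((0:I), (0:I)) ((0:I), (1:I)) := (Path.refl (0:I)).prod (aff 0 1) with heB
  set eR : Path ((0:I), (1:I)) ((1:I), (1:I)) := (aff 0 1).prod (Path.refl (1:I)) with heR
  set eL : Path ((0:I), (0:I)) ((1:I), (0:I)) := (aff 0 1).prod (Path.refl (0:I)) with heL
  set eT : Path ((1:I), (0:I)) ((1:I), (1:I)) := (Path.refl (1:I)).prod (aff 0 1) with heT
  -- pointwise identifications
  have hB : ∀ t, (eB.map hcont) t = subp (F.eval s) a b t := by
    intro t
    show F (aff s s' 0, aff a b (aff 0 1 t)) = F (s, aff a b t)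
    exact congrArg F (Prod.ext (aff_zero s s') (congrArg (aff a b) (aff01 t)))
  have hR : ∀ t, (eR.map hcont) t = vert F s s' b t := by
    intro t
    show F (aff s s' (aff 0 1 t), aff a b 1) = F (aff s s' t, b)
    exact congrArg F (Prod.ext (congrArg (aff s s') (aff01 t)) (aff_one a b))
  have hL : ∀ t, (eL.map hcont) t = vert F s s' a t := by
    intro t
    show F (aff s s' (aff 0 1 t), aff a b 0) = F (aff s s' t, a)
    exact congrArg F (Prod.ext (congrArg (aff s s') (aff01 t)) (aff_zero a b))
  have hT : ∀ t, (eT.map hcont) t = subp (F.eval s') a b t := by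
    intro t
    show F (aff s s' 1, aff a b (aff 0 1 t)) = F (s', aff a b t)
    exact congrArg F (Prod.ext (aff_one s s') (congrArg (aff a b) (aff01 t)))
  -- shortness of the four pieces
  have hsubS : Set.range (subp (F.eval s) a b) ⊆ U := by
    rintro _ ⟨t, rfl⟩
    exact hsq _ _ hsmem (aff_mem_Icc hab _)
  have hsubS' : Set.range (subp (F.eval s') a b) ⊆ U := by
    rintro _ ⟨t, rfl⟩
    exact hsq _ _ hs'mem (aff_mem_Icc hab _)
  have hvertA : Set.range (vert F s s' a) ⊆ U := by
    rintro _ ⟨t, rfl⟩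
    exact hsq _ _ (aff_mem_Icc hss _) hamem
  have hvertB : Set.range (vert F s s' b) ⊆ U := by
    rintro _ ⟨t, rfl⟩
    exact hsq _ _ (aff_mem_Icc hss _) hbmem
  have htr1 : Set.range ((subp (F.eval s) a b).trans (vert F s s' b)) ⊆ U := by
    exact (Path.trans_range _ _).subset.trans (Set.union_subset hsubS hvertB)
  have htr2 : Set.range ((vert F s s' a).trans (subp (F.eval s') a b)) ⊆ U := by
    exact (Path.trans_range _ _).subset.trans (Set.union_subset hvertA hsubS')
  -- homotopy between the two boundary paths, mapped through the rectangle
  have hmt1 : (eB.trans eR).map hcont = (eB.map hcont).trans (eR.map hcont) :=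
    Path.map_trans _ _ _
  have hmt2 : (eL.trans eT).map hcont = (eL.map hcont).trans (eT.map hcont) :=
    Path.map_trans _ _ _
  have hGr : Set.range (mapHtpy (strII (eB.trans eR) (eL.trans eT)) hcont) ⊆ U := by
    intro z hz
    obtain ⟨w, _, rfl⟩ := mapHtpy_range (strII (eB.trans eR) (eL.trans eT)) hcont hz
    exact hsq _ _ (aff_mem_Icc hss _) (aff_mem_Icc hab _)
  have hhom := uext_homotopy u (mapHtpy (strII (eB.trans eR) (eL.trans eT)) hcont) ⟨U, hU, hGr⟩
  rw [hmt1, hmt2] at hhom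
  calc uext u (subp (F.eval s) a b) * uext u (vert F s s' b)
      = uext u ((subp (F.eval s) a b).trans (vert F s s' b)) :=
        (uext_mul u _ _ ⟨U, hU, htr1⟩ ⟨U, hU, hsubS⟩ ⟨U, hU, hvertB⟩).symm
    _ = uext u ((eB.map hcont).trans (eR.map hcont)) :=
        uext_congr' u _ _ (trans_congr_fun _ _ _ _ (fun t => (hB t).symm) (fun t => (hR t).symm))
    _ = uext u ((eL.map hcont).trans (eT.map hcont)) := hhom
    _ = uext u ((vert F s s' a).trans (subp (F.eval s') a b)) :=
        uext_congr' u _ _ (trans_congr_fun _ _ _ _ hL hT)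
    _ = uext u (vert F s s' a) * uext u (subp (F.eval s') a b) :=
        uext_mul u _ _ ⟨U, hU, htr2⟩ ⟨U, hU, hvertA⟩ ⟨U, hU, hsubS'⟩

end Square

lemma telescope {G : Type} [Group G] (f g h : ℕ → G) (n : ℕ)
    (hstep : ∀ i < n, f i * h (i+1) = h i * g i) :
    ((List.range n).map f).prod * h n = h 0 * ((List.range n).map g).prod := by
  induction n with
  | zero => simp
  | succ n ih =>
    rw [List.range_succ, List.map_append, List.map_append, List.prod_append, List.prod_append,
      List.map_singleton, List.prod_singleton, List.map_singleton, List.prod_singleton,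
      mul_assoc, hstep n (Nat.lt_succ_self n), ← mul_assoc,
      ih (fun i hi => hstep i (hi.trans (Nat.lt_succ_self n))), mul_assoc]

lemma W_strip (hcover : ⋃₀ 𝒰 = Set.univ) {x y : X} {p q : Path x y} (F : p.Homotopy q)
    {s s' : I} (hss : s ≤ s') {n : ℕ} (hn : 0 < n)
    (hshort : ∀ i < n, ∃ U ∈ 𝒰, ∀ z w, z ∈ Set.Icc s s' →
      w ∈ Set.Icc (pt n i) (pt n (i+1)) → F (z, w) ∈ U) :
    W u (F.eval s) n = W u (F.eval s') n := by
  have tel := telescope (fun i => uext u (subp (F.eval s) (pt n i) (pt n (i+1))))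
    (fun i => uext u (subp (F.eval s') (pt n i) (pt n (i+1))))
    (fun j => uext u (vert F s s' (pt n j))) n (fun i hi => by
      obtain ⟨U, hU, hsq⟩ := hshort i hi
      exact uext_square F u hU hss (pt_mono (Nat.le_succ i)) hsq)
  have h0 : uext u (vert F s s' (pt n 0)) = 1 := by
    apply uext_const u hcover
    intro t
    rw [vert_apply, pt_zero]
    simp
  have h1 : uext u (vert F s s' (pt n n)) = 1 := by
    apply uext_const u hcover
    intro t
    rw [vert_apply, pt_self hn]
    simp
  rw [W, W]
  simp only [h0, h1, mul_one, one_mul] at tel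
  exact tel

lemma pt_dist {n i : ℕ} (hn : 0 < n) (hi : i < n) {t : I}
    (ht : t ∈ Set.Icc (pt n i) (pt n (i+1))) : dist t (pt n i) ≤ 1/(n:ℝ) := by
  have hn' : (0:ℝ) < n := by exact_mod_cast hn
  have h1 : ((pt n i : I) : ℝ) = (i:ℝ)/n := pt_coe hn hi.le
  have h2 : ((pt n (i+1) : I) : ℝ) = ((i:ℝ)+1)/n := by rw [pt_coe hn hi]; push_cast; ring
  have hl : ((pt n i : I) : ℝ) ≤ t := ht.1
  have hr : (t:ℝ) ≤ ((pt n (i+1) : I) : ℝ) := ht.2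
  rw [h1] at hl
  rw [h2] at hr
  rw [Subtype.dist_eq, Real.dist_eq, h1, abs_le]
  have key : ((i:ℝ)+1)/n = (i:ℝ)/n + 1/n := by ring
  constructor
  · have h0 : (0:ℝ) < 1/n := by positivity
    linarith
  · linarith

lemma usharp_homotopy_inv (hopen : ∀ U ∈ 𝒰, IsOpen U) (hcover : ⋃₀ 𝒰 = Set.univ)
    {x y : X} (p q : Path x y) (hpq : Path.Homotopic p q) : usharp u p = usharp u q := by
  obtain ⟨F⟩ := hpq
  obtain ⟨δ, hδ, hball⟩ := lebesgue_number_lemma_of_metric (s := (Set.univ : Set (I × I)))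
    (c := fun U : {U // U ∈ 𝒰} => ⇑F ⁻¹' (U : Set X)) isCompact_univ
    (fun U => (hopen U U.2).preimage (map_continuous F.toContinuousMap))
    (by
      intro z _
      have := hcover ▸ Set.mem_univ (F z)
      obtain ⟨U, hU, hz⟩ := this
      exact Set.mem_iUnion.mpr ⟨⟨U, hU⟩, hz⟩)
  obtain ⟨N0, hN0⟩ := exists_nat_one_div_lt hδ
  set N := N0 + 1 with hNdef
  have hNpos : 0 < N := Nat.succ_pos N0
  have hNr : (1:ℝ)/(N:ℝ) < δ := by
    rw [hNdef]
    push_cast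
    exact hN0
  -- every subsquare of the N-subdivision of the unit square is short
  have hsq : ∀ k < N, ∀ i < N, ∃ U ∈ 𝒰, ∀ z w, z ∈ Set.Icc (pt N k) (pt N (k+1)) →
      w ∈ Set.Icc (pt N i) (pt N (i+1)) → F (z, w) ∈ U := by
    intro k hk i hi
    obtain ⟨⟨U, hU⟩, hsub⟩ := hball (pt N k, pt N i) trivial
    refine ⟨U, hU, fun z w hz hw => hsub ?_⟩
    show (z, w) ∈ Metric.ball _ δ
    rw [Metric.mem_ball, Prod.dist_eq]
    exact lt_of_le_of_lt (max_le (pt_dist hNpos hk hz) (pt_dist hNpos hi hw)) hNr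
  -- the two boundary rows are fine
  have hfp : Fine 𝒰 p N := by
    intro i hi
    obtain ⟨U, hU, hPU⟩ := hsq 0 hNpos i hi
    refine ⟨U, hU, ?_⟩
    rintro _ ⟨t, ht, rfl⟩
    have : p t = F (0, t) := (F.apply_zero t).symm
    rw [this]
    refine hPU 0 t ⟨?_, ?_⟩ ht
    · exact le_of_eq (pt_zero N)
    · exact le_trans (le_of_eq (pt_zero N).symm) (pt_mono (Nat.zero_le 1))
  have hfq : Fine 𝒰 q N := by
    intro i hi
    obtain ⟨U, hU, hPU⟩ := hsq N0 (Nat.lt_succ_self N0) i hi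
    refine ⟨U, hU, ?_⟩
    rintro _ ⟨t, ht, rfl⟩
    have : q t = F (1, t) := (F.apply_one t).symm
    rw [this]
    refine hPU 1 t ⟨?_, ?_⟩ ht
    · exact le_trans (pt_mono (Nat.le_succ N0)) (le_of_eq (pt_self hNpos))
    · exact le_of_eq (pt_self hNpos).symm
  -- walk across the rows
  have hrow : ∀ k, k ≤ N → W u (F.eval (pt N 0)) N = W u (F.eval (pt N k)) N := by
    intro k
    induction k with
    | zero => intro _; rfl
    | succ k ih =>
      intro hk
      rw [ih (Nat.le_of_succ_le hk)]
      exact W_strip u hcover F (pt_mono (Nat.le_succ k)) hNpos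
        (fun i hi => hsq k (Nat.lt_of_succ_le hk) i hi)
  have hmain := hrow N le_rfl
  rw [pt_zero, pt_self hNpos, F.eval_zero, F.eval_one] at hmain
  rw [usharp_eq u hcover p hNpos hfp, usharp_eq u hcover q hNpos hfq]
  exact hmain

section Full

variable (v : Cocycle1 X Y G)

lemma cocycle_congr' {x y x' y' : X} (p : Path x y) (r : Path x' y') (h : ∀ t, p t = r t) :
    v.toFun p = v.toFun r := by
  have hx : x = x' := by rw [← p.source, ← r.source]; exact h 0
  have hy : y = y' := by rw [← p.target, ← r.target]; exact h 1
  subst hx; subst hy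
  rw [Path.ext (funext h)]

lemma cocycle_refl (x : X) : v.toFun (Path.refl x) = 1 := by
  have h := v.mul (Path.refl x) (Path.refl x)
  rw [Path.refl_trans_refl] at h
  have h2 : v.toFun (Path.refl x) * 1 = v.toFun (Path.refl x) * v.toFun (Path.refl x) := by
    rw [mul_one]; exact h
  exact (mul_left_cancel h2).symm

lemma cocycle_const {x y : X} (p : Path x y) (h : ∀ t, p t = x) : v.toFun p = 1 := by
  have hy : y = x := p.target.symm.trans (h 1)
  subst hy
  rw [show p = Path.refl y from Path.ext (funext h)]
  exact cocycle_refl v y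

lemma cocycle_chain {x y : X} (p : Path x y) (a b c : I) :
    v.toFun (subp p a c) = v.toFun (subp p a b) * v.toFun (subp p b c) := by
  have hmt : ((aff a b).trans (aff b c)).map p.continuous = (subp p a b).trans (subp p b c) :=
    Path.map_trans _ _ _
  have hom : Path.Homotopic (((aff a b).trans (aff b c)).map p.continuous)
      ((aff a c).map p.continuous) :=
    ⟨mapHtpy (strI ((aff a b).trans (aff b c)) (aff a c)) p.continuous⟩
  rw [hmt] at hom
  have h1 := v.homotopy_inv _ _ hom
  rw [show ((aff a c).map p.continuous) = subp p a c from rfl] at h1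
  rw [← h1, v.mul]

lemma cocycle_chain_list {x y : X} (p : Path x y) (c : ℕ → I) (m : ℕ) :
    v.toFun (subp p (c 0) (c m)) =
      ((List.range m).map (fun j => v.toFun (subp p (c j) (c (j+1))))).prod := by
  induction m with
  | zero =>
    simp only [List.range_zero, List.map_nil, List.prod_nil]
    exact cocycle_const v _ (fun t => subp_const p (c 0) t)
  | succ m ih =>
    rw [cocycle_chain v p (c 0) (c m) (c (m+1)), ih, List.range_succ, List.map_append,
      List.prod_append, List.map_singleton, List.prod_singleton]

lemma cocycle_eq_W {x y : X} (p : Path x y) {n : ℕ} (hn : 0 < n) :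
    v.toFun p = ((List.range n).map (fun i => v.toFun (subp p (pt n i) (pt n (i+1))))).prod := by
  have h := cocycle_chain_list v p (pt n) n
  rw [pt_zero, pt_self hn] at h
  rw [← h]
  apply cocycle_congr'
  intro t
  rw [subp_apply]
  exact (congrArg p (aff01 t)).symm

end Full

lemma short_ext {𝒰 : Set (Set X)} {Y : Set X} {G : Type} [Group G]
    (w₁ w₂ : ShortCocycle1 𝒰 Y G)
    (h : ∀ (x y : X) (p : Path x y) (hp : ∃ U ∈ 𝒰, Set.range p ⊆ U),
      w₁.toFun p hp = w₂.toFun p hp) : w₁ = w₂ := by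
  cases w₁ with | mk t1 a1 b1 c1 =>
  cases w₂ with | mk t2 a2 b2 c2 =>
  have ht : @t1 = @t2 := by
    funext x y p hp
    exact h x y p hp
  subst ht
  rfl

end
end Stmt3

/-- For an open cover 𝒰 of X, restriction of 1-cocycles of the pair (X,Y)
to short paths is a bijection onto the set of short 1-cocycles. -/
theorem statement3 (X : Type) [TopologicalSpace X] (𝒰 : Set (Set X))
    (hopen : ∀ U ∈ 𝒰, IsOpen U) (hcover : ⋃₀ 𝒰 = Set.univ)
    (Y : Set X) (G : Type) [Group G] :
    Function.Bijective
      (fun u : Cocycle1 X Y G => u.restrictShort 𝒰 : Cocycle1 X Y G → ShortCocycle1 𝒰 Y G) := by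
  constructor
  · -- injectivity
    intro u₁ u₂ h
    simp only at h
    have htf : ∀ (x y : X) (p : Path x y), (∃ U ∈ 𝒰, Set.range p ⊆ U) →
        u₁.toFun p = u₂.toFun p := by
      intro x y p hp
      have h1 := congrArg (fun w : ShortCocycle1 𝒰 Y G => w.toFun p hp) h
      exact h1
    have hall : ∀ (x y : X) (p : Path x y), u₁.toFun p = u₂.toFun p := by
      intro x y p
      obtain ⟨n, hn, hf⟩ := Stmt3.fine_exists hopen hcover p
      rw [Stmt3.cocycle_eq_W u₁ p hn, Stmt3.cocycle_eq_W u₂ p hn]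
      refine congrArg List.prod (List.map_congr_left ?_)
      intro i hi
      rw [List.mem_range] at hi
      obtain ⟨U, hU, hPU⟩ := hf i hi
      exact htf _ _ _
        ⟨U, hU, (Stmt3.subp_range p (Stmt3.pt_mono (Nat.le_succ i))).trans hPU⟩
    cases u₁ with | mk t1 a1 b1 c1 =>
    cases u₂ with | mk t2 a2 b2 c2 =>
    have ht : @t1 = @t2 := by
      funext x y p
      exact hall x y p
    subst ht
    rfl
  · -- surjectivity
    intro u
    refine ⟨⟨fun p => Stmt3.usharp u p,
      fun p hp => Stmt3.usharp_triv u hopen hcover p hp,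
      fun p q hpq => Stmt3.usharp_homotopy_inv u hopen hcover p q hpq,
      fun p q => Stmt3.usharp_mul u hopen hcover p q⟩, ?_⟩
    apply Stmt3.short_ext
    intro x y p hp
    exact Stmt3.usharp_short u hcover p hp
end

section
/- Let 𝒰 be an open covering of X and Y ⊆ X. The restriction map from the non-abelian cohomology set H¹(X,Y;G) to the short cohomology set H¹_𝒰(X,Y;G) is a bijection. -/
/-- Two 1-cocycles of (X,Y) are cohomologous if they differ by the action
(c • u)(p) = c(p 0) * u(p) * c(p 1)⁻¹ of a 0-cochain c trivial on Y. -/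
def Cocycle1.Cohom {X : Type} [TopologicalSpace X] {Y : Set X} {G : Type} [Group G]
    (u v : Cocycle1 X Y G) : Prop :=
  ∃ c : X → G, (∀ y ∈ Y, c y = 1) ∧
    ∀ {x y : X} (p : Path x y), v.toFun p = c x * u.toFun p * (c y)⁻¹

/-- Two short 1-cocycles are cohomologous if they differ by the action of a 0-cochain
trivial on Y (all 0-cochains are short). -/
def ShortCocycle1.Cohom {X : Type} [TopologicalSpace X] {𝒰 : Set (Set X)} {Y : Set X}
    {G : Type} [Group G] (u v : ShortCocycle1 𝒰 Y G) : Prop :=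
  ∃ c : X → G, (∀ y ∈ Y, c y = 1) ∧
    ∀ {x y : X} (p : Path x y) (hp : ∃ U ∈ 𝒰, Set.range p ⊆ U),
      v.toFun p hp = c x * u.toFun p hp * (c y)⁻¹

/-- The non-abelian cohomology set H¹(X,Y;G). -/
def H1full (X : Type) [TopologicalSpace X] (Y : Set X) (G : Type) [Group G] :=
  Quot (Cocycle1.Cohom (X := X) (Y := Y) (G := G))

/-- The short non-abelian cohomology set H¹_𝒰(X,Y;G). -/
def H1short {X : Type} [TopologicalSpace X] (𝒰 : Set (Set X)) (Y : Set X)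
    (G : Type) [Group G] :=
  Quot (ShortCocycle1.Cohom (𝒰 := 𝒰) (Y := Y) (G := G))


open Set unitInterval

noncomputable section
namespace S4
variable {X : Type} [TopologicalSpace X]

/-- affine reparametrization of `I` onto `[a,c]`. -/
def aff (a c : I) (h : a ≤ c) (t : I) : I :=
  ⟨(a : ℝ) + t * (c - a), by
    have hca : (0:ℝ) ≤ (c:ℝ) - a := by
      have : (a:ℝ) ≤ c := h
      linarith
    constructor
    · have := mul_nonneg t.2.1 hca
      have := a.2.1
      linarith
    · have h1 : (t:ℝ) * ((c:ℝ) - a) ≤ 1 * ((c:ℝ) - a) := by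
        apply mul_le_mul_of_nonneg_right t.2.2 hca
      have := c.2.2
      linarith⟩

@[simp] lemma aff_coe (a c : I) (h : a ≤ c) (t : I) :
    (aff a c h t : ℝ) = (a : ℝ) + t * (c - a) := rfl

lemma aff_continuous (a c : I) (h : a ≤ c) : Continuous (aff a c h) := by
  apply Continuous.subtype_mk
  fun_prop

@[simp] lemma aff_zero (a c : I) (h : a ≤ c) : aff a c h 0 = a := by
  apply Subtype.ext; simp

@[simp] lemma aff_one (a c : I) (h : a ≤ c) : aff a c h 1 = c := by
  apply Subtype.ext; simp

lemma aff_mono (a c : I) (h : a ≤ c) {t t' : I} (ht : t ≤ t') :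
    aff a c h t ≤ aff a c h t' := by
  have hca : (0:ℝ) ≤ (c:ℝ) - a := by
    have : (a:ℝ) ≤ c := h; linarith
  show (aff a c h t : ℝ) ≤ (aff a c h t' : ℝ)
  simp only [aff_coe]
  have : (t:ℝ) * ((c:ℝ) - a) ≤ (t':ℝ) * ((c:ℝ) - a) :=
    mul_le_mul_of_nonneg_right ht hca
  linarith

lemma aff_mem (a c : I) (h : a ≤ c) (t : I) : aff a c h t ∈ Icc a c := by
  constructor
  · have := aff_mono a c h (unitInterval.nonneg' (t := t))
    rwa [aff_zero] at this
  · have := aff_mono a c h (unitInterval.le_one' (t := t))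
    rwa [aff_one] at this

lemma range_aff (a c : I) (h : a ≤ c) : range (aff a c h) = Icc a c := by
  apply subset_antisymm
  · rintro _ ⟨t, rfl⟩; exact aff_mem a c h t
  · rintro w ⟨hw1, hw2⟩
    have h1 : (a:ℝ) ≤ w := hw1
    have h2 : (w:ℝ) ≤ c := hw2
    have hac : (a:ℝ) ≤ c := h
    rcases eq_or_lt_of_le hac with heq | hlt
    · refine ⟨0, ?_⟩
      apply Subtype.ext
      simp only [aff_coe]
      push_cast
      linarith
    · refine ⟨⟨((w:ℝ) - a) / ((c:ℝ) - a), ?_, ?_⟩, ?_⟩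
      · apply div_nonneg <;> linarith
      · rw [div_le_one (by linarith)]
        linarith
      · apply Subtype.ext
        simp only [aff_coe]
        rw [div_mul_cancel₀ _ (by linarith : (c:ℝ) - a ≠ 0)]
        ring

/-- Build a path from a continuous function on `I`. -/
def pathOf (f : I → X) (hf : Continuous f) : Path (f 0) (f 1) :=
  ⟨⟨f, hf⟩, rfl, rfl⟩

@[simp] lemma pathOf_apply (f : I → X) (hf : Continuous f) (t : I) :
    pathOf f hf t = f t := rfl

/-- The affine path in `I` from `a` to `c`. -/
def affPath (a c : I) (h : a ≤ c) : Path a c :=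
  (pathOf (aff a c h) (aff_continuous a c h)).cast
    (by rw [aff_zero]) (by rw [aff_one])

@[simp] lemma affPath_apply (a c : I) (h : a ≤ c) (t : I) :
    affPath a c h t = aff a c h t := by
  show (Path.cast _ _ _) t = _
  rw [Path.cast_coe]
  rfl

lemma range_affPath (a c : I) (h : a ≤ c) : range ⇑(affPath a c h) = Icc a c := by
  have : ⇑(affPath a c h) = aff a c h := funext fun t => affPath_apply a c h t
  rw [this, range_aff]

/-- The segment of a path `p` over `[a, c]`. -/
def seg {x y : X} (p : Path x y) (a c : I) (h : a ≤ c) : Path (p a) (p c) :=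
  (pathOf (fun t => p (aff a c h t)) (p.continuous.comp (aff_continuous a c h))).cast
    (by rw [aff_zero]) (by rw [aff_one])

@[simp] lemma seg_apply {x y : X} (p : Path x y) (a c : I) (h : a ≤ c) (t : I) :
    seg p a c h t = p (aff a c h t) := by
  show (Path.cast _ _ _) t = _
  rw [Path.cast_coe]
  rfl

lemma range_seg {x y : X} (p : Path x y) (a c : I) (h : a ≤ c) :
    range ⇑(seg p a c h) = p '' Icc a c := by
  have : ⇑(seg p a c h) = (fun t => p (aff a c h t)) := funext fun t => seg_apply p a c h t
  rw [this, show (fun t => p (aff a c h t)) = ⇑p ∘ aff a c h from rfl,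
    Set.range_comp, range_aff]

/-- Convex combination in `I`. -/
def mix (s u v : I) : I :=
  ⟨(1 - (s:ℝ)) * u + s * v, by
    constructor
    · have h1 : (0:ℝ) ≤ 1 - s := by have := s.2.2; linarith
      have := mul_nonneg h1 u.2.1
      have := mul_nonneg s.2.1 v.2.1
      linarith
    · have h1 : (0:ℝ) ≤ 1 - s := by have := s.2.2; linarith
      have h2 : (1 - (s:ℝ)) * u ≤ (1 - s) * 1 := mul_le_mul_of_nonneg_left u.2.2 h1
      have h3 : (s:ℝ) * v ≤ s * 1 := mul_le_mul_of_nonneg_left v.2.2 s.2.1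
      linarith⟩

@[simp] lemma mix_coe (s u v : I) : (mix s u v : ℝ) = (1 - (s:ℝ)) * u + s * v := rfl

@[simp] lemma mix_zero (u v : I) : mix 0 u v = u := by apply Subtype.ext; simp

@[simp] lemma mix_one (u v : I) : mix 1 u v = v := by apply Subtype.ext; simp

@[simp] lemma mix_self (s u : I) : mix s u u = u := by apply Subtype.ext; simp; ring

lemma mix_mem {a b u v : I} (s : I) (hu : u ∈ Icc a b) (hv : v ∈ Icc a b) :
    mix s u v ∈ Icc a b := by
  have h1 : (0:ℝ) ≤ 1 - s := by have := s.2.2; linarith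
  have hu1 : (a:ℝ) ≤ u := hu.1
  have hu2 : (u:ℝ) ≤ b := hu.2
  have hv1 : (a:ℝ) ≤ v := hv.1
  have hv2 : (v:ℝ) ≤ b := hv.2
  constructor
  · show (a:ℝ) ≤ mix s u v
    rw [mix_coe]
    nlinarith [s.2.1]
  · show (mix s u v : ℝ) ≤ b
    rw [mix_coe]
    nlinarith [s.2.1]

lemma Continuous.mix' {Z : Type*} [TopologicalSpace Z] {f g h : Z → I}
    (hf : Continuous f) (hg : Continuous g) (hh : Continuous h) :
    Continuous fun z => mix (f z) (g z) (h z) := by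
  apply Continuous.subtype_mk
  fun_prop

/-- The key homotopy construction: two paths which factor through a continuous map on
the square via parameter paths with the same endpoints, staying in a subrectangle,
are homotopic via a homotopy whose range is contained in the image of the rectangle. -/
lemma homSq (c : C(I × I, X)) {w₀ w₁ : I × I} (φ₀ φ₁ : Path w₀ w₁)
    (a₁ b₁ a₂ b₂ : I) (m₀ : range ⇑φ₀ ⊆ Icc a₁ b₁ ×ˢ Icc a₂ b₂)
    (m₁ : range ⇑φ₁ ⊆ Icc a₁ b₁ ×ˢ Icc a₂ b₂)
    {x' y' : X} {q₀ q₁ : Path x' y'} (hq₀ : ∀ t, q₀ t = c (φ₀ t))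
    (hq₁ : ∀ t, q₁ t = c (φ₁ t)) :
    ∃ F : q₀.Homotopy q₁, range ⇑F ⊆ c '' (Icc a₁ b₁ ×ˢ Icc a₂ b₂) := by
  set sg : I × I → I × I := fun st =>
    (mix st.1 (φ₀ st.2).1 (φ₁ st.2).1, mix st.1 (φ₀ st.2).2 (φ₁ st.2).2) with hsg
  have hc0 : Continuous (fun st : I × I => φ₀ st.2) :=
    φ₀.continuous.comp continuous_snd
  have hc1 : Continuous (fun st : I × I => φ₁ st.2) :=
    φ₁.continuous.comp continuous_snd
  have hsgcont : Continuous sg := by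
    apply Continuous.prodMk
    · exact Continuous.mix' continuous_fst (continuous_fst.comp hc0)
        (continuous_fst.comp hc1)
    · exact Continuous.mix' continuous_fst (continuous_snd.comp hc0)
        (continuous_snd.comp hc1)
  refine ⟨{ toFun := fun st => c (sg st)
            continuous_toFun := c.continuous.comp hsgcont
            map_zero_left := ?_
            map_one_left := ?_
            prop' := ?_ }, ?_⟩
  · intro t
    have : sg (0, t) = φ₀ t := by
      simp only [hsg, mix_zero]
    simp only [this]
    exact (hq₀ t).symm
  · intro t
    have : sg (1, t) = φ₁ t := by
      simp only [hsg, mix_one]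
    simp only [this]
    exact (hq₁ t).symm
  · intro s v hv
    have key : ∀ w : I, φ₀ w = φ₁ w → c (sg (s, w)) = q₀ w := by
      intro w hw
      have : sg (s, w) = φ₀ w := by
        simp only [hsg, hw, mix_self]
      rw [this, ← hq₀ w]
    rcases hv with hv | hv
    · subst hv
      show c (sg (s, 0)) = q₀ 0
      exact key 0 (by rw [φ₀.source, φ₁.source])
    · simp only [Set.mem_singleton_iff] at hv
      subst hv
      show c (sg (s, 1)) = q₀ 1
      exact key 1 (by rw [φ₀.target, φ₁.target])
  · rintro _ ⟨st, rfl⟩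
    refine ⟨sg st, ⟨?_, ?_⟩, rfl⟩
    · exact mix_mem st.1 (m₀ ⟨st.2, rfl⟩).1 (m₁ ⟨st.2, rfl⟩).1
    · exact mix_mem st.1 (m₀ ⟨st.2, rfl⟩).2 (m₁ ⟨st.2, rfl⟩).2

section ProdList
variable {G : Type} [Group G]

/-- Ordered product `f 0 * f 1 * ⋯ * f (n-1)`. -/
def prodList (n : ℕ) (f : ℕ → G) : G := ((List.range n).map f).prod

@[simp] lemma prodList_zero (f : ℕ → G) : prodList 0 f = 1 := rfl

lemma prodList_succ (n : ℕ) (f : ℕ → G) : prodList (n + 1) f = prodList n f * f n := by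
  simp [prodList, List.range_succ]

lemma prodList_succ' (n : ℕ) (f : ℕ → G) :
    prodList (n + 1) f = f 0 * prodList n (fun i => f (i + 1)) := by
  simp only [prodList, List.range_succ_eq_map, List.map_cons, List.map_map, List.prod_cons]
  rfl

lemma prodList_congr {n : ℕ} {f g : ℕ → G} (h : ∀ i < n, f i = g i) :
    prodList n f = prodList n g := by
  unfold prodList
  congr 1
  apply List.map_congr_left
  intro i hi
  exact h i (List.mem_range.mp hi)

lemma prodList_add (a b : ℕ) (f : ℕ → G) :
    prodList (a + b) f = prodList a f * prodList b (fun k => f (a + k)) := by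
  induction b with
  | zero => simp
  | succ b ih =>
      rw [← Nat.add_assoc, prodList_succ, ih, prodList_succ, mul_assoc]

lemma prodList_mul (n m : ℕ) (f : ℕ → G) :
    prodList (n * m) f = prodList n (fun i => prodList m (fun k => f (i * m + k))) := by
  induction n with
  | zero => simp
  | succ n ih =>
      rw [Nat.succ_mul, prodList_add, ih, prodList_succ]

lemma prodList_one (n : ℕ) {f : ℕ → G} (h : ∀ i < n, f i = 1) :
    prodList n f = 1 := by
  apply List.prod_eq_one
  intro x hx
  simp only [List.mem_map, List.mem_range] at hx
  obtain ⟨i, hi, rfl⟩ := hx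
  exact h i hi

lemma prodList_telescope {n : ℕ} {f g : ℕ → G} {v : ℕ → G}
    (h : ∀ i < n, f i = v i * g i * (v (i + 1))⁻¹) :
    prodList n f = v 0 * prodList n g * (v n)⁻¹ := by
  induction n with
  | zero => simp
  | succ n ih =>
      rw [prodList_succ, prodList_succ, ih (fun i hi => h i (Nat.lt_succ_of_lt hi)),
        h n (Nat.lt_succ_self n)]
      group

end ProdList

/-- The `i`-th subdivision point `i/n`, capped at `1`. -/
def ptI (n i : ℕ) : I :=
  ⟨min ((i : ℝ) / n) 1, ⟨le_min (by positivity) zero_le_one, min_le_right _ _⟩⟩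

@[simp] lemma ptI_coe (n i : ℕ) : (ptI n i : ℝ) = min ((i : ℝ) / n) 1 := rfl

lemma ptI_coe_eq {n i : ℕ} (hn : 0 < n) (hi : i ≤ n) : (ptI n i : ℝ) = (i : ℝ) / n := by
  rw [ptI_coe, min_eq_left]
  rw [div_le_one (by exact_mod_cast hn)]
  exact_mod_cast hi

lemma ptI_mono (n : ℕ) {i j : ℕ} (hij : i ≤ j) : ptI n i ≤ ptI n j := by
  show (ptI n i : ℝ) ≤ ptI n j
  rw [ptI_coe, ptI_coe]
  rcases Nat.eq_zero_or_pos n with rfl | hn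
  · simp
  · have hn' : (0:ℝ) < n := by exact_mod_cast hn
    apply min_le_min _ le_rfl
    exact (div_le_div_iff_of_pos_right hn').mpr (by exact_mod_cast hij)

lemma ptI_le_succ (n i : ℕ) : ptI n i ≤ ptI n (i + 1) := ptI_mono n (Nat.le_succ i)

@[simp] lemma ptI_zero (n : ℕ) : ptI n 0 = 0 := by
  apply Subtype.ext; simp

lemma ptI_self {n : ℕ} (hn : 0 < n) : ptI n n = 1 := by
  apply Subtype.ext
  rw [ptI_coe, div_self (by exact_mod_cast hn.ne' : (n:ℝ) ≠ 0), min_self]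
  rfl

/-- Concatenation of factorizations through a continuous map. -/
lemma trans_comp {Z : Type*} [TopologicalSpace Z] (c : C(Z, X)) {w₀ w₁ w₂ : Z}
    (P' : Path w₀ w₁) (Q' : Path w₁ w₂) {x y z : X} (P : Path x y) (Q : Path y z)
    (hP : ∀ t, P t = c (P' t)) (hQ : ∀ t, Q t = c (Q' t)) :
    ∀ t, (P.trans Q) t = c ((P'.trans Q') t) := by
  intro t
  rw [Path.trans_apply, Path.trans_apply]
  split_ifs with h
  · exact hP _
  · exact hQ _

/-- One-dimensional version of `homSq`. -/
lemma homI (c : C(I, X)) {d e : I} (φ₀ φ₁ : Path d e) (a b : I)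
    (m₀ : range ⇑φ₀ ⊆ Icc a b) (m₁ : range ⇑φ₁ ⊆ Icc a b)
    {x' y' : X} {q₀ q₁ : Path x' y'} (hq₀ : ∀ t, q₀ t = c (φ₀ t))
    (hq₁ : ∀ t, q₁ t = c (φ₁ t)) :
    ∃ F : q₀.Homotopy q₁, range ⇑F ⊆ c '' Icc a b := by
  set c' : C(I × I, X) := c.comp ⟨Prod.fst, continuous_fst⟩ with hc'
  set l : Path d e → Path ((d, 0) : I × I) ((e, 0) : I × I) := fun φ =>
    ⟨⟨fun t => (φ t, 0), (φ.continuous).prodMk continuous_const⟩,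
      by simp, by simp⟩ with hl
  have hm : ∀ (φ : Path d e), range ⇑φ ⊆ Icc a b →
      range ⇑(l φ) ⊆ Icc a b ×ˢ Icc (0 : I) 1 := by
    rintro φ hφ _ ⟨t, rfl⟩
    exact ⟨hφ ⟨t, rfl⟩, ⟨unitInterval.nonneg', unitInterval.le_one'⟩⟩
  obtain ⟨F, hF⟩ := homSq c' (l φ₀) (l φ₁) a b 0 1 (hm φ₀ m₀) (hm φ₁ m₁)
    (q₀ := q₀) (q₁ := q₁) (fun t => hq₀ t) (fun t => hq₁ t)
  refine ⟨F, hF.trans ?_⟩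
  rintro _ ⟨⟨s, t⟩, ⟨hs, _⟩, rfl⟩
  exact ⟨s, hs, rfl⟩

lemma range_eq_of_pointwise {x y x' y' : X} {p : Path x y} {q : Path x' y'}
    (h : ∀ t, p t = q t) : range ⇑p = range ⇑q := by
  have : ⇑p = ⇑q := funext h
  rw [this]

section Cocycles
variable {𝒰 : Set (Set X)} {Y : Set X} {G : Type} [Group G]

/-- Total function extension of a short cocycle (value `1` on non-short paths). -/
def STF (u : ShortCocycle1 𝒰 Y G) {x y : X} (p : Path x y) : G :=
  @dite _ _ (Classical.dec _) (fun h => u.toFun p h) (fun _ => 1)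

lemma STF_eq (u : ShortCocycle1 𝒰 Y G) {x y : X} (p : Path x y)
    (hp : ∃ U ∈ 𝒰, Set.range ⇑p ⊆ U) : STF u p = u.toFun p hp := dif_pos hp

lemma STF_congr (u : ShortCocycle1 𝒰 Y G) {x y x' y' : X} {p : Path x y} {q : Path x' y'}
    (h : ∀ t, p t = q t) : STF u p = STF u q := by
  have hx : x = x' := p.source.symm.trans ((h 0).trans q.source)
  have hy : y = y' := p.target.symm.trans ((h 1).trans q.target)
  subst hx; subst hy
  have : p = q := Path.ext (funext h)
  rw [this]

lemma STF_mul (u : ShortCocycle1 𝒰 Y G) {x y z : X} (p : Path x y) (q : Path y z)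
    (h : ∃ U ∈ 𝒰, Set.range ⇑(p.trans q) ⊆ U) :
    STF u (p.trans q) = STF u p * STF u q := by
  obtain ⟨U, hU, hr⟩ := h
  have hp : Set.range ⇑p ⊆ U := by
    refine subset_trans ?_ hr
    rw [Path.trans_range]
    exact subset_union_left
  have hq : Set.range ⇑q ⊆ U := by
    refine subset_trans ?_ hr
    rw [Path.trans_range]
    exact subset_union_right
  rw [STF_eq u _ ⟨U, hU, hr⟩, STF_eq u p ⟨U, hU, hp⟩, STF_eq u q ⟨U, hU, hq⟩]
  exact u.mul p q _ _ _

lemma STF_homotopy (u : ShortCocycle1 𝒰 Y G) {x y : X} {p q : Path x y}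
    (F : p.Homotopy q) (hF : ∃ U ∈ 𝒰, Set.range ⇑F ⊆ U) : STF u p = STF u q := by
  obtain ⟨U, hU, hr⟩ := hF
  have hp : Set.range ⇑p ⊆ U := by
    rintro _ ⟨t, rfl⟩
    have : F (0, t) = p t := F.toHomotopy.apply_zero t
    exact this ▸ hr ⟨(0, t), rfl⟩
  have hq : Set.range ⇑q ⊆ U := by
    rintro _ ⟨t, rfl⟩
    have : F (1, t) = q t := F.toHomotopy.apply_one t
    exact this ▸ hr ⟨(1, t), rfl⟩
  rw [STF_eq u p ⟨U, hU, hp⟩, STF_eq u q ⟨U, hU, hq⟩]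
  exact u.homotopy_inv p q F ⟨U, hU, hr⟩ _ _

lemma STF_refl (u : ShortCocycle1 𝒰 Y G) (x : X) (hx : ∃ U ∈ 𝒰, x ∈ U) :
    STF u (Path.refl x) = 1 := by
  obtain ⟨U, hU, hxU⟩ := hx
  have hshort : ∃ U' ∈ 𝒰, Set.range ⇑(Path.refl x) ⊆ U' :=
    ⟨U, hU, by rw [Path.refl_range]; exact singleton_subset_iff.2 hxU⟩
  have h2 : STF u ((Path.refl x).trans (Path.refl x)) =
      STF u (Path.refl x) * STF u (Path.refl x) := by
    apply STF_mul
    rw [Path.refl_trans_refl]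
    exact hshort
  rw [Path.refl_trans_refl] at h2
  apply mul_right_cancel (b := STF u (Path.refl x))
  rw [one_mul, ← h2]

end Cocycles

/-- The canonical homotopy between a segment and the concatenation of its two halves. -/
lemma seg_homotopy {x y : X} (p : Path x y) {a b c : I} (hab : a ≤ b) (hbc : b ≤ c) :
    ∃ F : (seg p a c (hab.trans hbc)).Homotopy ((seg p a b hab).trans (seg p b c hbc)),
      range ⇑F ⊆ ⇑p '' Icc a c := by
  have hq0 : ∀ t, seg p a c (hab.trans hbc) t =
      p.toContinuousMap (affPath a c (hab.trans hbc) t) := by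
    intro t; rw [seg_apply, affPath_apply]; rfl
  have hq1 : ∀ t, ((seg p a b hab).trans (seg p b c hbc)) t =
      p.toContinuousMap (((affPath a b hab).trans (affPath b c hbc)) t) := by
    apply trans_comp
    · intro t; rw [seg_apply, affPath_apply]; rfl
    · intro t; rw [seg_apply, affPath_apply]; rfl
  have m₀ : range ⇑(affPath a c (hab.trans hbc)) ⊆ Icc a c := by
    rw [range_affPath]
  have m₁ : range ⇑((affPath a b hab).trans (affPath b c hbc)) ⊆ Icc a c := by
    rw [Path.trans_range, range_affPath, range_affPath]
    exact union_subset (Icc_subset_Icc le_rfl hbc) (Icc_subset_Icc hab le_rfl)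
  exact homI p.toContinuousMap _ _ a c m₀ m₁ hq0 hq1

section Cocycles2
variable {𝒰 : Set (Set X)} {Y : Set X} {G : Type} [Group G]

/-- Splitting a short segment at an intermediate point. -/
lemma STF_split (u : ShortCocycle1 𝒰 Y G) {x y : X} (p : Path x y) (a b c : I)
    (hab : a ≤ b) (hbc : b ≤ c) (hS : ∃ U ∈ 𝒰, ⇑p '' Icc a c ⊆ U) :
    STF u (seg p a c (hab.trans hbc)) = STF u (seg p a b hab) * STF u (seg p b c hbc) := by
  obtain ⟨U, hU, hsub⟩ := hS
  obtain ⟨F, hF⟩ := seg_homotopy p hab hbc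
  have h1 : STF u (seg p a c (hab.trans hbc)) =
      STF u ((seg p a b hab).trans (seg p b c hbc)) :=
    STF_homotopy u F ⟨U, hU, hF.trans hsub⟩
  rw [h1]
  apply STF_mul
  refine ⟨U, hU, ?_⟩
  rw [Path.trans_range, range_seg, range_seg]
  exact union_subset
    ((image_mono (Icc_subset_Icc le_rfl hbc)).trans hsub)
    ((image_mono (Icc_subset_Icc hab le_rfl)).trans hsub)

/-- Splitting for a full cocycle (no shortness needed). -/
lemma full_split (v : Cocycle1 X Y G) {x y : X} (p : Path x y) (a b c : I)
    (hab : a ≤ b) (hbc : b ≤ c) :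
    v.toFun (seg p a c (hab.trans hbc)) = v.toFun (seg p a b hab) * v.toFun (seg p b c hbc) := by
  obtain ⟨F, -⟩ := seg_homotopy p hab hbc
  rw [v.homotopy_inv _ _ ⟨F⟩, v.mul]

end Cocycles2

lemma ptI_eq_one {n i : ℕ} (hn : 0 < n) (hni : n ≤ i) : ptI n i = 1 := by
  apply Subtype.ext
  rw [ptI_coe, min_eq_right]
  · rfl
  · rw [le_div_iff₀ (by exact_mod_cast hn), one_mul]
    exact_mod_cast hni

/-- Compatibility of iterated affine reparametrizations. -/
lemma aff_aff (a c : I) (hac : a ≤ c) (m k : ℕ)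
    (h' : aff a c hac (ptI (m+2) 1) ≤ c) :
    aff (aff a c hac (ptI (m+2) 1)) c h' (ptI (m+1) k) = aff a c hac (ptI (m+2) (k+1)) := by
  apply Subtype.ext
  have hm1 : (0:ℝ) < (m:ℝ) + 1 := by positivity
  have hm2 : (0:ℝ) < (m:ℝ) + 2 := by positivity
  have hb : ((aff a c hac (ptI (m+2) 1)) : ℝ) = (a:ℝ) + 1/((m:ℝ)+2) * ((c:ℝ) - a) := by
    rw [aff_coe, ptI_coe_eq (by omega) (by omega)]
    push_cast
    ring
  rcases le_or_gt k (m+1) with hk | hk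
  · simp only [aff_coe]
    rw [ptI_coe_eq (by omega) (by omega : 1 ≤ m + 2),
      ptI_coe_eq (by omega) (hk : k ≤ m + 1),
      ptI_coe_eq (by omega) (by omega : k + 1 ≤ m + 2)]
    push_cast
    field_simp
    ring
  · rw [ptI_eq_one (by omega) (by omega : m + 1 ≤ k),
      ptI_eq_one (by omega) (by omega : m + 2 ≤ k + 1), aff_one, aff_one]

section Iter
variable {G : Type} [Group G]

lemma Wseg_congr (W : ∀ {x y : X}, Path x y → G) {x y : X} (p : Path x y)
    {a c a' c' : I} (ha : a = a') (hc : c = c') (h : a ≤ c) (h' : a' ≤ c') :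
    W (seg p a c h) = W (seg p a' c' h') := by
  subst ha; subst hc; rfl

/-- Iterated subdivision of a segment into `m+1` equal pieces, for an abstract
multiplicative path functional. -/
lemma iter (W : ∀ {x y : X}, Path x y → G) (SS : ∀ {x y : X}, Path x y → I → I → Prop)
    (hsplit : ∀ {x y : X} (p : Path x y) (a b c : I) (hab : a ≤ b) (hbc : b ≤ c),
      SS p a c → W (seg p a c (hab.trans hbc)) = W (seg p a b hab) * W (seg p b c hbc))
    (hmono : ∀ {x y : X} (p : Path x y) {a c a' c' : I},
      SS p a c → a ≤ a' → a' ≤ c' → c' ≤ c → SS p a' c')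
    (m : ℕ) :
    ∀ {x y : X} (p : Path x y) (a c : I) (hac : a ≤ c), SS p a c →
      W (seg p a c hac) = prodList (m+1) (fun k =>
        W (seg p (aff a c hac (ptI (m+1) k)) (aff a c hac (ptI (m+1) (k+1)))
          (aff_mono a c hac (ptI_le_succ (m+1) k)))) := by
  induction m with
  | zero =>
      intro x y p a c hac _
      rw [prodList_succ, prodList_zero, one_mul]
      apply Wseg_congr
      · rw [ptI_zero, aff_zero]
      · rw [ptI_self Nat.one_pos, aff_one]
  | succ m ih =>
      intro x y p a c hac hSS
      set b := aff a c hac (ptI (m+2) 1) with hbdef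
      have hab : a ≤ b := by
        have := aff_mono a c hac (ptI_mono (m+2) (Nat.zero_le 1))
        rwa [ptI_zero, aff_zero] at this
      have hbc : b ≤ c := (aff_mem a c hac _).2
      have step1 : W (seg p a c hac) = W (seg p a b hab) * W (seg p b c hbc) := by
        rw [Wseg_congr W p (rfl : a = a) (rfl : c = c) hac (hab.trans hbc)]
        exact hsplit p a b c hab hbc hSS
      have hSSbc : SS p b c := hmono p hSS hab hbc le_rfl
      have ihbc := ih p b c hbc hSSbc
      rw [step1, ihbc]
      conv_rhs => rw [prodList_succ']
      congr 1
      · apply Wseg_congr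
        · rw [ptI_zero, aff_zero]
        · rfl
      · apply prodList_congr
        intro k hk
        apply Wseg_congr
        · exact aff_aff a c hac m k hbc
        · exact aff_aff a c hac m (k+1) hbc

end Iter

section Val
variable {𝒰 : Set (Set X)} {Y : Set X} {G : Type} [Group G]

/-- A uniform partition into `n` pieces is valid for `p` if each piece lies in a member
of the cover. -/
def Valid (𝒰 : Set (Set X)) {x y : X} (p : Path x y) (n : ℕ) : Prop :=
  0 < n ∧ ∀ i < n, ∃ U ∈ 𝒰, ⇑p '' Icc (ptI n i) (ptI n (i+1)) ⊆ U

/-- The product of the short-cocycle values on the pieces of the uniform `n`-partition. -/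
def val (u : ShortCocycle1 𝒰 Y G) {x y : X} (p : Path x y) (n : ℕ) : G :=
  prodList n (fun i => STF u (seg p (ptI n i) (ptI n (i+1)) (ptI_le_succ n i)))

lemma STF_iter (u : ShortCocycle1 𝒰 Y G) {x y : X} (p : Path x y) (a c : I) (hac : a ≤ c)
    (hS : ∃ U ∈ 𝒰, ⇑p '' Icc a c ⊆ U) (m : ℕ) :
    STF u (seg p a c hac) = prodList (m+1) (fun k =>
      STF u (seg p (aff a c hac (ptI (m+1) k)) (aff a c hac (ptI (m+1) (k+1)))
        (aff_mono a c hac (ptI_le_succ (m+1) k)))) := by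
  refine iter (fun {x y} p => STF u p)
    (fun {x y} p a c => ∃ U ∈ 𝒰, ⇑p '' Icc a c ⊆ U) ?_ ?_ m p a c hac hS
  · intro x' y' p' a' b' c' hab hbc hS'
    exact STF_split u p' a' b' c' hab hbc hS'
  · rintro x' y' p' a' c' a'' c'' ⟨U, hU, h⟩ h1 h2 h3
    exact ⟨U, hU, (image_mono (Icc_subset_Icc h1 h3)).trans h⟩

lemma full_iter (v : Cocycle1 X Y G) {x y : X} (p : Path x y) (a c : I) (hac : a ≤ c)
    (m : ℕ) :
    v.toFun (seg p a c hac) = prodList (m+1) (fun k =>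
      v.toFun (seg p (aff a c hac (ptI (m+1) k)) (aff a c hac (ptI (m+1) (k+1)))
        (aff_mono a c hac (ptI_le_succ (m+1) k)))) := by
  refine iter (fun {x y} p => v.toFun p) (fun {x y} _ _ _ => True) ?_ ?_ m p a c hac trivial
  · intro x' y' p' a' b' c' hab hbc _
    exact full_split v p' a' b' c' hab hbc
  · intro _ _ _ _ _ _ _ _ _ _ _
    trivial

lemma aff_ptI {n m : ℕ} (hn : 0 < n) (hm : 0 < m) {i k : ℕ} (hi : i < n) (hk : k ≤ m) :
    aff (ptI n i) (ptI n (i+1)) (ptI_le_succ n i) (ptI m k) = ptI (n*m) (i*m + k) := by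
  apply Subtype.ext
  have h1 : i * m + k ≤ n * m := by
    calc i * m + k ≤ i * m + m := by omega
    _ = (i+1) * m := by ring
    _ ≤ n * m := Nat.mul_le_mul_right m (by omega)
  rw [aff_coe, ptI_coe_eq hn (by omega : i ≤ n), ptI_coe_eq hn (by omega : i + 1 ≤ n),
    ptI_coe_eq hm hk, ptI_coe_eq (Nat.mul_pos hn hm) h1]
  have hn' : (n:ℝ) ≠ 0 := by exact_mod_cast hn.ne'
  have hm' : (m:ℝ) ≠ 0 := by exact_mod_cast hm.ne'
  push_cast
  field_simp
  ring

lemma val_refine (u : ShortCocycle1 𝒰 Y G) {x y : X} (p : Path x y) {n : ℕ}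
    (hv : Valid 𝒰 p n) {m : ℕ} (hm : 0 < m) : val u p (n * m) = val u p n := by
  obtain ⟨m', rfl⟩ : ∃ m', m = m' + 1 := ⟨m - 1, by omega⟩
  unfold val
  rw [prodList_mul]
  apply prodList_congr
  intro i hi
  rw [STF_iter u p (ptI n i) (ptI n (i+1)) (ptI_le_succ n i) (hv.2 i hi) m']
  apply prodList_congr
  intro k hk
  apply Wseg_congr (fun {x y} p => STF u p)
  · have := aff_ptI (n := n) (m := m'+1) hv.1 (Nat.succ_pos m') hi
      (by omega : k ≤ m' + 1)
    rw [this]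
  · have := aff_ptI (n := n) (m := m'+1) hv.1 (Nat.succ_pos m') hi
      (by omega : k + 1 ≤ m' + 1)
    rw [this, Nat.add_assoc]

lemma valid_refine {x y : X} {p : Path x y} {n : ℕ} (hv : Valid 𝒰 p n) {m : ℕ}
    (hm : 0 < m) : Valid 𝒰 p (n * m) := by
  refine ⟨Nat.mul_pos hv.1 hm, fun j hj => ?_⟩
  have hjm : j / m < n := Nat.div_lt_of_lt_mul (by rwa [Nat.mul_comm] at hj)
  obtain ⟨U, hU, hsub⟩ := hv.2 (j / m) hjm
  refine ⟨U, hU, (image_mono (Icc_subset_Icc ?_ ?_)).trans hsub⟩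
  · show (ptI n (j / m) : ℝ) ≤ ptI (n * m) j
    rw [ptI_coe, ptI_coe]
    apply min_le_min _ le_rfl
    have h1 : ((j / m : ℕ) : ℝ) * m ≤ (j : ℝ) := by
      exact_mod_cast Nat.div_mul_le_self j m
    rw [div_le_div_iff₀ (by exact_mod_cast hv.1)
      (by exact_mod_cast Nat.mul_pos hv.1 hm : (0:ℝ) < ((n * m : ℕ) : ℝ))]
    push_cast
    nlinarith [ (by exact_mod_cast hv.1 : (0:ℝ) < n) ]
  · show (ptI (n * m) (j + 1) : ℝ) ≤ ptI n (j / m + 1)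
    rw [ptI_coe, ptI_coe]
    apply min_le_min _ le_rfl
    have hdm := Nat.div_add_mod j m
    have hmod := Nat.mod_lt j hm
    have h2 : (j : ℕ) + 1 ≤ (j / m + 1) * m := by
      have he : (j / m + 1) * m = m * (j / m) + m := by ring
      rw [he]
      linarith
    rw [div_le_div_iff₀
      (by exact_mod_cast Nat.mul_pos hv.1 hm : (0:ℝ) < ((n * m : ℕ) : ℝ))
      (by exact_mod_cast hv.1)]
    have h2' : ((j:ℝ) + 1) ≤ ((j / m : ℕ) + 1) * m := by exact_mod_cast h2
    push_cast
    nlinarith [ (by exact_mod_cast hv.1 : (0:ℝ) < n) ]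

lemma val_eq (u : ShortCocycle1 𝒰 Y G) {x y : X} (p : Path x y) {n m : ℕ}
    (hn : Valid 𝒰 p n) (hm : Valid 𝒰 p m) : val u p n = val u p m := by
  have h1 : val u p (n * m) = val u p n := val_refine u p hn hm.1
  have h2 : val u p (m * n) = val u p m := val_refine u p hm hn.1
  rw [← h1, ← h2, Nat.mul_comm]

lemma exists_n_of_delta {δ : ℝ} (hδ : 0 < δ) : ∃ n : ℕ, 0 < n ∧ 1 / (n : ℝ) < δ := by
  obtain ⟨n, hn⟩ := exists_nat_gt (1 / δ)
  have hn0 : (0:ℝ) < n := lt_of_le_of_lt (by positivity) hn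
  refine ⟨n, by exact_mod_cast hn0, ?_⟩
  rw [div_lt_iff₀ hn0]
  rw [div_lt_iff₀ hδ] at hn
  linarith

lemma Icc_subset_ball {n i : ℕ} (hn : 0 < n) (hi : i < n) {δ : ℝ} (h : 1 / (n:ℝ) < δ) :
    Icc (ptI n i) (ptI n (i+1)) ⊆ Metric.ball (ptI n i) δ := by
  rintro t ⟨h1, h2⟩
  have h1' : (ptI n i : ℝ) ≤ t := h1
  have h2' : (t : ℝ) ≤ ptI n (i+1) := h2
  rw [Metric.mem_ball, Subtype.dist_eq, Real.dist_eq, abs_of_nonneg (by linarith)]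
  have e1 : (ptI n i : ℝ) = i / n := ptI_coe_eq hn (by omega)
  have e2 := ptI_coe_eq hn (by omega : i + 1 ≤ n)
  have hn' : (0:ℝ) < n := by exact_mod_cast hn
  rw [e1] at h1' ⊢
  rw [e2] at h2'
  push_cast at h2'
  have : ((i:ℝ)+1) / n - (i:ℝ)/n = 1 / n := by field_simp; ring
  linarith

lemma exists_valid (hopen : ∀ U ∈ 𝒰, IsOpen U) (hcover : ⋃₀ 𝒰 = Set.univ)
    {x y : X} (p : Path x y) : ∃ n, Valid 𝒰 p n := by
  obtain ⟨δ, hδ, hball⟩ := lebesgue_number_lemma_of_metric (s := (univ : Set I))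
    isCompact_univ (c := fun U : 𝒰 => ⇑p ⁻¹' (U : Set X))
    (fun U => (hopen U U.2).preimage p.continuous)
    (by
      intro t _
      have hmem : p t ∈ ⋃₀ 𝒰 := by rw [hcover]; exact mem_univ _
      obtain ⟨U, hU, hm⟩ := hmem
      exact mem_iUnion.2 ⟨⟨U, hU⟩, hm⟩)
  obtain ⟨n, hn, hnδ⟩ := exists_n_of_delta hδ
  refine ⟨n, hn, fun i hi => ?_⟩
  obtain ⟨U, hU⟩ := hball (ptI n i) (mem_univ _)
  refine ⟨U.1, U.2, ?_⟩
  rw [image_subset_iff]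
  exact (Icc_subset_ball hn hi hnδ).trans hU

lemma val_congr (u : ShortCocycle1 𝒰 Y G) {x y x' y' : X} {p : Path x y} {q : Path x' y'}
    (h : ∀ t, p t = q t) (n : ℕ) : val u p n = val u q n := by
  apply prodList_congr
  intro i _
  apply STF_congr
  intro t
  rw [seg_apply, seg_apply, h]

lemma valid_congr {x y x' y' : X} {p : Path x y} {q : Path x' y'}
    (h : ∀ t, p t = q t) {n : ℕ} (hv : Valid 𝒰 p n) : Valid 𝒰 q n := by
  refine ⟨hv.1, fun i hi => ?_⟩
  obtain ⟨U, hU, hsub⟩ := hv.2 i hi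
  refine ⟨U, hU, ?_⟩
  have : ⇑q = ⇑p := (funext h).symm
  rw [this]
  exact hsub

/-- The extension of a short cocycle to all paths. -/
def extFun (u : ShortCocycle1 𝒰 Y G) {x y : X} (p : Path x y) : G :=
  @dite _ (∃ n, Valid 𝒰 p n) (Classical.dec _) (fun h => val u p h.choose) (fun _ => 1)

lemma extFun_eq (u : ShortCocycle1 𝒰 Y G) {x y : X} {p : Path x y} {n : ℕ}
    (hn : Valid 𝒰 p n) : extFun u p = val u p n := by
  rw [extFun, dif_pos (⟨n, hn⟩ : ∃ n, Valid 𝒰 p n)]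
  exact val_eq u p (Exists.choose_spec (⟨n, hn⟩ : ∃ n, Valid 𝒰 p n)) hn

lemma extFun_congr (u : ShortCocycle1 𝒰 Y G) {x y x' y' : X} {p : Path x y} {q : Path x' y'}
    (h : ∀ t, p t = q t) : extFun u p = extFun u q := by
  by_cases hex : ∃ n, Valid 𝒰 p n
  · obtain ⟨n, hn⟩ := hex
    rw [extFun_eq u hn, extFun_eq u (valid_congr h hn)]
    exact val_congr u h n
  · rw [extFun, dif_neg hex, extFun, dif_neg]
    intro ⟨n, hn⟩
    exact hex ⟨n, valid_congr (fun t => (h t).symm) hn⟩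

section TransSeg
variable {x y z : X} (p : Path x y) (q : Path y z)

lemma ptI_double_coe {n i : ℕ} (hn : 0 < n) (hi : i ≤ n + n) :
    (ptI (n+n) i : ℝ) = i / (n + n) := by
  rw [ptI_coe_eq (by omega) hi]
  push_cast
  ring

lemma trans_seg_left {n i : ℕ} (hn : 0 < n) (hi : i < n) (t : I) :
    seg (p.trans q) (ptI (n+n) i) (ptI (n+n) (i+1)) (ptI_le_succ _ i) t
      = seg p (ptI n i) (ptI n (i+1)) (ptI_le_succ n i) t := by
  rw [seg_apply, seg_apply, Path.trans_apply]
  have hn' : (0:ℝ) < n := by exact_mod_cast hn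
  have hnn : (0:ℝ) < (n:ℝ) + n := by linarith
  have e0 : (ptI (n+n) i : ℝ) = i / (n+n) := ptI_double_coe hn (by omega)
  have e1 := ptI_double_coe (n := n) (i := i+1) hn (by omega)
  push_cast at e1
  have hs : ((aff (ptI (n+n) i) (ptI (n+n) (i+1)) (ptI_le_succ _ i) t : I) : ℝ)
      = ((i:ℝ) + t) / ((n:ℝ) + n) := by
    rw [aff_coe, e0, e1]
    push_cast
    field_simp
    try ring
  have hi1 : (i:ℝ) + 1 ≤ n := by exact_mod_cast hi
  have ht1 : (t:ℝ) ≤ 1 := t.2.2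
  have hhalf : ((aff (ptI (n+n) i) (ptI (n+n) (i+1)) (ptI_le_succ _ i) t : I) : ℝ) ≤ 1/2 := by
    rw [hs, div_le_iff₀ hnn]
    linarith
  rw [dif_pos hhalf]
  congr 1
  apply Subtype.ext
  show 2 * ((aff (ptI (n+n) i) (ptI (n+n) (i+1)) (ptI_le_succ _ i) t : I) : ℝ)
      = ((aff (ptI n i) (ptI n (i+1)) (ptI_le_succ n i) t : I) : ℝ)
  rw [hs, aff_coe, ptI_coe_eq hn (by omega : i ≤ n), ptI_coe_eq hn (by omega : i + 1 ≤ n)]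
  push_cast
  field_simp
  try ring

lemma trans_seg_right {n k : ℕ} (hn : 0 < n) (hk : k < n) (t : I) :
    seg (p.trans q) (ptI (n+n) (n+k)) (ptI (n+n) (n+k+1)) (ptI_le_succ _ (n+k)) t
      = seg q (ptI n k) (ptI n (k+1)) (ptI_le_succ n k) t := by
  rw [seg_apply, seg_apply, Path.trans_apply]
  have hn' : (0:ℝ) < n := by exact_mod_cast hn
  have hnn : (0:ℝ) < (n:ℝ) + n := by linarith
  have e0 : (ptI (n+n) (n+k) : ℝ) = ((n:ℝ)+k) / (n+n) := by
    rw [ptI_double_coe hn (by omega)]; push_cast; ring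
  have e1 : (ptI (n+n) (n+k+1) : ℝ) = ((n:ℝ)+k+1) / (n+n) := by
    rw [ptI_double_coe hn (by omega)]; push_cast; ring
  have hs : ((aff (ptI (n+n) (n+k)) (ptI (n+n) (n+k+1)) (ptI_le_succ _ (n+k)) t : I) : ℝ)
      = ((n:ℝ) + k + t) / ((n:ℝ) + n) := by
    rw [aff_coe, e0, e1]
    field_simp
    try ring
  have ht0 : (0:ℝ) ≤ t := t.2.1
  have ht1 : (t:ℝ) ≤ 1 := t.2.2
  have hrhs : ((aff (ptI n k) (ptI n (k+1)) (ptI_le_succ n k) t : I) : ℝ)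
      = ((k:ℝ) + t) / n := by
    rw [aff_coe, ptI_coe_eq hn (by omega : k ≤ n), ptI_coe_eq hn (by omega : k + 1 ≤ n)]
    push_cast
    field_simp
    try ring
  split_ifs with hhalf
  · -- boundary case : the parameter equals 1/2, so k = 0, t = 0
    rw [hs, div_le_iff₀ hnn] at hhalf
    have hk0 : (k:ℝ) + t ≤ 0 := by linarith
    have hkt : (k:ℝ) = 0 ∧ (t:ℝ) = 0 := by
      constructor <;> nlinarith [ht0, (by positivity : (0:ℝ) ≤ (k:ℝ))]
    have hp1 : ∀ w : I, (w:ℝ) = 1 →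
        p w = q (aff (ptI n k) (ptI n (k+1)) (ptI_le_succ n k) t) := by
      intro w hw
      rw [show w = 1 from Subtype.ext hw, p.target]
      have haff0 : (aff (ptI n k) (ptI n (k+1)) (ptI_le_succ n k) t : I) = 0 := by
        apply Subtype.ext
        show ((aff (ptI n k) (ptI n (k+1)) (ptI_le_succ n k) t : I) : ℝ) = 0
        rw [hrhs, hkt.1, hkt.2]
        simp
      rw [haff0, q.source]
    apply hp1
    show 2 * ((aff (ptI (n+n) (n+k)) (ptI (n+n) (n+k+1)) (ptI_le_succ _ (n+k)) t : I) : ℝ) = 1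
    rw [hs, hkt.1, hkt.2]
    field_simp
    ring
  · congr 1
    apply Subtype.ext
    show 2 * ((aff (ptI (n+n) (n+k)) (ptI (n+n) (n+k+1)) (ptI_le_succ _ (n+k)) t : I) : ℝ) - 1
        = ((aff (ptI n k) (ptI n (k+1)) (ptI_le_succ n k) t : I) : ℝ)
    rw [hs, hrhs]
    field_simp
    try ring

lemma valid_trans {n : ℕ} (hp : Valid 𝒰 p n) (hq : Valid 𝒰 q n) :
    Valid 𝒰 (p.trans q) (n + n) := by
  have hn := hp.1
  refine ⟨by omega, fun i hi => ?_⟩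
  rcases lt_or_ge i n with hlt | hge
  · obtain ⟨U, hU, hsub⟩ := hp.2 i hlt
    refine ⟨U, hU, ?_⟩
    have : ⇑(p.trans q) '' Icc (ptI (n+n) i) (ptI (n+n) (i+1))
        = range ⇑(seg (p.trans q) (ptI (n+n) i) (ptI (n+n) (i+1)) (ptI_le_succ _ i)) :=
      (range_seg _ _ _ _).symm
    rw [this, range_eq_of_pointwise (fun t => trans_seg_left p q hn hlt t), range_seg]
    exact hsub
  · obtain ⟨k, rfl⟩ : ∃ k, i = n + k := ⟨i - n, by omega⟩
    have hkn : k < n := by omega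
    obtain ⟨U, hU, hsub⟩ := hq.2 k hkn
    refine ⟨U, hU, ?_⟩
    have : ⇑(p.trans q) '' Icc (ptI (n+n) (n+k)) (ptI (n+n) (n+k+1))
        = range ⇑(seg (p.trans q) (ptI (n+n) (n+k)) (ptI (n+n) (n+k+1)) (ptI_le_succ _ (n+k))) :=
      (range_seg _ _ _ _).symm
    rw [this, range_eq_of_pointwise (fun t => trans_seg_right p q hn hkn t), range_seg]
    exact hsub

lemma extFun_mul (hopen : ∀ U ∈ 𝒰, IsOpen U) (hcover : ⋃₀ 𝒰 = Set.univ)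
    (u : ShortCocycle1 𝒰 Y G) :
    extFun u (p.trans q) = extFun u p * extFun u q := by
  obtain ⟨np, hnp⟩ := exists_valid hopen hcover p
  obtain ⟨nq, hnq⟩ := exists_valid hopen hcover q
  have hp : Valid 𝒰 p (np * nq) := valid_refine hnp hnq.1
  have hq : Valid 𝒰 q (np * nq) := by
    rw [Nat.mul_comm]
    exact valid_refine hnq hnp.1
  set n := np * nq with hndef
  have hn : 0 < n := hp.1
  rw [extFun_eq u (valid_trans p q hp hq), extFun_eq u hp, extFun_eq u hq]
  unfold val
  rw [prodList_add]
  congr 1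
  · apply prodList_congr
    intro i hi
    exact STF_congr u (fun t => trans_seg_left p q hn hi t)
  · apply prodList_congr
    intro k hk
    exact STF_congr u (fun t => trans_seg_right p q hn hk t)

end TransSeg

end Val

section Hom
variable {𝒰 : Set (Set X)} {Y : Set X} {G : Type} [Group G]
variable {x y : X} {p q : Path x y}

lemma homotopy_continuous (F : p.Homotopy q) : Continuous ⇑F :=
  F.toHomotopy.toContinuousMap.continuous

/-- A path homotopy as a bare continuous map on the square. -/
def Fcm (F : p.Homotopy q) : C(I × I, X) := ⟨⇑F, homotopy_continuous F⟩

@[simp] lemma Fcm_apply (F : p.Homotopy q) (w : I × I) : Fcm F w = F w := rfl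

/-- Horizontal segment of a homotopy. -/
def hsegF (F : p.Homotopy q) (s a c : I) (h : a ≤ c) : Path (F (s, a)) (F (s, c)) :=
  (pathOf (fun t => F (s, aff a c h t))
    ((homotopy_continuous F).comp (continuous_const.prodMk (aff_continuous a c h)))).cast
    (by rw [aff_zero]) (by rw [aff_one])

@[simp] lemma hsegF_apply (F : p.Homotopy q) (s a c : I) (h : a ≤ c) (t : I) :
    hsegF F s a c h t = F (s, aff a c h t) := by
  show (Path.cast _ _ _) t = _
  rw [Path.cast_coe]
  rfl

/-- Vertical segment of a homotopy. -/
def vsegF (F : p.Homotopy q) (a c : I) (h : a ≤ c) (s : I) : Path (F (a, s)) (F (c, s)) :=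
  (pathOf (fun t => F (aff a c h t, s))
    ((homotopy_continuous F).comp ((aff_continuous a c h).prodMk continuous_const))).cast
    (by rw [aff_zero]) (by rw [aff_one])

@[simp] lemma vsegF_apply (F : p.Homotopy q) (a c : I) (h : a ≤ c) (s t : I) :
    vsegF F a c h s t = F (aff a c h t, s) := by
  show (Path.cast _ _ _) t = _
  rw [Path.cast_coe]
  rfl

/-- Horizontal segment path inside the square `I × I`. -/
def sqH (s a c : I) (h : a ≤ c) : Path ((s, a) : I × I) (s, c) :=
  (pathOf (fun t => (s, aff a c h t)) (continuous_const.prodMk (aff_continuous a c h))).cast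
    (by rw [aff_zero]) (by rw [aff_one])

@[simp] lemma sqH_apply (s a c : I) (h : a ≤ c) (t : I) :
    sqH s a c h t = (s, aff a c h t) := by
  show (Path.cast _ _ _) t = _
  rw [Path.cast_coe]
  rfl

/-- Vertical segment path inside the square `I × I`. -/
def sqV (a c : I) (h : a ≤ c) (s : I) : Path ((a, s) : I × I) (c, s) :=
  (pathOf (fun t => (aff a c h t, s)) ((aff_continuous a c h).prodMk continuous_const)).cast
    (by rw [aff_zero]) (by rw [aff_one])

@[simp] lemma sqV_apply (a c : I) (h : a ≤ c) (s t : I) :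
    sqV a c h s t = (aff a c h t, s) := by
  show (Path.cast _ _ _) t = _
  rw [Path.cast_coe]
  rfl

lemma range_sqH_subset {s a c : I} (h : a ≤ c) {a₁ b₁ : I} (hs : s ∈ Icc a₁ b₁) :
    range ⇑(sqH s a c h) ⊆ Icc a₁ b₁ ×ˢ Icc a c := by
  rintro _ ⟨t, rfl⟩
  rw [sqH_apply]
  exact ⟨hs, aff_mem a c h t⟩

lemma range_sqV_subset {a c : I} (h : a ≤ c) {s a₂ b₂ : I} (hs : s ∈ Icc a₂ b₂) :
    range ⇑(sqV a c h s) ⊆ Icc a c ×ˢ Icc a₂ b₂ := by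
  rintro _ ⟨t, rfl⟩
  rw [sqV_apply]
  exact ⟨aff_mem a c h t, hs⟩

lemma row_step (u : ShortCocycle1 𝒰 Y G) (F : p.Homotopy q) {n : ℕ} (hn : 0 < n)
    (hcov : ∀ z : X, ∃ U ∈ 𝒰, z ∈ U)
    (hsq : ∀ j < n, ∀ i < n, ∃ U ∈ 𝒰,
      ⇑F '' (Icc (ptI n j) (ptI n (j+1)) ×ˢ Icc (ptI n i) (ptI n (i+1))) ⊆ U)
    (row : ℕ → Path x y) (hrow : ∀ j t, row j t = F (ptI n j, t))
    {j : ℕ} (hj : j < n) :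
    val u (row j) n = val u (row (j+1)) n := by
  have hjj : ptI n j ≤ ptI n (j+1) := ptI_le_succ n j
  have key : ∀ i < n,
      (fun i => STF u (hsegF F (ptI n j) (ptI n i) (ptI n (i+1)) (ptI_le_succ n i))) i
        = (fun i => STF u (vsegF F (ptI n j) (ptI n (j+1)) hjj (ptI n i))) i
          * (fun i => STF u (hsegF F (ptI n (j+1)) (ptI n i) (ptI n (i+1)) (ptI_le_succ n i))) i
          * ((fun i => STF u (vsegF F (ptI n j) (ptI n (j+1)) hjj (ptI n i))) (i+1))⁻¹ := by
    intro i hi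
    have hii : ptI n i ≤ ptI n (i+1) := ptI_le_succ n i
    obtain ⟨U, hU, hUsub⟩ := hsq j hj i hi
    have hq₀ : ∀ t, ((hsegF F (ptI n j) (ptI n i) (ptI n (i+1)) hii).trans
          (vsegF F (ptI n j) (ptI n (j+1)) hjj (ptI n (i+1)))) t
        = Fcm F (((sqH (ptI n j) (ptI n i) (ptI n (i+1)) hii).trans
          (sqV (ptI n j) (ptI n (j+1)) hjj (ptI n (i+1)))) t) := by
      apply trans_comp
      · intro t; rw [hsegF_apply, sqH_apply, Fcm_apply]
      · intro t; rw [vsegF_apply, sqV_apply, Fcm_apply]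
    have hq₁ : ∀ t, ((vsegF F (ptI n j) (ptI n (j+1)) hjj (ptI n i)).trans
          (hsegF F (ptI n (j+1)) (ptI n i) (ptI n (i+1)) hii)) t
        = Fcm F (((sqV (ptI n j) (ptI n (j+1)) hjj (ptI n i)).trans
          (sqH (ptI n (j+1)) (ptI n i) (ptI n (i+1)) hii)) t) := by
      apply trans_comp
      · intro t; rw [vsegF_apply, sqV_apply, Fcm_apply]
      · intro t; rw [hsegF_apply, sqH_apply, Fcm_apply]
    have m₀ : range ⇑((sqH (ptI n j) (ptI n i) (ptI n (i+1)) hii).trans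
          (sqV (ptI n j) (ptI n (j+1)) hjj (ptI n (i+1))))
        ⊆ Icc (ptI n j) (ptI n (j+1)) ×ˢ Icc (ptI n i) (ptI n (i+1))  := by
      rw [Path.trans_range]
      exact union_subset (range_sqH_subset hii ⟨le_rfl, hjj⟩)
        (range_sqV_subset hjj ⟨hii, le_rfl⟩)
    have m₁ : range ⇑((sqV (ptI n j) (ptI n (j+1)) hjj (ptI n i)).trans
          (sqH (ptI n (j+1)) (ptI n i) (ptI n (i+1)) hii))
        ⊆ Icc (ptI n j) (ptI n (j+1)) ×ˢ Icc (ptI n i) (ptI n (i+1))  := by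
      rw [Path.trans_range]
      exact union_subset (range_sqV_subset hjj ⟨le_rfl, hii⟩)
        (range_sqH_subset hii ⟨hjj, le_rfl⟩)
    obtain ⟨H, hH⟩ := homSq (Fcm F) _ _ (ptI n j) (ptI n (j+1)) (ptI n i) (ptI n (i+1))
      m₀ m₁ hq₀ hq₁
    have hT0 : range ⇑((hsegF F (ptI n j) (ptI n i) (ptI n (i+1)) hii).trans
        (vsegF F (ptI n j) (ptI n (j+1)) hjj (ptI n (i+1)))) ⊆ U := by
      rintro _ ⟨t, rfl⟩
      rw [hq₀ t]
      exact hUsub ⟨_, m₀ ⟨t, rfl⟩, rfl⟩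
    have hT1 : range ⇑((vsegF F (ptI n j) (ptI n (j+1)) hjj (ptI n i)).trans
        (hsegF F (ptI n (j+1)) (ptI n i) (ptI n (i+1)) hii)) ⊆ U := by
      rintro _ ⟨t, rfl⟩
      rw [hq₁ t]
      exact hUsub ⟨_, m₁ ⟨t, rfl⟩, rfl⟩
    have e1 : STF u ((hsegF F (ptI n j) (ptI n i) (ptI n (i+1)) hii).trans
          (vsegF F (ptI n j) (ptI n (j+1)) hjj (ptI n (i+1))))
        = STF u ((vsegF F (ptI n j) (ptI n (j+1)) hjj (ptI n i)).trans
          (hsegF F (ptI n (j+1)) (ptI n i) (ptI n (i+1)) hii)) :=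
      STF_homotopy u H ⟨U, hU, hH.trans hUsub⟩
    rw [STF_mul u _ _ ⟨U, hU, hT0⟩, STF_mul u _ _ ⟨U, hU, hT1⟩] at e1
    exact eq_mul_inv_of_mul_eq e1
  have hval_j : val u (row j) n
      = prodList n (fun i => STF u (hsegF F (ptI n j) (ptI n i) (ptI n (i+1)) (ptI_le_succ n i))) := by
    apply prodList_congr
    intro i _
    apply STF_congr
    intro t
    rw [seg_apply, hrow, hsegF_apply]
  have hval_j1 : val u (row (j+1)) n
      = prodList n (fun i => STF u (hsegF F (ptI n (j+1)) (ptI n i) (ptI n (i+1)) (ptI_le_succ n i))) := by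
    apply prodList_congr
    intro i _
    apply STF_congr
    intro t
    rw [seg_apply, hrow, hsegF_apply]
  rw [hval_j, hval_j1, prodList_telescope key]
  have hv0 : STF u (vsegF F (ptI n j) (ptI n (j+1)) hjj (ptI n 0)) = 1 := by
    rw [STF_congr u (q := Path.refl x) (fun t => by
      rw [vsegF_apply, ptI_zero]
      show F (_, 0) = _
      rw [Path.Homotopy.source, Path.refl_apply])]
    exact STF_refl u x (hcov x)
  have hvn : STF u (vsegF F (ptI n j) (ptI n (j+1)) hjj (ptI n n)) = 1 := by
    rw [STF_congr u (q := Path.refl y) (fun t => by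
      rw [vsegF_apply, ptI_self hn]
      show F (_, 1) = _
      rw [Path.Homotopy.target, Path.refl_apply])]
    exact STF_refl u y (hcov y)
  rw [hv0, hvn]
  simp

lemma extFun_homotopy_inv (hopen : ∀ U ∈ 𝒰, IsOpen U) (hcover : ⋃₀ 𝒰 = Set.univ)
    (u : ShortCocycle1 𝒰 Y G) (h : Path.Homotopic p q) : extFun u p = extFun u q := by
  obtain ⟨F⟩ := h
  have hcov : ∀ z : X, ∃ U ∈ 𝒰, z ∈ U := by
    intro z
    have : z ∈ ⋃₀ 𝒰 := by rw [hcover]; trivial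
    obtain ⟨U, hU, hz⟩ := this
    exact ⟨U, hU, hz⟩
  obtain ⟨δ, hδ, hball⟩ := lebesgue_number_lemma_of_metric (s := (univ : Set (I × I)))
    isCompact_univ (c := fun U : 𝒰 => ⇑F ⁻¹' (U : Set X))
    (fun U => (hopen U U.2).preimage (homotopy_continuous F))
    (by
      intro w _
      obtain ⟨U, hU, hz⟩ := hcov (F w)
      exact mem_iUnion.2 ⟨⟨U, hU⟩, hz⟩)
  obtain ⟨n, hn, hnδ⟩ := exists_n_of_delta hδ
  have hsq : ∀ j < n, ∀ i < n, ∃ U ∈ 𝒰,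
      ⇑F '' (Icc (ptI n j) (ptI n (j+1)) ×ˢ Icc (ptI n i) (ptI n (i+1))) ⊆ U := by
    intro j hj i hi
    obtain ⟨U, hU⟩ := hball (ptI n j, ptI n i) (mem_univ _)
    refine ⟨U.1, U.2, ?_⟩
    rw [image_subset_iff]
    refine subset_trans ?_ hU
    rintro ⟨s, t⟩ ⟨hs, ht⟩
    rw [Metric.mem_ball, Prod.dist_eq]
    exact max_lt (Metric.mem_ball.mp (Icc_subset_ball hn hj hnδ hs))
      (Metric.mem_ball.mp (Icc_subset_ball hn hi hnδ ht))
  set row : ℕ → Path x y := fun j =>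
    { toFun := fun t => F (ptI n j, t)
      continuous_toFun := (homotopy_continuous F).comp (continuous_const.prodMk continuous_id)
      source' := Path.Homotopy.source F (ptI n j)
      target' := Path.Homotopy.target F (ptI n j) } with hrowdef
  have hrow : ∀ j t, row j t = F (ptI n j, t) := fun _ _ => rfl
  have hvalid : ∀ j ≤ n, Valid 𝒰 (row j) n := by
    intro j hjn
    refine ⟨hn, fun i hi => ?_⟩
    have hj'n : min j (n-1) < n := by omega
    obtain ⟨U, hU, hsub⟩ := hsq (min j (n-1)) hj'n i hi
    refine ⟨U, hU, ?_⟩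
    rintro _ ⟨t, ht, rfl⟩
    apply hsub
    refine ⟨(ptI n j, t), ⟨⟨ptI_mono n (by omega), ptI_mono n (by omega)⟩, ht⟩, (hrow j t).symm⟩
  have hstep : ∀ j < n, val u (row j) n = val u (row (j+1)) n :=
    fun j hj => row_step u F hn hcov hsq row hrow hj
  have hchain : ∀ j, j ≤ n → val u (row 0) n = val u (row j) n := by
    intro j
    induction j with
    | zero => intro _; rfl
    | succ j ih => intro hj1; exact (ih (by omega)).trans (hstep j (by omega))
  calc extFun u p = extFun u (row 0) := extFun_congr u (fun t => by
        rw [hrow, ptI_zero]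
        exact (F.toHomotopy.apply_zero t).symm)
    _ = val u (row 0) n := extFun_eq u (hvalid 0 (by omega))
    _ = val u (row n) n := hchain n le_rfl
    _ = extFun u (row n) := (extFun_eq u (hvalid n le_rfl)).symm
    _ = extFun u q := extFun_congr u (fun t => by
        rw [hrow, ptI_self hn]
        exact F.toHomotopy.apply_one t)

end Hom

section Final
variable {𝒰 : Set (Set X)} {Y : Set X} {G : Type} [Group G]

lemma extFun_triv (hopen : ∀ U ∈ 𝒰, IsOpen U) (hcover : ⋃₀ 𝒰 = Set.univ)
    (u : ShortCocycle1 𝒰 Y G) {x y : X} (p : Path x y) (hY : range ⇑p ⊆ Y) :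
    extFun u p = 1 := by
  obtain ⟨n, hv⟩ := exists_valid hopen hcover p
  rw [extFun_eq u hv]
  apply prodList_one
  intro i hi
  obtain ⟨U, hU, hsub⟩ := hv.2 i hi
  have hshort : ∃ U' ∈ 𝒰, Set.range ⇑(seg p (ptI n i) (ptI n (i+1)) (ptI_le_succ n i)) ⊆ U' :=
    ⟨U, hU, by rw [range_seg]; exact hsub⟩
  rw [STF_eq u _ hshort]
  apply u.triv
  rw [range_seg]
  exact (image_subset_range _ _).trans hY

/-- The extension of a short cocycle is a full cocycle. -/
def extCocycle (hopen : ∀ U ∈ 𝒰, IsOpen U) (hcover : ⋃₀ 𝒰 = Set.univ)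
    (u : ShortCocycle1 𝒰 Y G) : Cocycle1 X Y G where
  toFun p := extFun u p
  triv p h := extFun_triv hopen hcover u p h
  homotopy_inv p q h := extFun_homotopy_inv hopen hcover u h
  mul p q := extFun_mul p q hopen hcover u

lemma aff_zero_one (h : (0:I) ≤ 1) (t : I) : aff 0 1 h t = t := by
  apply Subtype.ext
  rw [aff_coe]
  simp

lemma extFun_short (u : ShortCocycle1 𝒰 Y G) {x y : X} (p : Path x y)
    (hp : ∃ U ∈ 𝒰, Set.range ⇑p ⊆ U) : extFun u p = u.toFun p hp := by
  obtain ⟨U, hU, hr⟩ := hp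
  have hv : Valid 𝒰 p 1 := by
    refine ⟨Nat.one_pos, fun i _ => ⟨U, hU, ?_⟩⟩
    exact (image_subset_range _ _).trans hr
  rw [extFun_eq u hv]
  show prodList 1 _ = _
  rw [prodList_succ, prodList_zero, one_mul]
  have hpt : ∀ t, seg p (ptI 1 0) (ptI 1 1) (ptI_le_succ 1 0) t = p t := by
    intro t
    rw [seg_apply]
    congr 1
    apply Subtype.ext
    rw [aff_coe]
    have e0 : (ptI 1 0 : ℝ) = 0 := by rw [ptI_zero]; rfl
    have e1 : (ptI 1 1 : ℝ) = 1 := by rw [ptI_self Nat.one_pos]; rfl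
    rw [e0, e1]
    ring
  rw [STF_congr u hpt]
  exact STF_eq u p ⟨U, hU, hr⟩

lemma full_congr (v : Cocycle1 X Y G) {x y x' y' : X} {p : Path x y} {q : Path x' y'}
    (h : ∀ t, p t = q t) : v.toFun p = v.toFun q := by
  have hx : x = x' := p.source.symm.trans ((h 0).trans q.source)
  have hy : y = y' := p.target.symm.trans ((h 1).trans q.target)
  subst hx; subst hy
  have : p = q := Path.ext (funext h)
  rw [this]

lemma full_val (v : Cocycle1 X Y G) {x y : X} (p : Path x y) {n : ℕ} (hn : 0 < n) :
    v.toFun p = prodList n (fun i => v.toFun (seg p (ptI n i) (ptI n (i+1)) (ptI_le_succ n i))) := by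
  obtain ⟨m, rfl⟩ : ∃ m, n = m + 1 := ⟨n - 1, by omega⟩
  have h01 : (0:I) ≤ 1 := zero_le_one
  have e : v.toFun p = v.toFun (seg p 0 1 h01) :=
    full_congr v (fun t => by rw [seg_apply, aff_zero_one])
  rw [e, full_iter v p 0 1 h01 m]
  apply prodList_congr
  intro k _
  apply Wseg_congr (fun {x y} p => v.toFun p)
  · exact aff_zero_one h01 (ptI (m+1) k)
  · exact aff_zero_one h01 (ptI (m+1) (k+1))

lemma shortCohom_equiv :
    Equivalence (ShortCocycle1.Cohom (𝒰 := 𝒰) (Y := Y) (G := G)) := by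
  constructor
  · intro u
    exact ⟨fun _ => 1, fun _ _ => rfl, fun p hp => by simp⟩
  · rintro u v ⟨c, hc, hrel⟩
    refine ⟨fun z => (c z)⁻¹, fun z hz => by simp only []; rw [hc z hz]; simp, ?_⟩
    intro x y p hp
    rw [hrel p hp]
    group
  · rintro u v w ⟨c, hc, h1⟩ ⟨d, hd, h2⟩
    refine ⟨fun z => d z * c z, fun z hz => by simp only []; rw [hc z hz, hd z hz, mul_one], ?_⟩
    intro x y p hp
    rw [h2 p hp, h1 p hp]
    group

end Final
end S4

/-- For an open cover 𝒰 of X, the restriction map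
H¹(X,Y;G) → H¹_𝒰(X,Y;G) induced by restricting cocycles to short paths is a bijection. -/
theorem statement4 (X : Type) [TopologicalSpace X] (𝒰 : Set (Set X))
    (hopen : ∀ U ∈ 𝒰, IsOpen U) (hcover : ⋃₀ 𝒰 = Set.univ)
    (Y : Set X) (G : Type) [Group G] :
    ∃ Φ : H1full X Y G → H1short 𝒰 Y G,
      (∀ u : Cocycle1 X Y G, Φ (Quot.mk _ u) = Quot.mk _ (u.restrictShort 𝒰)) ∧
      Function.Bijective Φ := by
  classical
  have hR : ∀ u v : Cocycle1 X Y G, u.Cohom v →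
      (u.restrictShort 𝒰).Cohom (v.restrictShort 𝒰) := by
    rintro u v ⟨c, hc, hrel⟩
    exact ⟨c, hc, fun p hp => hrel p⟩
  refine ⟨Quot.map (fun u => u.restrictShort 𝒰) hR, fun u => rfl, ?_, ?_⟩
  · -- injectivity
    intro a b hab
    obtain ⟨u, rfl⟩ := Quot.exists_rep a
    obtain ⟨v, rfl⟩ := Quot.exists_rep b
    have h1 : Quot.mk _ (u.restrictShort 𝒰) = Quot.mk _ (v.restrictShort 𝒰) := hab
    have h2 : (u.restrictShort 𝒰).Cohom (v.restrictShort 𝒰) :=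
      (S4.shortCohom_equiv.eqvGen_iff).mp (Quot.eqvGen_exact h1)
    obtain ⟨c, hc, hrel⟩ := h2
    apply Quot.sound
    refine ⟨c, hc, ?_⟩
    intro x y p
    obtain ⟨n, hv⟩ := S4.exists_valid hopen hcover p
    rw [S4.full_val v p hv.1, S4.full_val u p hv.1]
    have hx0 : p (S4.ptI n 0) = x := by rw [S4.ptI_zero]; exact p.source
    have hy1 : p (S4.ptI n n) = y := by rw [S4.ptI_self hv.1]; exact p.target
    have tel := S4.prodList_telescope (v := fun i => c (p (S4.ptI n i)))
      (f := fun i => v.toFun (S4.seg p (S4.ptI n i) (S4.ptI n (i+1)) (S4.ptI_le_succ n i)))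
      (g := fun i => u.toFun (S4.seg p (S4.ptI n i) (S4.ptI n (i+1)) (S4.ptI_le_succ n i)))
      (by
        intro i hi
        obtain ⟨U, hU, hsub⟩ := hv.2 i hi
        have hshort : ∃ U' ∈ 𝒰,
            Set.range ⇑(S4.seg p (S4.ptI n i) (S4.ptI n (i+1)) (S4.ptI_le_succ n i)) ⊆ U' :=
          ⟨U, hU, by rw [S4.range_seg]; exact hsub⟩
        exact hrel _ hshort)
    beta_reduce at tel
    rw [hx0, hy1] at tel
    exact tel
  · -- surjectivity
    intro b
    obtain ⟨u, rfl⟩ := Quot.exists_rep b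
    refine ⟨Quot.mk _ (S4.extCocycle hopen hcover u), ?_⟩
    show Quot.mk _ ((S4.extCocycle hopen hcover u).restrictShort 𝒰) = Quot.mk _ u
    apply Quot.sound
    refine ⟨fun _ => 1, fun _ _ => rfl, ?_⟩
    intro x y p hp
    show u.toFun p hp = 1 * ((S4.extCocycle hopen hcover u).restrictShort 𝒰).toFun p hp * 1⁻¹
    rw [one_mul, inv_one, mul_one]
    exact (S4.extFun_short u p hp).symm
end
end

section
/- Suppose X = U ∪ V where U, V are path-connected open subsets, U ∩ V is path-connected, and b ∈ U ∩ V. Then the commutative square of restriction maps H¹(X,b;G) → H¹(U,b;G), H¹(X,b;G) → H¹(V,b;G), H¹(U,b;G) → H¹(U∩V,b;G), H¹(V,b;G) → H¹(U∩V,b;G) is cartesian: H¹(X,b;G) maps bijectively onto the fibered product H¹(U,b;G) ×_{H¹(U∩V,b;G)} H¹(V,b;G). -/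
open unitInterval Set

namespace VK

variable {G : Type} [Group G]

/-- ordered product `f 0 * f 1 * ⋯ * f (n-1)` in a possibly noncommutative group -/
def prodRange (f : ℕ → G) (n : ℕ) : G := ((List.range n).map f).prod

@[simp] lemma prodRange_zero (f : ℕ → G) : prodRange f 0 = 1 := rfl

@[simp] lemma prodRange_succ (f : ℕ → G) (n : ℕ) :
    prodRange f (n + 1) = prodRange f n * f n := by
  simp [prodRange, List.range_succ]

lemma prodRange_congr {f g : ℕ → G} {n : ℕ} (h : ∀ i < n, f i = g i) :
    prodRange f n = prodRange g n := by
  induction n with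
  | zero => rfl
  | succ n ih =>
    rw [prodRange_succ, prodRange_succ, ih (fun i hi => h i (by omega)), h n (by omega)]

lemma prodRange_add (f : ℕ → G) (m n : ℕ) :
    prodRange f (m + n) = prodRange f m * prodRange (fun i => f (m + i)) n := by
  induction n with
  | zero => simp
  | succ n ih => rw [← Nat.add_assoc, prodRange_succ, ih, prodRange_succ, mul_assoc]

/-- convex combination in the unit interval -/
def mix (r s t : I) : I :=
  ⟨(1 - (r : ℝ)) * s + r * t, by
    constructor
    · nlinarith [r.2.1, r.2.2, s.2.1, s.2.2, t.2.1, t.2.2]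
    · nlinarith [r.2.1, r.2.2, s.2.1, s.2.2, t.2.1, t.2.2]⟩

@[simp] lemma mix_coe (r s t : I) : (mix r s t : ℝ) = (1 - (r : ℝ)) * s + r * t := rfl

@[simp] lemma mix_zero (s t : I) : mix 0 s t = s := by
  apply Subtype.ext; simp

@[simp] lemma mix_one (s t : I) : mix 1 s t = t := by
  apply Subtype.ext; simp

@[simp] lemma mix_self (r s : I) : mix r s s = s := by
  apply Subtype.ext; simp [mix]; ring

lemma mix_mem_Icc {a b s t : I} (r : I) (ha : a ∈ Icc s t) (hb : b ∈ Icc s t) :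
    mix r a b ∈ Icc s t := by
  obtain ⟨ha1, ha2⟩ := ha; obtain ⟨hb1, hb2⟩ := hb
  rw [← Subtype.coe_le_coe] at *
  constructor <;> rw [← Subtype.coe_le_coe] <;> simp only [mix_coe] <;>
    nlinarith [r.2.1, r.2.2]

lemma mix_mem_Icc' {s t : I} (r : I) (hst : s ≤ t) : mix r s t ∈ Icc s t :=
  mix_mem_Icc r (left_mem_Icc.2 hst) (right_mem_Icc.2 hst)

lemma exists_mix {s t m : I} (hst : s ≤ t) (hm : m ∈ Icc s t) : ∃ r, mix r s t = m := by
  rcases eq_or_lt_of_le hst with h | h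
  · subst h
    exact ⟨0, by simpa using (le_antisymm hm.2 hm.1).symm⟩
  · have hlt : (0:ℝ) < (t : ℝ) - s := by
      have := Subtype.coe_lt_coe.2 h; linarith
    refine ⟨⟨((m:ℝ) - s)/((t:ℝ) - s), ?_, ?_⟩, ?_⟩
    · have h1 := Subtype.coe_le_coe.2 hm.1
      apply div_nonneg (by linarith) (by linarith)
    · rw [div_le_one hlt]; have := Subtype.coe_le_coe.2 hm.2; linarith
    · apply Subtype.ext; simp only [mix_coe]; field_simp; ring

lemma continuous_mix {α : Type} [TopologicalSpace α] {f g h : α → I}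
    (hf : Continuous f) (hg : Continuous g) (hh : Continuous h) :
    Continuous fun a => mix (f a) (g a) (h a) := by
  apply Continuous.subtype_mk
  fun_prop

end VK
namespace VK

variable {X : Type} [TopologicalSpace X] {G : Type} [Group G]

/-- the segment of a path between parameters `s` and `t` -/
def seg {x y : X} (p : Path x y) (s t : I) : Path (p s) (p t) where
  toFun r := p (mix r s t)
  continuous_toFun := p.continuous.comp (continuous_mix continuous_id continuous_const
    continuous_const)
  source' := by show p (mix 0 s t) = p s; rw [mix_zero]
  target' := by show p (mix 1 s t) = p t; rw [mix_one]

@[simp] lemma seg_apply {x y : X} (p : Path x y) (s t r : I) : seg p s t r = p (mix r s t) := rfl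

lemma range_seg {x y : X} (p : Path x y) {s t : I} (hst : s ≤ t) :
    Set.range ⇑(seg p s t) = ⇑p '' Set.Icc s t := by
  apply subset_antisymm
  · rintro _ ⟨r, rfl⟩
    exact ⟨_, mix_mem_Icc' r hst, rfl⟩
  · rintro _ ⟨m, hm, rfl⟩
    obtain ⟨r, hr⟩ := exists_mix hst hm
    exact ⟨r, by rw [seg_apply, hr]⟩

lemma seg_zero_one {x y : X} (p : Path x y) (r : I) : seg p 0 1 r = p r := by
  rw [seg_apply]; congr 1; apply Subtype.ext; simp

end VK

namespace NCocycle

open VK Set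

variable {X : Type} [TopologicalSpace X] {G : Type} [Group G] {A Y : Set X}

lemma congr (u : NCocycle A Y G) {x y x' y' : X} (p : Path x y) (q : Path x' y')
    (hx : x = x') (hy : y = y') (hfun : ∀ t, p t = q t)
    (hp : Set.range ⇑p ⊆ A) (hq : Set.range ⇑q ⊆ A) :
    u.toFun p hp = u.toFun q hq := by
  subst hx; subst hy
  obtain rfl : p = q := by ext t; exact hfun t
  rfl

lemma refl_one (u : NCocycle A Y G) (x : X) (h : Set.range ⇑(Path.refl x) ⊆ A) :
    u.toFun (Path.refl x) h = 1 := by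
  have h2 : Set.range ⇑((Path.refl x).trans (Path.refl x)) ⊆ A := by
    rw [Path.trans_range]; exact Set.union_subset h h
  have hmul := u.mul (Path.refl x) (Path.refl x) h2 h h
  have heq : u.toFun ((Path.refl x).trans (Path.refl x)) h2 = u.toFun (Path.refl x) h :=
    u.congr _ _ rfl rfl (fun t => by rw [Path.refl_trans_refl]) _ _
  rw [heq] at hmul
  exact (mul_eq_left.mp hmul.symm)

lemma const_one (u : NCocycle A Y G) {x y : X} (p : Path x y) (hc : ∀ t, p t = x)
    (h : Set.range ⇑p ⊆ A) : u.toFun p h = 1 := by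
  obtain rfl : y = x := by rw [← p.target, hc 1]
  have hrefl : Set.range ⇑(Path.refl y) ⊆ A := by
    rintro _ ⟨t, rfl⟩
    exact h ⟨0, by rw [hc 0, Path.refl_apply]⟩
  rw [u.congr p (Path.refl y) rfl rfl (fun t => by rw [hc t, Path.refl_apply]) h hrefl]
  exact u.refl_one y hrefl

end NCocycle
namespace VK

/-- `min (2 z) 1` as an element of `I` -/
def dbl (z : I) : I :=
  ⟨min (2 * (z : ℝ)) 1, le_min (by nlinarith [z.2.1]) zero_le_one, min_le_right _ _⟩

/-- `max (2 z - 1) 0` as an element of `I` -/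
def dbl' (z : I) : I :=
  ⟨max (2 * (z : ℝ) - 1) 0, le_max_right _ _, max_le (by nlinarith [z.2.2]) zero_le_one⟩

lemma continuous_dbl : Continuous dbl := by
  apply Continuous.subtype_mk; fun_prop

lemma continuous_dbl' : Continuous dbl' := by
  apply Continuous.subtype_mk; fun_prop

@[simp] lemma dbl_zero : dbl 0 = 0 := by apply Subtype.ext; simp [dbl]
@[simp] lemma dbl_one : dbl 1 = 1 := by apply Subtype.ext; simp [dbl]
@[simp] lemma dbl'_zero : dbl' 0 = 0 := by apply Subtype.ext; simp [dbl']
@[simp] lemma dbl'_one : dbl' 1 = 1 := by apply Subtype.ext; simp [dbl']; norm_num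

variable {X : Type} [TopologicalSpace X]

lemma trans_seg_eq {x y : X} (p : Path x y) (s t r : I) (z : I) :
    ((seg p s t).trans (seg p t r)) z = p (mix (dbl' z) (mix (dbl z) s t) r) := by
  rw [Path.trans_apply]
  split_ifs with h
  · rw [seg_apply]
    apply congrArg p
    apply Subtype.ext
    have hμ : max (2 * (z:ℝ) - 1) 0 = 0 := max_eq_right (by linarith)
    have hν : min (2 * (z:ℝ)) 1 = 2 * (z:ℝ) := min_eq_left (by linarith)
    simp only [mix_coe, dbl, dbl', hμ, hν]
    ring
  · rw [seg_apply]
    apply congrArg p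
    apply Subtype.ext
    push_neg at h
    have hμ : max (2 * (z:ℝ) - 1) 0 = 2 * (z:ℝ) - 1 := max_eq_left (by linarith)
    have hν : min (2 * (z:ℝ)) 1 = 1 := min_eq_right (by linarith)
    simp only [mix_coe, dbl, dbl', hμ, hν]
    ring

end VK

namespace NCocycle

open VK Set

variable {X : Type} [TopologicalSpace X] {G : Type} [Group G] {A Y : Set X}

theorem seg_mul (u : NCocycle A Y G) {x y : X} (p : Path x y) {s t r : I}
    (hst : s ≤ t) (htr : t ≤ r) (hA : ⇑p '' Set.Icc s r ⊆ A)
    (h1 : Set.range ⇑(seg p s r) ⊆ A) (h2 : Set.range ⇑(seg p s t) ⊆ A)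
    (h3 : Set.range ⇑(seg p t r) ⊆ A) :
    u.toFun (seg p s r) h1 = u.toFun (seg p s t) h2 * u.toFun (seg p t r) h3 := by
  have hsr : s ≤ r := hst.trans htr
  have htrans : Set.range ⇑((seg p s t).trans (seg p t r)) ⊆ A := by
    rw [Path.trans_range]; exact Set.union_subset h2 h3
  rw [← u.mul _ _ htrans h2 h3]
  have hmem : ∀ a z : I, mix a (mix (dbl' z) (mix (dbl z) s t) r) (mix z s r) ∈ Set.Icc s r := by
    intro a z
    refine mix_mem_Icc a (mix_mem_Icc _ ?_ (right_mem_Icc.2 hsr)) (mix_mem_Icc' z hsr)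
    exact Set.Icc_subset_Icc le_rfl htr (mix_mem_Icc' _ hst)
  let K : ((seg p s t).trans (seg p t r)).Homotopy (seg p s r) :=
    { toFun := fun az => p (mix az.1 (mix (dbl' az.2) (mix (dbl az.2) s t) r) (mix az.2 s r))
      continuous_toFun := by
        apply p.continuous.comp
        exact continuous_mix continuous_fst
          (continuous_mix (continuous_dbl'.comp continuous_snd)
            (continuous_mix (continuous_dbl.comp continuous_snd) continuous_const
              continuous_const) continuous_const)
          (continuous_mix continuous_snd continuous_const continuous_const)
      map_zero_left := fun z => by
        show p (mix 0 _ _) = _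
        rw [mix_zero]
        exact (trans_seg_eq p s t r z).symm
      map_one_left := fun z => by
        show p (mix 1 _ _) = _
        rw [mix_one]
        rfl
      prop' := by
        intro a z hz
        have hz' : z = 0 ∨ z = 1 := hz
        rcases hz' with rfl | rfl
        · show p (mix a (mix (dbl' 0) (mix (dbl 0) s t) r) (mix 0 s r)) = _
          simp only [dbl_zero, dbl'_zero, mix_zero, mix_self]
          exact (((seg p s t).trans (seg p t r)).source).symm
        · show p (mix a (mix (dbl' 1) (mix (dbl 1) s t) r) (mix 1 s r)) = _
          simp only [dbl_one, dbl'_one, mix_one, mix_self]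
          exact (((seg p s t).trans (seg p t r)).target).symm }
  have hK : Set.range ⇑K ⊆ A := by
    rintro _ ⟨⟨a, z⟩, rfl⟩
    exact hA ⟨_, hmem a z, rfl⟩
  exact (u.homotopy_inv _ _ K hK htrans h1).symm

end NCocycle
namespace VK

/-- the point `i/n` of the unit interval (clamped at `1`) -/
noncomputable def pt (n i : ℕ) : I :=
  ⟨min ((i : ℝ) / n) 1, le_min (by positivity) zero_le_one, min_le_right _ _⟩

lemma pt_coe {n i : ℕ} (h : i ≤ n) (hn : 0 < n) : (pt n i : ℝ) = (i : ℝ) / n := by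
  apply min_eq_left
  rw [div_le_one (by exact_mod_cast hn)]
  exact_mod_cast h

@[simp] lemma pt_zero (n : ℕ) : pt n 0 = 0 := by apply Subtype.ext; simp [pt]

lemma pt_self {n : ℕ} (hn : 0 < n) : pt n n = 1 := by
  apply Subtype.ext
  show min ((n : ℝ) / n) 1 = ((1 : I) : ℝ)
  rw [div_self (by exact_mod_cast hn.ne')]
  simp

lemma pt_mono (n : ℕ) {i j : ℕ} (hij : i ≤ j) : pt n i ≤ pt n j := by
  rw [Subtype.mk_le_mk]
  apply min_le_min _ le_rfl
  rcases Nat.eq_zero_or_pos n with rfl | hn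
  · simp
  · gcongr

lemma pt_succ_le (n i : ℕ) : pt n i ≤ pt n (i + 1) := pt_mono n (Nat.le_succ i)

lemma pt_mul {n k : ℕ} (hk : 0 < k) (i : ℕ) : pt (n * k) (i * k) = pt n i := by
  apply Subtype.ext
  show min ((↑(i * k) : ℝ) / ↑(n * k)) 1 = min ((i : ℝ) / n) 1
  congr 1
  push_cast
  rw [mul_div_mul_right _ _ (by exact_mod_cast hk.ne')]

end VK

namespace NCocycle

open VK Set

variable {X : Type} [TopologicalSpace X] {G : Type} [Group G] {A Y : Set X}

open Classical in
/-- values of a cocycle on the pieces of a subdivided segment multiply to the whole -/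
theorem chain (u : NCocycle A Y G) {x y : X} (p : Path x y) (f : ℕ → I)
    (hmono : ∀ j, f j ≤ f (j + 1)) (m : ℕ) (hA : ⇑p '' Set.Icc (f 0) (f m) ⊆ A)
    (h : Set.range ⇑(seg p (f 0) (f m)) ⊆ A) :
    u.toFun (seg p (f 0) (f m)) h =
      prodRange (fun j => if h' : Set.range ⇑(seg p (f j) (f (j + 1))) ⊆ A then
        u.toFun (seg p (f j) (f (j + 1))) h' else 1) m := by
  have hmono' : Monotone f := monotone_nat_of_le_succ hmono
  induction m with
  | zero =>
    rw [prodRange_zero]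
    exact u.const_one _ (fun t => by rw [seg_apply, mix_self]) h
  | succ m ih =>
    have hsub : ⇑p '' Set.Icc (f 0) (f m) ⊆ A :=
      (Set.image_mono (Set.Icc_subset_Icc le_rfl (hmono m))).trans hA
    have h2 : Set.range ⇑(seg p (f 0) (f m)) ⊆ A := by
      rw [range_seg p (hmono' (Nat.zero_le m))]; exact hsub
    have h3 : Set.range ⇑(seg p (f m) (f (m + 1))) ⊆ A := by
      rw [range_seg p (hmono m)]
      exact (Set.image_mono (Set.Icc_subset_Icc (hmono' (Nat.zero_le m)) le_rfl)).trans hA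
    rw [u.seg_mul p (hmono' (Nat.zero_le m)) (hmono m) hA h h2 h3, ih hsub h2,
      prodRange_succ, dif_pos h3]

end NCocycle
namespace VK

open Set

variable {X : Type} [TopologicalSpace X] {G : Type} [Group G] {U V Y₁ Y₂ : Set X}

/-- the two cocycles agree on paths lying in the intersection -/
def Agree (u : NCocycle U Y₁ G) (v : NCocycle V Y₂ G) : Prop :=
  ∀ {x y : X} (p : Path x y) (hU : Set.range ⇑p ⊆ U) (hV : Set.range ⇑p ⊆ V),
    u.toFun p hU = v.toFun p hV

open Classical in
/-- the common value of `u` and `v` on a path lying in `U` or in `V` -/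
noncomputable def glue (u : NCocycle U Y₁ G) (v : NCocycle V Y₂ G) {x y : X} (p : Path x y)
    (h : Set.range ⇑p ⊆ U ∨ Set.range ⇑p ⊆ V) : G :=
  if hU : Set.range ⇑p ⊆ U then u.toFun p hU else v.toFun p (h.resolve_left hU)

variable {u : NCocycle U Y₁ G} {v : NCocycle V Y₂ G}

lemma glue_eq_u {x y : X} {p : Path x y} {h} (hU : Set.range ⇑p ⊆ U) :
    glue u v p h = u.toFun p hU := by
  unfold glue
  rw [dif_pos hU]

lemma glue_eq_v (hag : Agree u v) {x y : X} {p : Path x y} {h} (hV : Set.range ⇑p ⊆ V) :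
    glue u v p h = v.toFun p hV := by
  unfold glue
  split_ifs with hU
  · exact hag p hU hV
  · rfl

lemma glue_congr {x y x' y' : X} {p : Path x y} {q : Path x' y'}
    (hx : x = x') (hy : y = y') (hfun : ∀ t, p t = q t) {h h'} :
    glue u v p h = glue u v q h' := by
  subst hx; subst hy
  obtain rfl : p = q := by ext t; exact hfun t
  rfl

lemma glue_const {x y : X} {p : Path x y} (hc : ∀ t, p t = x) {h} :
    glue u v p h = 1 := by
  unfold glue
  split_ifs with hU
  · exact u.const_one p hc hU
  · exact v.const_one p hc _

lemma glue_homotopy (hag : Agree u v) {x y : X} {p q : Path x y} (F : p.Homotopy q)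
    (hF : Set.range ⇑F ⊆ U ∨ Set.range ⇑F ⊆ V) {h h'} :
    glue u v p h = glue u v q h' := by
  have hpF : Set.range ⇑p ⊆ Set.range ⇑F := by
    rintro _ ⟨t, rfl⟩
    exact ⟨(0, t), F.apply_zero t⟩
  have hqF : Set.range ⇑q ⊆ Set.range ⇑F := by
    rintro _ ⟨t, rfl⟩
    exact ⟨(1, t), F.apply_one t⟩
  rcases hF with hF | hF
  · rw [glue_eq_u (hpF.trans hF), glue_eq_u (hqF.trans hF)]
    exact u.homotopy_inv p q F hF _ _
  · rw [glue_eq_v hag (hpF.trans hF), glue_eq_v hag (hqF.trans hF)]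
    exact v.homotopy_inv p q F hF _ _

lemma glue_trans (hag : Agree u v) {x y z : X} {p : Path x y} {q : Path y z}
    {hpq : Set.range ⇑(p.trans q) ⊆ U ∨ Set.range ⇑(p.trans q) ⊆ V} {hp hq} :
    glue u v (p.trans q) hpq = glue u v p hp * glue u v q hq := by
  have hR := Path.trans_range p q
  rcases hpq with hT | hT
  · rw [hR] at hT
    rw [glue_eq_u (hR.trans_subset hT : Set.range ⇑(p.trans q) ⊆ U),
      glue_eq_u ((Set.subset_union_left).trans hT),
      glue_eq_u ((Set.subset_union_right).trans hT)]
    exact u.mul p q _ _ _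
  · rw [hR] at hT
    rw [glue_eq_v hag (hR.trans_subset hT : Set.range ⇑(p.trans q) ⊆ V),
      glue_eq_v hag ((Set.subset_union_left).trans hT),
      glue_eq_v hag ((Set.subset_union_right).trans hT)]
    exact v.mul p q _ _ _

end VK
namespace VK

open Set

variable {X : Type} [TopologicalSpace X] {G : Type} [Group G] {U V Y₁ Y₂ : Set X}

/-- the uniform subdivision of scale `n` is adapted to the cover `U, V` -/
def Adm (U V : Set X) {x y : X} (p : Path x y) (n : ℕ) : Prop :=
  0 < n ∧ ∀ i < n, ⇑p '' Set.Icc (pt n i) (pt n (i + 1)) ⊆ U ∨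
    ⇑p '' Set.Icc (pt n i) (pt n (i + 1)) ⊆ V

lemma adm_seg {x y : X} {p : Path x y} {n : ℕ} (h : Adm U V p n) {i : ℕ} (hi : i < n) :
    Set.range ⇑(seg p (pt n i) (pt n (i + 1))) ⊆ U ∨
      Set.range ⇑(seg p (pt n i) (pt n (i + 1))) ⊆ V := by
  rw [range_seg p (pt_succ_le n i)]
  exact h.2 i hi

lemma exists_adm (hUo : IsOpen U) (hVo : IsOpen V) (hcover : U ∪ V = Set.univ)
    {x y : X} (p : Path x y) : ∃ n, Adm U V p n := by
  have hc1 : ∀ b : Bool, IsOpen (cond b (⇑p ⁻¹' U) (⇑p ⁻¹' V)) := by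
    rintro (_ | _)
    · exact hVo.preimage p.continuous
    · exact hUo.preimage p.continuous
  have hc2 : (Set.univ : Set I) ⊆ ⋃ b : Bool, cond b (⇑p ⁻¹' U) (⇑p ⁻¹' V) := by
    intro t _
    have ht : p t ∈ U ∪ V := hcover ▸ Set.mem_univ _
    rcases ht with ht | ht
    · exact Set.mem_iUnion.2 ⟨true, ht⟩
    · exact Set.mem_iUnion.2 ⟨false, ht⟩
  obtain ⟨δ, hδ, hball⟩ := lebesgue_number_lemma_of_metric isCompact_univ hc1 hc2
  obtain ⟨n, hn⟩ := exists_nat_one_div_lt hδ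
  refine ⟨n + 1, Nat.succ_pos n, ?_⟩
  intro i hi
  obtain ⟨b, hb⟩ := hball (pt (n + 1) i) trivial
  have hsub : Set.Icc (pt (n + 1) i) (pt (n + 1) (i + 1)) ⊆ Metric.ball (pt (n + 1) i) δ := by
    intro z hz
    rw [Metric.mem_ball, Subtype.dist_eq, Real.dist_eq, abs_of_nonneg
      (by exact_mod_cast sub_nonneg.2 (Subtype.coe_le_coe.2 hz.1))]
    have h1 : (z : ℝ) ≤ pt (n + 1) (i + 1) := Subtype.coe_le_coe.2 hz.2
    have h2 : ((pt (n + 1) (i + 1)) : ℝ) ≤ ((i + 1 : ℕ) : ℝ) / ((n + 1 : ℕ) : ℝ) :=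
      min_le_left _ _
    have h3 : ((pt (n + 1) i) : ℝ) = ((i : ℕ) : ℝ) / ((n + 1 : ℕ) : ℝ) :=
      pt_coe (by omega) (Nat.succ_pos n)
    have h4 : ((i + 1 : ℕ) : ℝ) / ((n + 1 : ℕ) : ℝ) - ((i : ℕ) : ℝ) / ((n + 1 : ℕ) : ℝ)
        = 1 / ((n + 1 : ℕ) : ℝ) := by push_cast; ring
    have h5 : 1 / ((n + 1 : ℕ) : ℝ) < δ := by push_cast; push_cast at hn; linarith
    linarith
  rcases b with _ | _
  · right
    rintro _ ⟨z, hz, rfl⟩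
    exact hb (hsub hz)
  · left
    rintro _ ⟨z, hz, rfl⟩
    exact hb (hsub hz)

open Classical in
/-- the value of the glued cochain on a uniformly subdivided path -/
noncomputable def gval (u : NCocycle U Y₁ G) (v : NCocycle V Y₂ G) {x y : X} (p : Path x y)
    (n : ℕ) : G :=
  prodRange (fun i => if h : Set.range ⇑(seg p (pt n i) (pt n (i + 1))) ⊆ U ∨
      Set.range ⇑(seg p (pt n i) (pt n (i + 1))) ⊆ V then
    glue u v (seg p (pt n i) (pt n (i + 1))) h else 1) n

variable {u : NCocycle U Y₁ G} {v : NCocycle V Y₂ G}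

open Classical in
lemma glue_chain (hag : Agree u v) {x y : X} (p : Path x y) (f : ℕ → I)
    (hmono : ∀ j, f j ≤ f (j + 1)) (m : ℕ)
    (hOr : Set.range ⇑(seg p (f 0) (f m)) ⊆ U ∨ Set.range ⇑(seg p (f 0) (f m)) ⊆ V) :
    glue u v (seg p (f 0) (f m)) hOr =
      prodRange (fun j => if h : Set.range ⇑(seg p (f j) (f (j + 1))) ⊆ U ∨
          Set.range ⇑(seg p (f j) (f (j + 1))) ⊆ V then
        glue u v (seg p (f j) (f (j + 1))) h else 1) m := by
  have hmono' : Monotone f := monotone_nat_of_le_succ hmono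
  have hrs : ∀ j, Set.range ⇑(seg p (f j) (f (j + 1))) = ⇑p '' Set.Icc (f j) (f (j + 1)) :=
    fun j => range_seg p (hmono j)
  have hr0 : Set.range ⇑(seg p (f 0) (f m)) = ⇑p '' Set.Icc (f 0) (f m) :=
    range_seg p (hmono' (Nat.zero_le m))
  have hpiece : ∀ j < m, Set.Icc (f j) (f (j + 1)) ⊆ Set.Icc (f 0) (f m) := fun j hj =>
    Set.Icc_subset_Icc (hmono' (Nat.zero_le j)) (hmono' hj)
  rcases hOr with hA | hA
  · rw [glue_eq_u hA]
    rw [u.chain p f hmono m (hr0 ▸ hA) hA]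
    apply prodRange_congr
    intro j hj
    have hjU : Set.range ⇑(seg p (f j) (f (j + 1))) ⊆ U := by
      rw [hrs j]
      exact (Set.image_mono (hpiece j hj)).trans (hr0 ▸ hA)
    rw [dif_pos hjU, dif_pos (Or.inl hjU), glue_eq_u hjU]
  · rw [glue_eq_v hag hA]
    rw [v.chain p f hmono m (hr0 ▸ hA) hA]
    apply prodRange_congr
    intro j hj
    have hjV : Set.range ⇑(seg p (f j) (f (j + 1))) ⊆ V := by
      rw [hrs j]
      exact (Set.image_mono (hpiece j hj)).trans (hr0 ▸ hA)
    rw [dif_pos hjV, dif_pos (Or.inr hjV), glue_eq_v hag hjV]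

lemma prodRange_mul {f : ℕ → G} (n k : ℕ) :
    prodRange f (n * k) = prodRange (fun a => prodRange (fun b => f (a * k + b)) k) n := by
  induction n with
  | zero => simp
  | succ n ih => rw [Nat.succ_mul, prodRange_add, ih, prodRange_succ]

open Classical in
lemma gval_refine (hag : Agree u v) {x y : X} (p : Path x y) {n k : ℕ}
    (hn : Adm U V p n) (hk : 0 < k) : gval u v p (n * k) = gval u v p n := by
  unfold gval
  rw [prodRange_mul]
  apply prodRange_congr
  intro a ha
  have e0 : pt (n * k) (a * k + 0) = pt n a := by rw [Nat.add_zero, pt_mul hk]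
  have ek : pt (n * k) (a * k + k) = pt n (a + 1) := by
    rw [show a * k + k = (a + 1) * k by ring, pt_mul hk]
  have hadm := adm_seg hn ha
  rw [dif_pos hadm]
  have hOr' : Set.range ⇑(seg p (pt (n * k) (a * k + 0)) (pt (n * k) (a * k + k))) ⊆ U ∨
      Set.range ⇑(seg p (pt (n * k) (a * k + 0)) (pt (n * k) (a * k + k))) ⊆ V := by
    rw [e0, ek]; exact hadm
  have hch := glue_chain hag p (fun b => pt (n * k) (a * k + b)) (fun b => pt_succ_le _ _) k hOr'
  refine Eq.symm ?_
  rw [glue_congr (u := u) (v := v) (h := hadm) (h' := hOr') (congrArg p e0.symm)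
    (congrArg p ek.symm) (fun t => by rw [seg_apply, seg_apply, e0, ek])]
  exact hch

lemma gval_indep (hag : Agree u v) {x y : X} (p : Path x y) {m n : ℕ}
    (hm : Adm U V p m) (hn : Adm U V p n) : gval u v p m = gval u v p n := by
  rw [← gval_refine hag p hm hn.1, ← gval_refine hag p hn hm.1, Nat.mul_comm]

/-- the glued cochain -/
noncomputable def Wd (hUo : IsOpen U) (hVo : IsOpen V) (hcover : U ∪ V = Set.univ)
    (u : NCocycle U Y₁ G) (v : NCocycle V Y₂ G) {x y : X} (p : Path x y) : G :=
  gval u v p (exists_adm hUo hVo hcover p).choose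

lemma Wd_eq {hUo : IsOpen U} {hVo : IsOpen V} {hcover : U ∪ V = Set.univ}
    (hag : Agree u v) {x y : X} {p : Path x y} {n : ℕ} (hn : Adm U V p n) :
    Wd hUo hVo hcover u v p = gval u v p n :=
  gval_indep hag p (exists_adm hUo hVo hcover p).choose_spec hn

end VK
namespace VK

open Set

variable {X : Type} [TopologicalSpace X] {G : Type} [Group G] {U V Y₁ Y₂ : Set X}
variable {u : NCocycle U Y₁ G} {v : NCocycle V Y₂ G}

lemma Icc_01 : Set.Icc (0 : I) 1 = Set.univ :=
  Set.eq_univ_of_forall fun z => ⟨z.2.1, z.2.2⟩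

lemma adm_one {x y : X} {p : Path x y} (h : Set.range ⇑p ⊆ U ∨ Set.range ⇑p ⊆ V) :
    Adm U V p 1 := by
  refine ⟨one_pos, fun i hi => ?_⟩
  obtain rfl : i = 0 := Nat.lt_one_iff.1 hi
  refine h.imp (fun hU => ?_) (fun hV => ?_) <;>
    exact (Set.image_subset_range _ _).trans ‹_›

lemma gval_one {x y : X} {p : Path x y}
    (h : Set.range ⇑p ⊆ U ∨ Set.range ⇑p ⊆ V) : gval u v p 1 = glue u v p h := by
  have h0 : pt 1 0 = 0 := pt_zero 1
  have h1 : pt 1 (0 + 1) = 1 := pt_self one_pos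
  have hseg : ∀ t, seg p (pt 1 0) (pt 1 (0 + 1)) t = p t := by
    intro t
    rw [seg_apply, h0, h1]
    exact seg_zero_one p t
  have hx : p (pt 1 0) = x := by rw [h0, p.source]
  have hy : p (pt 1 (0 + 1)) = y := by rw [h1, p.target]
  have hr : Set.range ⇑(seg p (pt 1 0) (pt 1 (0 + 1))) = Set.range ⇑p := by
    rw [show ⇑(seg p (pt 1 0) (pt 1 (0 + 1))) = ⇑p from funext hseg]
  unfold gval
  rw [prodRange_succ, prodRange_zero, one_mul, dif_pos (hr ▸ h)]
  exact glue_congr hx hy hseg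

lemma Wd_U {hUo : IsOpen U} {hVo : IsOpen V} {hcover : U ∪ V = Set.univ}
    (hag : Agree u v) {x y : X} {p : Path x y} (hU : Set.range ⇑p ⊆ U) :
    Wd hUo hVo hcover u v p = u.toFun p hU := by
  rw [Wd_eq hag (adm_one (Or.inl hU)), gval_one (Or.inl hU)]
  exact glue_eq_u hU

lemma Wd_V {hUo : IsOpen U} {hVo : IsOpen V} {hcover : U ∪ V = Set.univ}
    (hag : Agree u v) {x y : X} {p : Path x y} (hV : Set.range ⇑p ⊆ V) :
    Wd hUo hVo hcover u v p = v.toFun p hV := by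
  rw [Wd_eq hag (adm_one (Or.inr hV)), gval_one (Or.inr hV)]
  exact glue_eq_v hag hV

lemma adm_mul {x y : X} {p : Path x y} {n : ℕ} (hn : Adm U V p n) {k : ℕ} (hk : 0 < k) :
    Adm U V p (n * k) := by
  refine ⟨Nat.mul_pos hn.1 hk, fun i hi => ?_⟩
  have hq1 : i / k < n := Nat.div_lt_iff_lt_mul hk |>.2 hi
  have hlow : (i / k) * k ≤ i := Nat.div_mul_le_self i k
  have hhigh : i + 1 ≤ (i / k + 1) * k := by
    have hmod := Nat.div_add_mod i k
    have hmodlt : i % k < k := Nat.mod_lt _ hk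
    have hcomm : (i / k) * k = k * (i / k) := Nat.mul_comm _ _
    have hexp : (i / k + 1) * k = (i / k) * k + k := Nat.succ_mul _ _
    omega
  have h1 : pt n (i / k) ≤ pt (n * k) i := by
    rw [← pt_mul hk (i / k)]
    exact pt_mono _ hlow
  have h2 : pt (n * k) (i + 1) ≤ pt n (i / k + 1) := by
    rw [← pt_mul hk (i / k + 1)]
    exact pt_mono _ hhigh
  have hsub : Set.Icc (pt (n * k) i) (pt (n * k) (i + 1)) ⊆
      Set.Icc (pt n (i / k)) (pt n (i / k + 1)) := Set.Icc_subset_Icc h1 h2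
  exact (hn.2 (i / k) hq1).imp (fun h => (Set.image_mono hsub).trans h)
    (fun h => (Set.image_mono hsub).trans h)

section trans

variable {x y z : X} (p : Path x y) (q : Path y z) {n : ℕ}

lemma seg_trans_left (hn : 0 < n) {i : ℕ} (hi : i < n) (t : I) :
    seg (p.trans q) (pt (2 * n) i) (pt (2 * n) (i + 1)) t
      = seg p (pt n i) (pt n (i + 1)) t := by
  have hnR : (0 : ℝ) < (n : ℝ) := by exact_mod_cast hn
  have c1 : ((pt (2 * n) i : I) : ℝ) = (i : ℝ) / (2 * n) := by
    rw [pt_coe (by omega) (by omega)]; push_cast; ring_nf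
  have c2 : ((pt (2 * n) (i + 1) : I) : ℝ) = ((i : ℝ) + 1) / (2 * n) := by
    rw [pt_coe (by omega) (by omega)]; push_cast; ring_nf
  have c3 : ((pt n i : I) : ℝ) = (i : ℝ) / n := by
    rw [pt_coe (by omega) hn]
  have c4 : ((pt n (i + 1) : I) : ℝ) = ((i : ℝ) + 1) / n := by
    rw [pt_coe (by omega) hn]; push_cast; ring
  set w := mix t (pt (2 * n) i) (pt (2 * n) (i + 1)) with hw
  have hwv : (w : ℝ) = (1 - (t : ℝ)) * ((i : ℝ) / (2 * n)) + t * (((i : ℝ) + 1) / (2 * n)) := by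
    rw [hw, mix_coe, c1, c2]
  have hiR : (i : ℝ) + 1 ≤ (n : ℝ) := by exact_mod_cast hi
  have ht0 := t.2.1; have ht1 := t.2.2
  have h2n : (0 : ℝ) < 2 * n := by linarith
  have hwle : (w : ℝ) ≤ 1 / 2 := by
    rw [hwv]
    have hrw : (1 - (t:ℝ)) * ((i:ℝ)/(2*(n:ℝ))) + t * (((i:ℝ)+1)/(2*(n:ℝ)))
        = ((i:ℝ) + t)/(2*(n:ℝ)) := by field_simp; ring
    rw [hrw, div_le_iff₀ h2n]
    linarith
  rw [seg_apply, seg_apply, ← hw, Path.trans_apply, dif_pos hwle]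
  apply congrArg p
  apply Subtype.ext
  show 2 * (w : ℝ) = _
  rw [hwv, mix_coe, c3, c4]
  field_simp

lemma seg_trans_right (hn : 0 < n) {i : ℕ} (hi : i < n) (t : I) :
    seg (p.trans q) (pt (2 * n) (n + i)) (pt (2 * n) (n + i + 1)) t
      = seg q (pt n i) (pt n (i + 1)) t := by
  have hnR : (0 : ℝ) < (n : ℝ) := by exact_mod_cast hn
  have c1 : ((pt (2 * n) (n + i) : I) : ℝ) = ((n : ℝ) + i) / (2 * n) := by
    rw [pt_coe (by omega) (by omega)]; push_cast; ring_nf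
  have c2 : ((pt (2 * n) (n + i + 1) : I) : ℝ) = ((n : ℝ) + i + 1) / (2 * n) := by
    rw [pt_coe (by omega) (by omega)]; push_cast; ring_nf
  have c3 : ((pt n i : I) : ℝ) = (i : ℝ) / n := by
    rw [pt_coe (by omega) hn]
  have c4 : ((pt n (i + 1) : I) : ℝ) = ((i : ℝ) + 1) / n := by
    rw [pt_coe (by omega) hn]; push_cast; ring
  set w := mix t (pt (2 * n) (n + i)) (pt (2 * n) (n + i + 1)) with hw
  have hwv : (w : ℝ) = (1 - (t : ℝ)) * (((n : ℝ) + i) / (2 * n))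
      + t * (((n : ℝ) + i + 1) / (2 * n)) := by
    rw [hw, mix_coe, c1, c2]
  have hkey : ((mix t (pt n i) (pt n (i + 1)) : I) : ℝ) = 2 * (w : ℝ) - 1 := by
    rw [mix_coe, c3, c4, hwv]
    field_simp
    ring
  have ht0 := t.2.1; have ht1 := t.2.2
  have hiR : (0 : ℝ) ≤ (i : ℝ) := by positivity
  have h2n : (0 : ℝ) < 2 * n := by linarith
  have hwge : 1 / 2 ≤ (w : ℝ) := by
    rw [hwv]
    have hrw : (1 - (t:ℝ)) * (((n:ℝ)+(i:ℝ))/(2*(n:ℝ))) + t * (((n:ℝ)+(i:ℝ)+1)/(2*(n:ℝ)))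
        = ((n:ℝ) + i + t)/(2*(n:ℝ)) := by field_simp; ring
    rw [hrw, le_div_iff₀ h2n]
    linarith
  rw [seg_apply, seg_apply, ← hw, Path.trans_apply]
  split_ifs with hle
  · -- boundary case `w = 1/2`
    have hw2 : (w : ℝ) = 1 / 2 := le_antisymm hle hwge
    have e2 : mix t (pt n i) (pt n (i + 1)) = 0 := by
      apply Subtype.ext
      show ((mix t (pt n i) (pt n (i + 1)) : I) : ℝ) = ((0 : I) : ℝ)
      rw [hkey, hw2]; norm_num
    rw [e2, q.source]
    refine Eq.trans ?_ p.target
    apply congrArg p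
    apply Subtype.ext
    show 2 * (w : ℝ) = ((1 : I) : ℝ)
    rw [hw2]; norm_num
  · apply congrArg q
    apply Subtype.ext
    rw [hkey]

lemma seg_trans_left_coe (hn : 0 < n) {i : ℕ} (hi : i < n) :
    ⇑(seg (p.trans q) (pt (2 * n) i) (pt (2 * n) (i + 1)))
      = ⇑(seg p (pt n i) (pt n (i + 1))) := funext (seg_trans_left p q hn hi)

lemma seg_trans_right_coe (hn : 0 < n) {i : ℕ} (hi : i < n) :
    ⇑(seg (p.trans q) (pt (2 * n) (n + i)) (pt (2 * n) (n + i + 1)))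
      = ⇑(seg q (pt n i) (pt n (i + 1))) := funext (seg_trans_right p q hn hi)

lemma adm_trans (hp : Adm U V p n) (hq : Adm U V q n) : Adm U V (p.trans q) (2 * n) := by
  have hn := hp.1
  refine ⟨by omega, fun i hi => ?_⟩
  rcases Nat.lt_or_ge i n with hilt | hige
  · have hre : ⇑(p.trans q) '' Set.Icc (pt (2 * n) i) (pt (2 * n) (i + 1))
        = ⇑p '' Set.Icc (pt n i) (pt n (i + 1)) := by
      rw [← range_seg _ (pt_succ_le _ _), ← range_seg _ (pt_succ_le _ _),
        seg_trans_left_coe p q hn hilt]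
    rw [hre]
    exact hp.2 i hilt
  · obtain ⟨j, rfl⟩ : ∃ j, i = n + j := ⟨i - n, by omega⟩
    have hjlt : j < n := by omega
    have hre : ⇑(p.trans q) '' Set.Icc (pt (2 * n) (n + j)) (pt (2 * n) (n + j + 1))
        = ⇑q '' Set.Icc (pt n j) (pt n (j + 1)) := by
      rw [← range_seg _ (pt_succ_le _ _), ← range_seg _ (pt_succ_le _ _),
        seg_trans_right_coe p q hn hjlt]
    rw [hre]
    exact hq.2 j hjlt

open Classical in
lemma Wd_mul {hUo : IsOpen U} {hVo : IsOpen V} {hcover : U ∪ V = Set.univ}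
    (hag : Agree u v) :
    Wd hUo hVo hcover u v (p.trans q)
      = Wd hUo hVo hcover u v p * Wd hUo hVo hcover u v q := by
  obtain ⟨a, ha⟩ := exists_adm hUo hVo hcover p
  obtain ⟨b, hb⟩ := exists_adm hUo hVo hcover q
  set n := a * b with hn
  have hpn : Adm U V p n := adm_mul ha hb.1
  have hqn : Adm U V q n := by rw [hn, Nat.mul_comm]; exact adm_mul hb ha.1
  have htr : Adm U V (p.trans q) (2 * n) := adm_trans p q hpn hqn
  rw [Wd_eq hag htr, Wd_eq hag hpn, Wd_eq hag hqn]
  show gval u v (p.trans q) (2 * n) = _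
  unfold gval
  rw [show 2 * n = n + n by ring, prodRange_add]
  congr 1
  · apply prodRange_congr
    intro i hi
    have hre := seg_trans_left_coe p q hpn.1 hi
    have hx : (p.trans q) (pt (2 * n) i) = p (pt n i) := by
      have := seg_trans_left p q hpn.1 hi 0
      rwa [seg_apply, seg_apply, mix_zero, mix_zero] at this
    have hy : (p.trans q) (pt (2 * n) (i + 1)) = p (pt n (i + 1)) := by
      have := seg_trans_left p q hpn.1 hi 1
      rwa [seg_apply, seg_apply, mix_one, mix_one] at this
    rw [show n + n = 2 * n by ring]
    by_cases h : Set.range ⇑(seg p (pt n i) (pt n (i + 1))) ⊆ U ∨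
        Set.range ⇑(seg p (pt n i) (pt n (i + 1))) ⊆ V
    · rw [dif_pos h, dif_pos (by rw [hre]; exact h)]
      exact glue_congr hx hy (seg_trans_left p q hpn.1 hi)
    · rw [dif_neg (by rw [hre]; exact h), dif_neg h]
  · apply prodRange_congr
    intro i hi
    have hre := seg_trans_right_coe p q hpn.1 hi
    have hx : (p.trans q) (pt (2 * n) (n + i)) = q (pt n i) := by
      have := seg_trans_right p q hpn.1 hi 0
      rwa [seg_apply, seg_apply, mix_zero, mix_zero] at this
    have hy : (p.trans q) (pt (2 * n) (n + i + 1)) = q (pt n (i + 1)) := by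
      have := seg_trans_right p q hpn.1 hi 1
      rwa [seg_apply, seg_apply, mix_one, mix_one] at this
    rw [show n + n = 2 * n by ring]
    by_cases h : Set.range ⇑(seg q (pt n i) (pt n (i + 1))) ⊆ U ∨
        Set.range ⇑(seg q (pt n i) (pt n (i + 1))) ⊆ V
    · rw [dif_pos h, dif_pos (by rw [hre]; exact h)]
      exact glue_congr hx hy (seg_trans_right p q hpn.1 hi)
    · rw [dif_neg (by rw [hre]; exact h), dif_neg h]

end trans

end VK
namespace VK

open Set

variable {X : Type} [TopologicalSpace X] {G : Type} [Group G] {U V Y₁ Y₂ : Set X}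

section homotopy

variable {x y : X} {p q : Path x y}

/-- horizontal edge path of the grid -/
noncomputable def hp2 (F : p.Homotopy q) (n j i : ℕ) :
    Path (F (pt n j, pt n i)) (F (pt n j, pt n (i + 1))) where
  toFun z := F (pt n j, mix z (pt n i) (pt n (i + 1)))
  continuous_toFun := (map_continuous F).comp (Continuous.prodMk continuous_const
    (continuous_mix continuous_id continuous_const continuous_const))
  source' := by
    show F (pt n j, mix 0 (pt n i) (pt n (i + 1))) = _
    rw [mix_zero]
  target' := by
    show F (pt n j, mix 1 (pt n i) (pt n (i + 1))) = _
    rw [mix_one]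

/-- vertical edge path of the grid -/
noncomputable def vp2 (F : p.Homotopy q) (n j i : ℕ) :
    Path (F (pt n j, pt n i)) (F (pt n (j + 1), pt n i)) where
  toFun z := F (mix z (pt n j) (pt n (j + 1)), pt n i)
  continuous_toFun := (map_continuous F).comp (Continuous.prodMk
    (continuous_mix continuous_id continuous_const continuous_const) continuous_const)
  source' := by
    show F (mix 0 (pt n j) (pt n (j + 1)), pt n i) = _
    rw [mix_zero]
  target' := by
    show F (mix 1 (pt n j) (pt n (j + 1)), pt n i) = _
    rw [mix_one]

@[simp] lemma hp2_apply (F : p.Homotopy q) (n j i : ℕ) (z : I) :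
    hp2 F n j i z = F (pt n j, mix z (pt n i) (pt n (i + 1))) := rfl

@[simp] lemma vp2_apply (F : p.Homotopy q) (n j i : ℕ) (z : I) :
    vp2 F n j i z = F (mix z (pt n j) (pt n (j + 1)), pt n i) := rfl

/-- image of a grid square under the homotopy -/
def Sq (F : p.Homotopy q) (n j i : ℕ) : Set X :=
  ⇑F '' (Set.Icc (pt n j) (pt n (j + 1)) ×ˢ Set.Icc (pt n i) (pt n (i + 1)))

lemma range_hp2 (F : p.Homotopy q) (n j i : ℕ) :
    Set.range ⇑(hp2 F n j i) ⊆ Sq F n j i := by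
  rintro _ ⟨z, rfl⟩
  exact ⟨(pt n j, mix z (pt n i) (pt n (i + 1))),
    ⟨left_mem_Icc.2 (pt_succ_le n j), mix_mem_Icc' z (pt_succ_le n i)⟩, rfl⟩

lemma range_hp2' (F : p.Homotopy q) (n j i : ℕ) :
    Set.range ⇑(hp2 F n (j + 1) i) ⊆ Sq F n j i := by
  rintro _ ⟨z, rfl⟩
  exact ⟨(pt n (j + 1), mix z (pt n i) (pt n (i + 1))),
    ⟨right_mem_Icc.2 (pt_succ_le n j), mix_mem_Icc' z (pt_succ_le n i)⟩, rfl⟩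

lemma range_vp2 (F : p.Homotopy q) (n j i : ℕ) :
    Set.range ⇑(vp2 F n j i) ⊆ Sq F n j i := by
  rintro _ ⟨z, rfl⟩
  exact ⟨(mix z (pt n j) (pt n (j + 1)), pt n i),
    ⟨mix_mem_Icc' z (pt_succ_le n j), left_mem_Icc.2 (pt_succ_le n i)⟩, rfl⟩

lemma range_vp2' (F : p.Homotopy q) (n j i : ℕ) :
    Set.range ⇑(vp2 F n j (i + 1)) ⊆ Sq F n j i := by
  rintro _ ⟨z, rfl⟩
  exact ⟨(mix z (pt n j) (pt n (j + 1)), pt n (i + 1)),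
    ⟨mix_mem_Icc' z (pt_succ_le n j), right_mem_Icc.2 (pt_succ_le n i)⟩, rfl⟩

/-- the grid of scale `n` is adapted to the cover -/
def GridAdm (U V : Set X) (F : p.Homotopy q) (n : ℕ) : Prop :=
  0 < n ∧ ∀ j < n, ∀ i < n, Sq F n j i ⊆ U ∨ Sq F n j i ⊆ V

lemma path0_eq (F : p.Homotopy q) (n j i : ℕ) (z : I) :
    ((hp2 F n j i).trans (vp2 F n j (i + 1))) z
      = F (mix (dbl' z) (pt n j) (pt n (j + 1)), mix (dbl z) (pt n i) (pt n (i + 1))) := by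
  rw [Path.trans_apply]
  split_ifs with h
  · have e1 : dbl' z = 0 := Subtype.ext (max_eq_right (by linarith))
    rw [e1, mix_zero]
    exact congrArg (fun w : I => F (pt n j, mix w (pt n i) (pt n (i + 1))))
      (Subtype.ext (min_eq_left (by linarith)).symm)
  · push_neg at h
    have e1 : dbl z = 1 := Subtype.ext (min_eq_right (by linarith))
    rw [e1, mix_one]
    exact congrArg (fun w : I => F (mix w (pt n j) (pt n (j + 1)), pt n (i + 1)))
      (Subtype.ext (max_eq_left (by linarith)).symm)

lemma path1_eq (F : p.Homotopy q) (n j i : ℕ) (z : I) :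
    ((vp2 F n j i).trans (hp2 F n (j + 1) i)) z
      = F (mix (dbl z) (pt n j) (pt n (j + 1)), mix (dbl' z) (pt n i) (pt n (i + 1))) := by
  rw [Path.trans_apply]
  split_ifs with h
  · have e1 : dbl' z = 0 := Subtype.ext (max_eq_right (by linarith))
    rw [e1, mix_zero]
    exact congrArg (fun w : I => F (mix w (pt n j) (pt n (j + 1)), pt n i))
      (Subtype.ext (min_eq_left (by linarith)).symm)
  · push_neg at h
    have e1 : dbl z = 1 := Subtype.ext (min_eq_right (by linarith))
    rw [e1, mix_one]
    exact congrArg (fun w : I => F (pt n (j + 1), mix w (pt n i) (pt n (i + 1))))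
      (Subtype.ext (max_eq_left (by linarith)).symm)

variable {u : NCocycle U Y₁ G} {v : NCocycle V Y₂ G}

lemma square_homotopy (hag : Agree u v) (F : p.Homotopy q) (n j i : ℕ)
    (hsq : Sq F n j i ⊆ U ∨ Sq F n j i ⊆ V) {h0 h1} :
    glue u v ((hp2 F n j i).trans (vp2 F n j (i + 1))) h0
      = glue u v ((vp2 F n j i).trans (hp2 F n (j + 1) i)) h1 := by
  set tj := pt n j
  set tj1 := pt n (j + 1)
  set si := pt n i
  set si1 := pt n (i + 1)
  let K : ((hp2 F n j i).trans (vp2 F n j (i + 1))).Homotopy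
      ((vp2 F n j i).trans (hp2 F n (j + 1) i)) :=
    { toFun := fun az => F (mix az.1 (mix (dbl' az.2) tj tj1) (mix (dbl az.2) tj tj1),
        mix az.1 (mix (dbl az.2) si si1) (mix (dbl' az.2) si si1))
      continuous_toFun := by
        apply (map_continuous F).comp
        apply Continuous.prodMk
        · exact continuous_mix continuous_fst
            (continuous_mix (continuous_dbl'.comp continuous_snd) continuous_const
              continuous_const)
            (continuous_mix (continuous_dbl.comp continuous_snd) continuous_const
              continuous_const)
        · exact continuous_mix continuous_fst
            (continuous_mix (continuous_dbl.comp continuous_snd) continuous_const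
              continuous_const)
            (continuous_mix (continuous_dbl'.comp continuous_snd) continuous_const
              continuous_const)
      map_zero_left := fun z => by
        show F (mix 0 _ _, mix 0 _ _) = _
        rw [mix_zero, mix_zero]
        exact (path0_eq F n j i z).symm
      map_one_left := fun z => by
        show F (mix 1 _ _, mix 1 _ _) = _
        rw [mix_one, mix_one]
        exact (path1_eq F n j i z).symm
      prop' := by
        intro a z hz
        have hz' : z = 0 ∨ z = 1 := hz
        rcases hz' with rfl | rfl
        · show F (mix a (mix (dbl' 0) tj tj1) (mix (dbl 0) tj tj1),
            mix a (mix (dbl 0) si si1) (mix (dbl' 0) si si1)) = _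
          simp only [dbl_zero, dbl'_zero, mix_zero, mix_self]
          exact (((hp2 F n j i).trans (vp2 F n j (i + 1))).source).symm
        · show F (mix a (mix (dbl' 1) tj tj1) (mix (dbl 1) tj tj1),
            mix a (mix (dbl 1) si si1) (mix (dbl' 1) si si1)) = _
          simp only [dbl_one, dbl'_one, mix_one, mix_self]
          exact (((hp2 F n j i).trans (vp2 F n j (i + 1))).target).symm }
  have hK : Set.range ⇑K ⊆ Sq F n j i := by
    rintro _ ⟨⟨a, z⟩, rfl⟩
    refine ⟨_, ⟨?_, ?_⟩, rfl⟩
    · exact mix_mem_Icc a (mix_mem_Icc' _ (pt_succ_le n j)) (mix_mem_Icc' _ (pt_succ_le n j))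
    · exact mix_mem_Icc a (mix_mem_Icc' _ (pt_succ_le n i)) (mix_mem_Icc' _ (pt_succ_le n i))
  exact glue_homotopy hag K (hsq.imp (fun h => hK.trans h) (fun h => hK.trans h))

open Classical in
/-- glued value on a horizontal grid edge -/
noncomputable def hval (u : NCocycle U Y₁ G) (v : NCocycle V Y₂ G) (F : p.Homotopy q)
    (n j i : ℕ) : G :=
  if h : Set.range ⇑(hp2 F n j i) ⊆ U ∨ Set.range ⇑(hp2 F n j i) ⊆ V then
    glue u v (hp2 F n j i) h else 1

open Classical in
/-- glued value on a vertical grid edge -/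
noncomputable def eval (u : NCocycle U Y₁ G) (v : NCocycle V Y₂ G) (F : p.Homotopy q)
    (n j i : ℕ) : G :=
  if h : Set.range ⇑(vp2 F n j i) ⊆ U ∨ Set.range ⇑(vp2 F n j i) ⊆ V then
    glue u v (vp2 F n j i) h else 1

lemma eval_left (F : p.Homotopy q) {n : ℕ} (j : ℕ) : eval u v F n j 0 = 1 := by
  unfold eval
  split_ifs with h
  · apply glue_const
    intro t
    show F (mix t (pt n j) (pt n (j + 1)), pt n 0) = F (pt n j, pt n 0)
    rw [pt_zero, F.source, F.source]
  · rfl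

lemma eval_right (F : p.Homotopy q) {n : ℕ} (hn : 0 < n) (j : ℕ) : eval u v F n j n = 1 := by
  unfold eval
  split_ifs with h
  · apply glue_const
    intro t
    show F (mix t (pt n j) (pt n (j + 1)), pt n n) = F (pt n j, pt n n)
    rw [pt_self hn, F.target, F.target]
  · rfl

lemma hval_mul_eval (hag : Agree u v) (F : p.Homotopy q) {n j i : ℕ}
    (hgrid : GridAdm U V F n) (hj : j < n) (hi : i < n) :
    hval u v F n j i * eval u v F n j (i + 1) = eval u v F n j i * hval u v F n (j + 1) i := by
  have hsq := hgrid.2 j hj i hi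
  have h1 : Set.range ⇑(hp2 F n j i) ⊆ U ∨ Set.range ⇑(hp2 F n j i) ⊆ V :=
    hsq.imp ((range_hp2 F n j i).trans) ((range_hp2 F n j i).trans)
  have h2 : Set.range ⇑(vp2 F n j (i + 1)) ⊆ U ∨ Set.range ⇑(vp2 F n j (i + 1)) ⊆ V :=
    hsq.imp ((range_vp2' F n j i).trans) ((range_vp2' F n j i).trans)
  have h3 : Set.range ⇑(vp2 F n j i) ⊆ U ∨ Set.range ⇑(vp2 F n j i) ⊆ V :=
    hsq.imp ((range_vp2 F n j i).trans) ((range_vp2 F n j i).trans)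
  have h4 : Set.range ⇑(hp2 F n (j + 1) i) ⊆ U ∨ Set.range ⇑(hp2 F n (j + 1) i) ⊆ V :=
    hsq.imp ((range_hp2' F n j i).trans) ((range_hp2' F n j i).trans)
  have hOr0 : Set.range ⇑((hp2 F n j i).trans (vp2 F n j (i + 1))) ⊆ U ∨
      Set.range ⇑((hp2 F n j i).trans (vp2 F n j (i + 1))) ⊆ V := by
    rw [Path.trans_range]
    exact hsq.imp
      (fun h => Set.union_subset ((range_hp2 F n j i).trans h) ((range_vp2' F n j i).trans h))
      (fun h => Set.union_subset ((range_hp2 F n j i).trans h) ((range_vp2' F n j i).trans h))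
  have hOr1 : Set.range ⇑((vp2 F n j i).trans (hp2 F n (j + 1) i)) ⊆ U ∨
      Set.range ⇑((vp2 F n j i).trans (hp2 F n (j + 1) i)) ⊆ V := by
    rw [Path.trans_range]
    exact hsq.imp
      (fun h => Set.union_subset ((range_vp2 F n j i).trans h) ((range_hp2' F n j i).trans h))
      (fun h => Set.union_subset ((range_vp2 F n j i).trans h) ((range_hp2' F n j i).trans h))
  unfold hval eval
  rw [dif_pos h1, dif_pos h2, dif_pos h3, dif_pos h4,
    ← glue_trans hag (hpq := hOr0) (hp := h1) (hq := h2),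
    ← glue_trans hag (hpq := hOr1) (hp := h3) (hq := h4)]
  exact square_homotopy hag F n j i hsq

lemma row_step (hag : Agree u v) (F : p.Homotopy q) {n j : ℕ}
    (hgrid : GridAdm U V F n) (hj : j < n) :
    ∀ m, m ≤ n → prodRange (hval u v F n j) m * eval u v F n j m
      = eval u v F n j 0 * prodRange (hval u v F n (j + 1)) m := by
  intro m
  induction m with
  | zero => intro _; rw [prodRange_zero, prodRange_zero, one_mul, mul_one]
  | succ m ih =>
    intro hm
    rw [prodRange_succ, prodRange_succ, mul_assoc,
      hval_mul_eval hag F hgrid hj (by omega), ← mul_assoc, ih (by omega), mul_assoc]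

lemma rows_eq (hag : Agree u v) (F : p.Homotopy q) {n j : ℕ}
    (hgrid : GridAdm U V F n) (hj : j < n) :
    prodRange (hval u v F n j) n = prodRange (hval u v F n (j + 1)) n := by
  have h := row_step hag F hgrid hj n le_rfl
  rwa [eval_right F hgrid.1, eval_left F, mul_one, one_mul] at h

lemma all_rows (hag : Agree u v) (F : p.Homotopy q) {n : ℕ}
    (hgrid : GridAdm U V F n) : ∀ j ≤ n,
    prodRange (hval u v F n 0) n = prodRange (hval u v F n j) n := by
  intro j
  induction j with
  | zero => intro _; rfl
  | succ j ih =>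
    intro hj
    rw [ih (by omega), rows_eq hag F hgrid (by omega)]

end homotopy

end VK
namespace VK

open Set

variable {X : Type} [TopologicalSpace X] {G : Type} [Group G] {U V Y₁ Y₂ : Set X}

lemma Icc_subset_ball {n : ℕ} {δ : ℝ} (hδ : 1 / ((n : ℝ) + 1) < δ) {i : ℕ} (hi : i ≤ n) :
    Set.Icc (pt (n + 1) i) (pt (n + 1) (i + 1)) ⊆ Metric.ball (pt (n + 1) i) δ := by
  intro z hz
  rw [Metric.mem_ball, Subtype.dist_eq, Real.dist_eq, abs_of_nonneg
    (by exact_mod_cast sub_nonneg.2 (Subtype.coe_le_coe.2 hz.1))]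
  have h1 : (z : ℝ) ≤ pt (n + 1) (i + 1) := Subtype.coe_le_coe.2 hz.2
  have h2 : ((pt (n + 1) (i + 1)) : ℝ) ≤ ((i + 1 : ℕ) : ℝ) / ((n + 1 : ℕ) : ℝ) :=
    min_le_left _ _
  have h3 : ((pt (n + 1) i) : ℝ) = ((i : ℕ) : ℝ) / ((n + 1 : ℕ) : ℝ) :=
    pt_coe (by omega) (Nat.succ_pos n)
  have h4 : ((i + 1 : ℕ) : ℝ) / ((n + 1 : ℕ) : ℝ) - ((i : ℕ) : ℝ) / ((n + 1 : ℕ) : ℝ)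
      = 1 / ((n + 1 : ℕ) : ℝ) := by push_cast; ring
  have h5 : 1 / ((n + 1 : ℕ) : ℝ) < δ := by push_cast; push_cast at hδ; linarith
  linarith

section homotopy

variable {x y : X} {p q : Path x y} {u : NCocycle U Y₁ G} {v : NCocycle V Y₂ G}

lemma exists_grid (hUo : IsOpen U) (hVo : IsOpen V) (hcover : U ∪ V = Set.univ)
    (F : p.Homotopy q) : ∃ n, GridAdm U V F n := by
  have hc1 : ∀ b : Bool, IsOpen (cond b (⇑F ⁻¹' U) (⇑F ⁻¹' V)) := by
    rintro (_ | _)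
    · exact hVo.preimage (map_continuous F)
    · exact hUo.preimage (map_continuous F)
  have hc2 : (Set.univ : Set (I × I)) ⊆ ⋃ b : Bool, cond b (⇑F ⁻¹' U) (⇑F ⁻¹' V) := by
    intro z _
    have hz : F z ∈ U ∪ V := hcover ▸ Set.mem_univ _
    rcases hz with hz | hz
    · exact Set.mem_iUnion.2 ⟨true, hz⟩
    · exact Set.mem_iUnion.2 ⟨false, hz⟩
  obtain ⟨δ, hδ, hball⟩ := lebesgue_number_lemma_of_metric isCompact_univ hc1 hc2
  obtain ⟨n, hn⟩ := exists_nat_one_div_lt hδ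
  refine ⟨n + 1, Nat.succ_pos n, ?_⟩
  intro j hj i hi
  obtain ⟨b, hb⟩ := hball (pt (n + 1) j, pt (n + 1) i) trivial
  have hsub : Set.Icc (pt (n + 1) j) (pt (n + 1) (j + 1)) ×ˢ
      Set.Icc (pt (n + 1) i) (pt (n + 1) (i + 1)) ⊆
      Metric.ball (pt (n + 1) j, pt (n + 1) i) δ := by
    rintro ⟨a, c⟩ ⟨ha, hc⟩
    rw [Metric.mem_ball, Prod.dist_eq]
    exact max_lt (Metric.mem_ball.1 (Icc_subset_ball hn (by omega) ha))
      (Metric.mem_ball.1 (Icc_subset_ball hn (by omega) hc))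
  rcases b with _ | _
  · right
    rintro _ ⟨z, hz, rfl⟩
    exact hb (hsub hz)
  · left
    rintro _ ⟨z, hz, rfl⟩
    exact hb (hsub hz)

open Classical in
lemma Wd_homotopy {hUo : IsOpen U} {hVo : IsOpen V} {hcover : U ∪ V = Set.univ}
    (hag : Agree u v) (F : p.Homotopy q) :
    Wd hUo hVo hcover u v p = Wd hUo hVo hcover u v q := by
  obtain ⟨n, hgrid⟩ := exists_grid hUo hVo hcover F
  have hn := hgrid.1
  have hbot : ∀ (i : ℕ) (z : I), hp2 F n 0 i z = seg p (pt n i) (pt n (i + 1)) z := by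
    intro i z
    rw [hp2_apply, seg_apply, pt_zero]
    exact F.apply_zero _
  have htop : ∀ (i : ℕ) (z : I), hp2 F n n i z = seg q (pt n i) (pt n (i + 1)) z := by
    intro i z
    rw [hp2_apply, seg_apply, pt_self hn]
    exact F.apply_one _
  have hrbot : ∀ i : ℕ, Set.range ⇑(hp2 F n 0 i) = Set.range ⇑(seg p (pt n i) (pt n (i + 1))) :=
    fun i => by rw [show ⇑(hp2 F n 0 i) = ⇑(seg p (pt n i) (pt n (i + 1))) from funext (hbot i)]
  have hrtop : ∀ i : ℕ, Set.range ⇑(hp2 F n n i) = Set.range ⇑(seg q (pt n i) (pt n (i + 1))) :=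
    fun i => by rw [show ⇑(hp2 F n n i) = ⇑(seg q (pt n i) (pt n (i + 1))) from funext (htop i)]
  have hadp : Adm U V p n := by
    refine ⟨hn, fun i hi => ?_⟩
    have h := (hgrid.2 0 hn i hi).imp ((range_hp2 F n 0 i).trans) ((range_hp2 F n 0 i).trans)
    rwa [hrbot i, range_seg _ (pt_succ_le n i)] at h
  have hadq : Adm U V q n := by
    refine ⟨hn, fun i hi => ?_⟩
    have hj : n - 1 < n := by omega
    have hsucc : n - 1 + 1 = n := by omega
    have hr := range_hp2' F n (n - 1) i
    rw [hsucc] at hr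
    have h := (hgrid.2 (n - 1) hj i hi).imp (hr.trans) (hr.trans)
    rwa [hrtop i, range_seg _ (pt_succ_le n i)] at h
  rw [Wd_eq hag hadp, Wd_eq hag hadq]
  have h1 : gval u v p n = prodRange (hval u v F n 0) n := by
    unfold gval hval
    apply prodRange_congr
    intro i hi
    have hx : p (pt n i) = F (pt n 0, pt n i) := by
      have h0 := hbot i 0
      simp only [hp2_apply, seg_apply, mix_zero] at h0
      exact h0.symm
    have hy : p (pt n (i + 1)) = F (pt n 0, pt n (i + 1)) := by
      have h0 := hbot i 1
      simp only [hp2_apply, seg_apply, mix_one] at h0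
      exact h0.symm
    by_cases h : Set.range ⇑(seg p (pt n i) (pt n (i + 1))) ⊆ U ∨
        Set.range ⇑(seg p (pt n i) (pt n (i + 1))) ⊆ V
    · rw [dif_pos h, dif_pos (by rw [hrbot i]; exact h)]
      exact glue_congr hx hy (fun t => (hbot i t).symm)
    · rw [dif_neg h, dif_neg (by rw [hrbot i]; exact h)]
  have h2 : gval u v q n = prodRange (hval u v F n n) n := by
    unfold gval hval
    apply prodRange_congr
    intro i hi
    have hx : q (pt n i) = F (pt n n, pt n i) := by
      have h0 := htop i 0
      simp only [hp2_apply, seg_apply, mix_zero] at h0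
      exact h0.symm
    have hy : q (pt n (i + 1)) = F (pt n n, pt n (i + 1)) := by
      have h0 := htop i 1
      simp only [hp2_apply, seg_apply, mix_one] at h0
      exact h0.symm
    by_cases h : Set.range ⇑(seg q (pt n i) (pt n (i + 1))) ⊆ U ∨
        Set.range ⇑(seg q (pt n i) (pt n (i + 1))) ⊆ V
    · rw [dif_pos h, dif_pos (by rw [hrtop i]; exact h)]
      exact glue_congr hx hy (fun t => (htop i t).symm)
    · rw [dif_neg h, dif_neg (by rw [hrtop i]; exact h)]
  rw [h1, h2, all_rows hag F hgrid n le_rfl]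

end homotopy

end VK
namespace NCocycle

open VK Set

variable {X : Type} [TopologicalSpace X] {G : Type} [Group G] {A Y : Set X}

lemma cohom_equivalence : Equivalence (Cohom (A := A) (Y := Y) (G := G)) := by
  refine ⟨fun u => ⟨fun _ => 1, fun _ _ => rfl, fun p hp => by simp⟩, ?_, ?_⟩
  · rintro u v ⟨c, hc, hrel⟩
    refine ⟨fun z => (c z)⁻¹, fun z hz => by simp only []; rw [hc z hz]; simp, ?_⟩
    intro x y p hp
    rw [hrel p hp]
    group
  · rintro u v w ⟨c, hc, hrel⟩ ⟨d, hd, hrel'⟩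
    refine ⟨fun z => d z * c z, fun z hz => by simp only []; rw [hc z hz, hd z hz, one_mul], ?_⟩
    intro x y p hp
    rw [hrel' p hp, hrel p hp]
    group

lemma cohom_of_eq {u v : NCocycle A Y G}
    (h : (Quot.mk _ u : H1 A Y G) = Quot.mk _ v) : Cohom u v :=
  (cohom_equivalence.eqvGen_iff).1 (Quot.eq.1 h)

end NCocycle

open VK Set


open NCocycle in
/-- For X = U ∪ V with U, V path-connected open sets, U ∩ V
path-connected and b ∈ U ∩ V, the square of restriction maps on non-abelian H¹
is commutative and cartesian. -/
theorem statement5 (X : Type) [TopologicalSpace X] (G : Type) [Group G]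
    (U V : Set X) (hUo : IsOpen U) (hVo : IsOpen V)
    (hUc : IsPathConnected U) (hVc : IsPathConnected V)
    (hcover : U ∪ V = Set.univ) (hUVc : IsPathConnected (U ∩ V))
    (b : X) (hb : b ∈ U ∩ V) :
    (∀ h : H1 (Set.univ : Set X) {b} G,
        H1res Set.inter_subset_left subset_rfl
            (H1res (Set.subset_univ U) subset_rfl h)
          = H1res Set.inter_subset_right subset_rfl
            (H1res (Set.subset_univ V) subset_rfl h)) ∧
    (∀ h h' : H1 (Set.univ : Set X) {b} G,
        H1res (Set.subset_univ U) subset_rfl h = H1res (Set.subset_univ U) subset_rfl h' →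
        H1res (Set.subset_univ V) subset_rfl h = H1res (Set.subset_univ V) subset_rfl h' →
        h = h') ∧
    (∀ (α : H1 U {b} G) (β : H1 V {b} G),
        H1res Set.inter_subset_left subset_rfl α
          = H1res Set.inter_subset_right subset_rfl β →
        ∃ h : H1 (Set.univ : Set X) {b} G,
          H1res (Set.subset_univ U) subset_rfl h = α ∧
          H1res (Set.subset_univ V) subset_rfl h = β) := by
  have hbU : b ∈ U := hb.1
  have hbV : b ∈ V := hb.2
  refine ⟨?_, ?_, ?_⟩
  · -- commutativity
    intro h
    induction h using Quot.ind with
    | _ w => rfl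
  · -- injectivity
    intro h h' hU hV
    revert hU hV
    induction h using Quot.ind with
    | _ w =>
    induction h' using Quot.ind with
    | _ w' =>
    intro hU hV
    obtain ⟨cU, hcU1, hcUrel⟩ := cohom_of_eq hU
    obtain ⟨cV, hcV1, hcVrel⟩ := cohom_of_eq hV
    have hcUb : cU b = 1 := hcU1 b rfl
    have hcVb : cV b = 1 := hcV1 b rfl
    have hUV : ∀ z ∈ U ∩ V, cU z = cV z := by
      intro z hz
      obtain ⟨γ, hγ⟩ := hUVc.joinedIn b hb z hz
      have hrange : Set.range ⇑γ ⊆ U ∩ V := by rintro _ ⟨t, rfl⟩; exact hγ t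
      have h1 : w'.toFun γ (Set.subset_univ _)
          = cU b * w.toFun γ (Set.subset_univ _) * (cU z)⁻¹ :=
        hcUrel γ (hrange.trans Set.inter_subset_left)
      have h2 : w'.toFun γ (Set.subset_univ _)
          = cV b * w.toFun γ (Set.subset_univ _) * (cV z)⁻¹ :=
        hcVrel γ (hrange.trans Set.inter_subset_right)
      rw [hcUb, one_mul] at h1
      rw [hcVb, one_mul] at h2
      exact inv_injective (mul_left_cancel (h1.symm.trans h2))
    classical
    set c : X → G := fun z => if z ∈ U then cU z else cV z with hcdef
    have hcUe : ∀ z ∈ U, c z = cU z := by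
      intro z hz
      simp only [hcdef]
      rw [if_pos hz]
    have hcVe : ∀ z ∈ V, c z = cV z := by
      intro z hz
      simp only [hcdef]
      by_cases hzU : z ∈ U
      · rw [if_pos hzU]
        exact hUV z ⟨hzU, hz⟩
      · rw [if_neg hzU]
    apply Quot.sound
    refine ⟨c, fun z hz => ?_, ?_⟩
    · rw [Set.eq_of_mem_singleton hz, hcUe b hbU, hcUb]
    · intro x0 y0 p hp
      obtain ⟨n, hadm⟩ := exists_adm hUo hVo hcover p
      -- per-piece relation
      have hpiece : ∀ i < n, w'.toFun (seg p (pt n i) (pt n (i + 1))) (Set.subset_univ _)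
          = c (p (pt n i)) * w.toFun (seg p (pt n i) (pt n (i + 1))) (Set.subset_univ _)
            * (c (p (pt n (i + 1))))⁻¹ := by
        intro i hi
        have hxm : p (pt n i) ∈ ⇑p '' Set.Icc (pt n i) (pt n (i + 1)) :=
          ⟨pt n i, left_mem_Icc.2 (pt_succ_le n i), rfl⟩
        have hym : p (pt n (i + 1)) ∈ ⇑p '' Set.Icc (pt n i) (pt n (i + 1)) :=
          ⟨pt n (i + 1), right_mem_Icc.2 (pt_succ_le n i), rfl⟩
        rcases hadm.2 i hi with hiU | hiV
        · have hU0 : Set.range ⇑(seg p (pt n i) (pt n (i + 1))) ⊆ U := by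
            rw [range_seg _ (pt_succ_le n i)]; exact hiU
          have hrel : w'.toFun (seg p (pt n i) (pt n (i + 1))) (Set.subset_univ _)
              = cU (p (pt n i)) * w.toFun (seg p (pt n i) (pt n (i + 1))) (Set.subset_univ _)
                * (cU (p (pt n (i + 1))))⁻¹ := hcUrel _ hU0
          rw [hrel, hcUe _ (hiU hxm), hcUe _ (hiU hym)]
        · have hV0 : Set.range ⇑(seg p (pt n i) (pt n (i + 1))) ⊆ V := by
            rw [range_seg _ (pt_succ_le n i)]; exact hiV
          have hrel : w'.toFun (seg p (pt n i) (pt n (i + 1))) (Set.subset_univ _)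
              = cV (p (pt n i)) * w.toFun (seg p (pt n i) (pt n (i + 1))) (Set.subset_univ _)
                * (cV (p (pt n (i + 1))))⁻¹ := hcVrel _ hV0
          rw [hrel, hcVe _ (hiV hxm), hcVe _ (hiV hym)]
      -- chain decomposition for a cocycle on univ
      have hchain : ∀ (ww : NCocycle (Set.univ : Set X) {b} G),
          ww.toFun p hp = prodRange
            (fun i => ww.toFun (seg p (pt n i) (pt n (i + 1))) (Set.subset_univ _)) n := by
        intro ww
        have h0 := ww.chain p (pt n) (pt_succ_le n) n (Set.subset_univ _) (Set.subset_univ _)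
        have he : ww.toFun p hp = ww.toFun (seg p (pt n 0) (pt n n)) (Set.subset_univ _) := by
          refine ww.congr p (seg p (pt n 0) (pt n n)) ?_ ?_ ?_ _ _
          · rw [pt_zero, p.source]
          · rw [pt_self hadm.1, p.target]
          · intro t
            rw [seg_apply, pt_zero, pt_self hadm.1]
            exact (seg_zero_one p t).symm
        rw [he, h0]
        apply prodRange_congr
        intro i _
        rw [dif_pos (Set.subset_univ _)]
      -- telescoping
      have htel : ∀ m ≤ n, prodRange
            (fun i => w'.toFun (seg p (pt n i) (pt n (i + 1))) (Set.subset_univ _)) m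
          = c x0 * prodRange
            (fun i => w.toFun (seg p (pt n i) (pt n (i + 1))) (Set.subset_univ _)) m
            * (c (p (pt n m)))⁻¹ := by
        intro m
        induction m with
        | zero =>
          intro _
          have : p (pt n 0) = x0 := by rw [pt_zero, p.source]
          rw [prodRange_zero, prodRange_zero, this]
          group
        | succ m ih =>
          intro hm
          rw [prodRange_succ, prodRange_succ, ih (by omega), hpiece m (by omega)]
          group
      have hx0 : p (pt n n) = y0 := by rw [pt_self hadm.1, p.target]
      have := htel n le_rfl
      rw [hx0] at this
      rw [hchain w', hchain w, this]
  · -- surjectivity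
    intro α β hαβ
    revert hαβ
    induction α using Quot.ind with
    | _ uc =>
    induction β using Quot.ind with
    | _ vc =>
    intro hαβ
    obtain ⟨cc, hcc1, hccrel⟩ := cohom_of_eq hαβ
    have hccb : cc b = 1 := hcc1 b rfl
    -- the adjusted cocycle on V
    let vc' : NCocycle V {b} G :=
      { toFun := fun {x0 y0} p hp => (cc x0)⁻¹ * vc.toFun p hp * cc y0
        triv := fun {x0 y0} p hp hY => by
          have hx : x0 = b := by rw [← p.source]; exact hY ⟨0, rfl⟩
          have hy : y0 = b := by rw [← p.target]; exact hY ⟨1, rfl⟩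
          show (cc x0)⁻¹ * vc.toFun p hp * cc y0 = 1
          rw [vc.triv p hp hY, hx, hy, hccb]
          group
        homotopy_inv := fun p q F hF hp hq => by
          show (cc _)⁻¹ * vc.toFun p hp * cc _ = (cc _)⁻¹ * vc.toFun q hq * cc _
          rw [vc.homotopy_inv p q F hF hp hq]
        mul := fun p q hpq hp hq => by
          show (cc _)⁻¹ * vc.toFun (p.trans q) hpq * cc _
            = ((cc _)⁻¹ * vc.toFun p hp * cc _) * ((cc _)⁻¹ * vc.toFun q hq * cc _)
          rw [vc.mul p q hpq hp hq]
          group }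
    have hquot : (Quot.mk _ vc : H1 V {b} G) = Quot.mk _ vc' := by
      apply Quot.sound
      refine ⟨fun z => (cc z)⁻¹, fun z hz => ?_, ?_⟩
      · show (cc z)⁻¹ = 1
        rw [Set.eq_of_mem_singleton hz, hccb, inv_one]
      · intro x0 y0 p hp
        show (cc x0)⁻¹ * vc.toFun p hp * cc y0 = (cc x0)⁻¹ * vc.toFun p hp * ((cc y0)⁻¹)⁻¹
        rw [inv_inv]
    have hag : Agree uc vc' := by
      intro x0 y0 p hpU hpV
      have hpUV : Set.range ⇑p ⊆ U ∩ V := Set.subset_inter hpU hpV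
      have hthis : vc.toFun p hpV = cc x0 * uc.toFun p hpU * (cc y0)⁻¹ := hccrel p hpUV
      show uc.toFun p hpU = (cc x0)⁻¹ * vc.toFun p hpV * cc y0
      rw [hthis]
      group
    let w : NCocycle (Set.univ : Set X) {b} G :=
      { toFun := fun p _ => Wd hUo hVo hcover uc vc' p
        triv := fun p hp hY => by
          have hpU : Set.range ⇑p ⊆ U := hY.trans (Set.singleton_subset_iff.2 hbU)
          show Wd hUo hVo hcover uc vc' p = 1
          rw [Wd_U hag hpU]
          exact uc.triv p hpU hY
        homotopy_inv := fun p q F hF hp hq => Wd_homotopy hag F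
        mul := fun p q hpq hp hq => Wd_mul p q hag }
    refine ⟨Quot.mk _ w, ?_, ?_⟩
    · show Quot.mk _ (res (Set.subset_univ U) subset_rfl w) = Quot.mk _ uc
      apply Quot.sound
      refine ⟨fun _ => 1, fun _ _ => rfl, ?_⟩
      intro x0 y0 p hp
      have : (res (Set.subset_univ U) subset_rfl w).toFun p hp = uc.toFun p hp :=
        Wd_U (hUo := hUo) (hVo := hVo) (hcover := hcover) hag hp
      rw [this]
      group
    · show Quot.mk _ (res (Set.subset_univ V) subset_rfl w) = Quot.mk _ vc
      have h1 : (Quot.mk _ (res (Set.subset_univ V) subset_rfl w) : H1 V {b} G)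
          = Quot.mk _ vc' := by
        apply Quot.sound
        refine ⟨fun _ => 1, fun _ _ => rfl, ?_⟩
        intro x0 y0 p hp
        have : (res (Set.subset_univ V) subset_rfl w).toFun p hp = vc'.toFun p hp :=
          Wd_V (hUo := hUo) (hVo := hVo) (hcover := hcover) hag hp
        rw [this]
        group
      rw [h1, ← hquot]
end
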